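/- arXiv:1805.10854 — 11 statements merged into one kernel-verified Lean document; each statement's English description precedes it below -/
import Mathlib

section
/- Let α, θ, β, τ, γ, η > 0 and r > 0. The integral ∫₀^∞ (β((1 + x^η/τ)^γ − 1))^r · g_{α,θ}(x) dx is finite if and only if r·η·γ < α; i.e., the PowerBurr₆ variable Z = β((1 + X^η/τ)^γ − 1), with X Burr(α,θ)-distributed, satisfies E(Z^r) < ∞ exactly when rηγ < α. -/
open MeasureTheory Real

/-- The Burr(α,θ) density. -/
noncomputable def burrDensity (α θ : ℝ) (x : ℝ) : ℝ :=
  if 0 < x then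
    (Real.Gamma (α + θ) / (Real.Gamma α * Real.Gamma θ)) * (α / θ) ^ α * x ^ (θ - 1)
      / (α / θ + x) ^ (θ + α)
  else 0

private lemma burr_meas (α θ β τ γ η r : ℝ) :
    Measurable (fun x : ℝ => (β * ((1 + x ^ η / τ) ^ γ - 1)) ^ r * burrDensity α θ x) := by
  unfold burrDensity
  apply Measurable.mul
  · fun_prop
  · apply Measurable.ite (measurableSet_Ioi (a := (0:ℝ))) <;> fun_prop

/-- The PowerBurr₆ variable `Z = β((1 + X^η/τ)^γ − 1)`, with `X` Burr(α,θ)-distributed,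
has a finite `r`-th moment exactly when `r·η·γ < α`. -/
theorem powerBurr_moment_finite_iff (α θ β τ γ η r : ℝ)
    (hα : 0 < α) (hθ : 0 < θ) (hβ : 0 < β) (hτ : 0 < τ) (hγ : 0 < γ) (hη : 0 < η)
    (hr : 0 < r) :
    IntegrableOn
        (fun x : ℝ => (β * ((1 + x ^ η / τ) ^ γ - 1)) ^ r * burrDensity α θ x)
        (Set.Ioi 0) volume
      ↔ r * η * γ < α := by
  set c : ℝ := α / θ with hc_def
  have hc : 0 < c := div_pos hα hθ
  set K : ℝ := Real.Gamma (α + θ) / (Real.Gamma α * Real.Gamma θ) * c ^ α with hK_def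
  have hK : 0 < K := by
    apply mul_pos
    · exact div_pos (Real.Gamma_pos_of_pos (by linarith))
        (mul_pos (Real.Gamma_pos_of_pos hα) (Real.Gamma_pos_of_pos hθ))
    · exact Real.rpow_pos_of_pos hc _
  have hdens : ∀ x : ℝ, 0 < x →
      burrDensity α θ x = K * x ^ (θ - 1) / (c + x) ^ (θ + α) := by
    intro x hx
    simp only [burrDensity, if_pos hx, hK_def, hc_def]
  set f : ℝ → ℝ :=
      fun x : ℝ => (β * ((1 + x ^ η / τ) ^ γ - 1)) ^ r * burrDensity α θ x with hf_def
  have hmeas : Measurable f := burr_meas α θ β τ γ η r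
  have hbase : ∀ x : ℝ, 0 < x → 0 ≤ β * ((1 + x ^ η / τ) ^ γ - 1) := by
    intro x hx
    have hxη : 0 < x ^ η := Real.rpow_pos_of_pos hx η
    have h1 : (1:ℝ) ≤ (1 + x ^ η / τ) ^ γ := by
      apply Real.one_le_rpow _ hγ.le
      have : 0 < x ^ η / τ := div_pos hxη hτ
      linarith
    nlinarith
  have hfnonneg : ∀ x : ℝ, 0 < x → 0 ≤ f x := by
    intro x hx
    apply mul_nonneg (Real.rpow_nonneg (hbase x hx) r)
    rw [hdens x hx]
    positivity
  constructor
  · -- integrable → r*η*γ < α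
    intro h
    by_contra hlt
    push_neg at hlt
    set M : ℝ := max 1 ((τ * 2 ^ (1/γ)) ^ (1/η)) with hM_def
    have hM1 : (1:ℝ) ≤ M := le_max_left _ _
    have hM0 : (0:ℝ) < M := lt_of_lt_of_le one_pos hM1
    set C2 : ℝ := (β / (2 * τ ^ γ)) ^ r * (K / (c + 1) ^ (θ + α)) with hC2_def
    have hC2 : 0 < C2 := by
      apply mul_pos
      · exact Real.rpow_pos_of_pos (by positivity) r
      · exact div_pos hK (Real.rpow_pos_of_pos (by linarith) _)
    have key : ∀ x ∈ Set.Ioi M, C2 * x ^ (r * η * γ - α - 1) ≤ f x := by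
      intro x hx
      rw [Set.mem_Ioi] at hx
      have hx1 : (1:ℝ) ≤ x := hM1.trans hx.le
      have hx0 : (0:ℝ) < x := lt_of_lt_of_le one_pos hx1
      have hxη : 0 < x ^ η := Real.rpow_pos_of_pos hx0 η
      have hxητ : τ * 2 ^ (1/γ) ≤ x ^ η := by
        have h1 : (τ * 2 ^ (1/γ)) ^ (1/η) ≤ x := (le_max_right _ _).trans hx.le
        have h2 : ((τ * 2 ^ (1/γ)) ^ (1/η)) ^ η ≤ x ^ η :=
          Real.rpow_le_rpow (Real.rpow_nonneg (by positivity) _) h1 hη.le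
        rwa [one_div η, Real.rpow_inv_rpow (by positivity) hη.ne'] at h2
      have hu2 : (2:ℝ) ≤ (x ^ η / τ) ^ γ := by
        have h1 : (2:ℝ) ^ (1/γ) ≤ x ^ η / τ := by
          rw [le_div_iff₀ hτ]
          nlinarith
        calc (2:ℝ) = ((2:ℝ) ^ (1/γ)) ^ γ := by
              rw [one_div γ, Real.rpow_inv_rpow (by norm_num) hγ.ne']
          _ ≤ (x ^ η / τ) ^ γ := Real.rpow_le_rpow (by positivity) h1 hγ.le
      have h3 : (x ^ η / τ) ^ γ ≤ (1 + x ^ η / τ) ^ γ :=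
        Real.rpow_le_rpow (by positivity) (by linarith [div_pos hxη hτ]) hγ.le
      have h4 : (x ^ η / τ) ^ γ = x ^ (η * γ) / τ ^ γ := by
        rw [Real.div_rpow hxη.le hτ.le, Real.rpow_mul hx0.le]
      have hlow : x ^ (η * γ) / (2 * τ ^ γ) ≤ (1 + x ^ η / τ) ^ γ - 1 := by
        have h5 : x ^ (η * γ) / (2 * τ ^ γ) = (x ^ η / τ) ^ γ / 2 := by
          rw [h4]; ring
        rw [h5]
        linarith
      have hZ : (β * (x ^ (η * γ) / (2 * τ ^ γ))) ^ r
          ≤ (β * ((1 + x ^ η / τ) ^ γ - 1)) ^ r := by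
        apply Real.rpow_le_rpow (by positivity) _ hr.le
        exact mul_le_mul_of_nonneg_left hlow hβ.le
      have hZeq : (β * (x ^ (η * γ) / (2 * τ ^ γ))) ^ r
          = (β / (2 * τ ^ γ)) ^ r * x ^ (η * γ * r) := by
        rw [show β * (x ^ (η * γ) / (2 * τ ^ γ)) = (β / (2 * τ ^ γ)) * x ^ (η * γ) by ring,
          Real.mul_rpow (by positivity) (by positivity), ← Real.rpow_mul hx0.le]
      have hden : K / (c + 1) ^ (θ + α) * x ^ (-α - 1) ≤ burrDensity α θ x := by
        rw [hdens x hx0]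
        have h6 : (c + x) ^ (θ + α) ≤ ((c + 1) * x) ^ (θ + α) :=
          Real.rpow_le_rpow (by positivity) (by nlinarith) (by positivity)
        have h7 : K * x ^ (θ - 1) / ((c + 1) * x) ^ (θ + α)
            ≤ K * x ^ (θ - 1) / (c + x) ^ (θ + α) :=
          div_le_div_of_nonneg_left (by positivity)
            (Real.rpow_pos_of_pos (by linarith) _) h6
        refine le_trans (le_of_eq ?_) h7
        have hne1 : ((c:ℝ) + 1) ^ (θ + α) ≠ 0 := (Real.rpow_pos_of_pos (by linarith) _).ne'
        have hne2 : x ^ (θ + α) ≠ 0 := (Real.rpow_pos_of_pos hx0 _).ne'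
        have hx_e : x ^ (θ - 1) / x ^ (θ + α) = x ^ (-α - 1) := by
          rw [← Real.rpow_sub hx0, show ((θ:ℝ) - 1) - (θ + α) = -α - 1 by ring]
        rw [Real.mul_rpow (by positivity) hx0.le, ← hx_e]
        field_simp
      have hcomb : C2 * x ^ (r * η * γ - α - 1)
          = ((β / (2 * τ ^ γ)) ^ r * x ^ (η * γ * r))
            * (K / (c + 1) ^ (θ + α) * x ^ (-α - 1)) := by
        rw [show (r * η * γ - α - 1 : ℝ) = (η * γ * r) + (-α - 1) by ring,
          Real.rpow_add hx0, hC2_def]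
        ring
      rw [hcomb]
      calc ((β / (2 * τ ^ γ)) ^ r * x ^ (η * γ * r))
            * (K / (c + 1) ^ (θ + α) * x ^ (-α - 1))
          ≤ (β * ((1 + x ^ η / τ) ^ γ - 1)) ^ r
            * (K / (c + 1) ^ (θ + α) * x ^ (-α - 1)) := by
            apply mul_le_mul_of_nonneg_right _ (by positivity)
            rw [← hZeq]; exact hZ
        _ ≤ f x :=
            mul_le_mul_of_nonneg_left hden (Real.rpow_nonneg (hbase x hx0) r)
    have hInt2 : IntegrableOn (fun x : ℝ => C2 * x ^ (r * η * γ - α - 1)) (Set.Ioi M) := by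
      apply (h.mono_set (Set.Ioi_subset_Ioi hM0.le)).mono'
      · exact Measurable.aestronglyMeasurable (by fun_prop)
      · filter_upwards [ae_restrict_mem measurableSet_Ioi] with x hx
        rw [Real.norm_eq_abs, abs_of_nonneg]
        · exact key x hx
        · have hx0 : (0:ℝ) < x := hM0.trans hx
          positivity
    have hInt3 : IntegrableOn (fun x : ℝ => x ^ (r * η * γ - α - 1)) (Set.Ioi M) := by
      have := hInt2.const_mul C2⁻¹
      simpa [IntegrableOn, ← mul_assoc, inv_mul_cancel₀ hC2.ne'] using this
    rw [integrableOn_Ioi_rpow_iff hM0] at hInt3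
    linarith
  · -- r*η*γ < α → integrable
    intro hlt
    have hIoc : IntegrableOn f (Set.Ioc 0 1) := by
      set B : ℝ := (β * ((1 + 1/τ) ^ γ - 1)) ^ r * (K / c ^ (θ + α)) with hB_def
      apply Integrable.mono' (g := fun x : ℝ => B * x ^ (θ - 1))
      · apply Integrable.const_mul
        exact (intervalIntegrable_iff_integrableOn_Ioc_of_le zero_le_one).mp
          (intervalIntegral.intervalIntegrable_rpow' (by linarith))
      · exact hmeas.aestronglyMeasurable
      · filter_upwards [ae_restrict_mem measurableSet_Ioc] with x hx
        obtain ⟨hx0, hx1⟩ := hx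
        rw [Real.norm_eq_abs, abs_of_nonneg (hfnonneg x hx0)]
        have hd0 : 0 ≤ burrDensity α θ x := by
          rw [hdens x hx0]; positivity
        have hxη1 : x ^ η ≤ 1 := Real.rpow_le_one hx0.le hx1 hη.le
        have h1 : (1 + x ^ η / τ) ^ γ ≤ (1 + 1/τ) ^ γ := by
          apply Real.rpow_le_rpow (by positivity) _ hγ.le
          have : x ^ η / τ ≤ 1 / τ := by gcongr
          linarith
        have h2 : (β * ((1 + x ^ η / τ) ^ γ - 1)) ^ r
            ≤ (β * ((1 + 1/τ) ^ γ - 1)) ^ r := by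
          apply Real.rpow_le_rpow (hbase x hx0) _ hr.le
          nlinarith
        have h3 : burrDensity α θ x ≤ K / c ^ (θ + α) * x ^ (θ - 1) := by
          rw [hdens x hx0]
          have h4 : c ^ (θ + α) ≤ (c + x) ^ (θ + α) :=
            Real.rpow_le_rpow hc.le (by linarith) (by positivity)
          calc K * x ^ (θ - 1) / (c + x) ^ (θ + α) ≤ K * x ^ (θ - 1) / c ^ (θ + α) :=
                div_le_div_of_nonneg_left (by positivity) (Real.rpow_pos_of_pos hc _) h4
            _ = K / c ^ (θ + α) * x ^ (θ - 1) := by ring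
        have hB0 : 0 ≤ β * ((1 + 1/τ) ^ γ - 1) := by
          have hone : (1:ℝ) ≤ (1 + 1/τ) ^ γ := by
            apply Real.one_le_rpow _ hγ.le
            have : 0 < 1/τ := by positivity
            linarith
          nlinarith
        calc f x ≤ (β * ((1 + 1/τ) ^ γ - 1)) ^ r * (K / c ^ (θ + α) * x ^ (θ - 1)) :=
              mul_le_mul h2 h3 hd0 (Real.rpow_nonneg hB0 r)
          _ = B * x ^ (θ - 1) := by rw [hB_def]; ring
    have hIoi1 : IntegrableOn f (Set.Ioi 1) := by
      set B2 : ℝ := (β * (1 + 1/τ) ^ γ) ^ r * K with hB2_def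
      apply Integrable.mono' (g := fun x : ℝ => B2 * x ^ (r * η * γ - α - 1))
      · exact (integrableOn_Ioi_rpow_of_lt (by linarith) one_pos).const_mul B2
      · exact hmeas.aestronglyMeasurable
      · filter_upwards [ae_restrict_mem measurableSet_Ioi] with x hx
        rw [Set.mem_Ioi] at hx
        have hx0 : (0:ℝ) < x := one_pos.trans hx
        rw [Real.norm_eq_abs, abs_of_nonneg (hfnonneg x hx0)]
        have hd0 : 0 ≤ burrDensity α θ x := by
          rw [hdens x hx0]; positivity
        have hxη1 : (1:ℝ) ≤ x ^ η := Real.one_le_rpow hx.le hη.le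
        have h1 : 1 + x ^ η / τ ≤ (1 + 1/τ) * x ^ η := by
          rw [show ((1:ℝ) + 1/τ) * x ^ η = x ^ η + x ^ η / τ by ring]
          linarith
        have h2 : (1 + x ^ η / τ) ^ γ - 1 ≤ (1 + 1/τ) ^ γ * x ^ (η * γ) := by
          have h2a := Real.rpow_le_rpow (by positivity) h1 hγ.le
          rw [Real.mul_rpow (by positivity) (Real.rpow_nonneg hx0.le _),
            ← Real.rpow_mul hx0.le] at h2a
          linarith
        have h3 : (β * ((1 + x ^ η / τ) ^ γ - 1)) ^ r
            ≤ (β * (1 + 1/τ) ^ γ) ^ r * x ^ (η * γ * r) := by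
          calc (β * ((1 + x ^ η / τ) ^ γ - 1)) ^ r
              ≤ (β * ((1 + 1/τ) ^ γ * x ^ (η * γ))) ^ r :=
                Real.rpow_le_rpow (hbase x hx0) (mul_le_mul_of_nonneg_left h2 hβ.le) hr.le
            _ = (β * (1 + 1/τ) ^ γ) ^ r * x ^ (η * γ * r) := by
                rw [show β * ((1 + 1/τ) ^ γ * x ^ (η * γ))
                    = (β * (1 + 1/τ) ^ γ) * x ^ (η * γ) by ring,
                  Real.mul_rpow (by positivity) (Real.rpow_nonneg hx0.le _),
                  ← Real.rpow_mul hx0.le]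
        have h4 : burrDensity α θ x ≤ K * x ^ (-α - 1) := by
          rw [hdens x hx0]
          calc K * x ^ (θ - 1) / (c + x) ^ (θ + α) ≤ K * x ^ (θ - 1) / x ^ (θ + α) :=
                div_le_div_of_nonneg_left (by positivity) (Real.rpow_pos_of_pos hx0 _)
                  (Real.rpow_le_rpow hx0.le (by linarith) (by positivity))
            _ = K * x ^ (-α - 1) := by
                rw [mul_div_assoc, ← Real.rpow_sub hx0,
                  show ((θ:ℝ) - 1) - (θ + α) = -α - 1 by ring]
        calc f x ≤ ((β * (1 + 1/τ) ^ γ) ^ r * x ^ (η * γ * r)) * (K * x ^ (-α - 1)) :=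
              mul_le_mul h3 h4 hd0 (by positivity)
          _ = B2 * x ^ (r * η * γ - α - 1) := by
              rw [show (r * η * γ - α - 1 : ℝ) = (η * γ * r) + (-α - 1) by ring,
                Real.rpow_add hx0, hB2_def]
              ring
    have := hIoc.union hIoi1
    rwa [Set.Ioc_union_Ioi_eq_Ioi zero_le_one] at this
end

section
/- (Proposition 1(i).) Let α, θ, β, τ, γ, η > 0 with γ ≥ 1. Then the PowerBurr₆(α,θ,β,τ,γ,η) density f(z) = g_{α,θ}(x(z)) · x'(z), where x(z) = (τ((1 + z/β)^{1/γ} − 1))^{1/η}, is unimodal on (0,∞): there exists m ∈ [0,∞] such that f is monotone nondecreasing on (0, m) and monotone nonincreasing on (m, ∞). -/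
open MeasureTheory Real
open scoped ENNReal

/-- A function `f : ℝ → ℝ` is unimodal on `(0,∞)` if there is `m ∈ [0,∞]` such that `f`
is monotone nondecreasing on `(0, m)` and monotone nonincreasing on `(m, ∞)`. -/
def UnimodalOnPos (f : ℝ → ℝ) : Prop :=
  ∃ m : ℝ≥0∞,
    MonotoneOn f {z : ℝ | 0 < z ∧ ENNReal.ofReal z < m} ∧
    AntitoneOn f {z : ℝ | 0 < z ∧ m < ENNReal.ofReal z}

/-- The inverse PowerBurr₆ transform `x(z) = (τ((1 + z/β)^{1/γ} − 1))^{1/η}`. -/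
noncomputable def powerBurrInv6 (β τ γ η : ℝ) (z : ℝ) : ℝ :=
  (τ * ((1 + z / β) ^ (1 / γ) - 1)) ^ (1 / η)

open Set
set_option linter.unusedSectionVars false

noncomputable def Wfn (β τ γ : ℝ) (z : ℝ) : ℝ := τ * ((1 + z / β) ^ (1 / γ) - 1)

noncomputable def Gfn (α θ β τ γ η : ℝ) (z : ℝ) : ℝ :=
  (θ / η - 1) * Real.log (Wfn β τ γ z) + (1 / γ - 1) * Real.log (1 + z / β)
    + (-(θ + α)) * Real.log (α / θ + (Wfn β τ γ z) ^ (1 / η))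

noncomputable def Psi (α θ β τ γ η : ℝ) (z : ℝ) : ℝ :=
  (θ / η - 1) + (1 - γ) * (Wfn β τ γ z / (τ + Wfn β τ γ z))
    + (-((θ + α) / η)) * ((Wfn β τ γ z) ^ (1 / η) / (α / θ + (Wfn β τ γ z) ^ (1 / η)))

noncomputable def Kc (α θ β τ γ η : ℝ) : ℝ :=
  Real.Gamma (α + θ) / (Real.Gamma α * Real.Gamma θ) * (α / θ) ^ α
    * (τ * (1 / β * (1 / γ) * (1 / η)))

section aux
variable {α θ β τ γ η : ℝ} (hα : 0 < α) (hθ : 0 < θ) (hβ : 0 < β) (hτ : 0 < τ)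
  (hγ : 0 < γ) (hη : 0 < η)

include hβ in
lemma u_pos {z : ℝ} (hz : 0 < z) : (1:ℝ) < 1 + z / β := by
  have := div_pos hz hβ; linarith

include hβ hτ hγ in
lemma W_pos {z : ℝ} (hz : 0 < z) : 0 < Wfn β τ γ z := by
  have hu : (1:ℝ) < 1 + z / β := u_pos hβ hz
  have : (1:ℝ) < (1 + z / β) ^ (1 / γ) :=
    Real.one_lt_rpow_iff_of_pos (by linarith) |>.2 (Or.inl ⟨hu, by positivity⟩)
  have := sub_pos.2 this
  exact mul_pos hτ this

include hβ hτ hγ in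
lemma W_mono {z₁ z₂ : ℝ} (h1 : 0 < z₁) (h12 : z₁ ≤ z₂) : Wfn β τ γ z₁ ≤ Wfn β τ γ z₂ := by
  unfold Wfn
  have : (1 + z₁ / β) ^ (1 / γ) ≤ (1 + z₂ / β) ^ (1 / γ) := by
    apply Real.rpow_le_rpow (by positivity)
    · gcongr
    · positivity
  nlinarith [hτ.le]

include hβ hγ in
lemma hasDerivAt_W {z : ℝ} (hz : 0 < z) :
    HasDerivAt (fun z => Wfn β τ γ z) (τ * (1 / β * (1 / γ) * (1 + z / β) ^ (1 / γ - 1))) z := by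
  have hu : HasDerivAt (fun z : ℝ => 1 + z / β) (1 / β) z := by
    simpa using ((hasDerivAt_id z).div_const β).const_add 1
  have h1 : HasDerivAt (fun z : ℝ => (1 + z / β) ^ (1 / γ))
      (1 / β * (1 / γ) * (1 + z / β) ^ (1 / γ - 1)) z :=
    hu.rpow_const (Or.inl (by have := u_pos hβ hz (z:=z); positivity))
  have := (h1.sub_const 1).const_mul τ
  simpa [Wfn] using this

include hβ hτ hγ in
lemma hasDerivAt_X {z : ℝ} (hz : 0 < z) :
    HasDerivAt (fun z => powerBurrInv6 β τ γ η z)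
      (τ * (1 / β * (1 / γ) * (1 + z / β) ^ (1 / γ - 1)) * (1 / η)
        * (Wfn β τ γ z) ^ (1 / η - 1)) z := by
  have hw := W_pos hβ hτ hγ hz
  have := (hasDerivAt_W hβ hγ hz).rpow_const (p := 1/η) (Or.inl hw.ne')
  simpa [powerBurrInv6, Wfn] using this

include hα hθ hβ hτ hγ hη in
lemma f_eq {z : ℝ} (hz : 0 < z) :
    burrDensity α θ (powerBurrInv6 β τ γ η z) * deriv (powerBurrInv6 β τ γ η) z
      = Kc α θ β τ γ η * Real.exp (Gfn α θ β τ γ η z) := by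
  have hw : 0 < Wfn β τ γ z := W_pos hβ hτ hγ hz
  have hu : (0:ℝ) < 1 + z / β := by have := u_pos hβ hz (z:=z); linarith
  set w := Wfn β τ γ z with hwdef
  have hx : 0 < w ^ (1 / η) := Real.rpow_pos_of_pos hw _
  have hc : 0 < α / θ := div_pos hα hθ
  have hcx : 0 < α / θ + w ^ (1 / η) := by linarith
  have hd : deriv (powerBurrInv6 β τ γ η) z
      = τ * (1 / β * (1 / γ) * (1 + z / β) ^ (1 / γ - 1)) * (1 / η) * w ^ (1 / η - 1) :=
    (hasDerivAt_X hβ hτ hγ hz).deriv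
  have hXval : powerBurrInv6 β τ γ η z = w ^ (1 / η) := by rw [powerBurrInv6, hwdef, Wfn]
  rw [hd, hXval, burrDensity, if_pos hx]
  -- expand exp (Gfn)
  rw [Gfn, Real.exp_add, Real.exp_add]
  have e1 : Real.exp ((θ / η - 1) * Real.log w) = w ^ (θ / η - 1) := by
    rw [Real.rpow_def_of_pos hw, mul_comm]
  have e2 : Real.exp ((1 / γ - 1) * Real.log (1 + z / β)) = (1 + z / β) ^ (1 / γ - 1) := by
    rw [Real.rpow_def_of_pos hu, mul_comm]
  have e3 : Real.exp ((-(θ + α)) * Real.log (α / θ + w ^ (1 / η)))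
      = (α / θ + w ^ (1 / η)) ^ (-(θ + α)) := by
    rw [Real.rpow_def_of_pos hcx, mul_comm]
  rw [e1, e2, e3, Real.rpow_neg hcx.le]
  rw [show (w ^ (1 / η)) ^ (θ - 1) = w ^ (1 / η * (θ - 1)) from (Real.rpow_mul hw.le _ _).symm]
  rw [show θ / η - 1 = 1 / η * (θ - 1) + (1 / η - 1) by ring, Real.rpow_add hw]
  rw [Kc]
  ring

include hα hθ hβ hτ hγ hη in
lemma hasDerivAt_G {z : ℝ} (hz : 0 < z) :
    HasDerivAt (fun z => Gfn α θ β τ γ η z)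
      (τ * (1 / β * (1 / γ) * (1 + z / β) ^ (1 / γ - 1)) / Wfn β τ γ z
        * Psi α θ β τ γ η z) z := by
  have hw : 0 < Wfn β τ γ z := W_pos hβ hτ hγ hz
  have hu : (0:ℝ) < 1 + z / β := by have := u_pos hβ hz (z:=z); linarith
  have hx : 0 < (Wfn β τ γ z) ^ (1 / η) := Real.rpow_pos_of_pos hw _
  have hc : 0 < α / θ := div_pos hα hθ
  have hcx : 0 < α / θ + (Wfn β τ γ z) ^ (1 / η) := by linarith
  have hdu : HasDerivAt (fun z : ℝ => 1 + z / β) (1 / β) z := by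
    simpa using ((hasDerivAt_id z).div_const β).const_add 1
  have h1 : HasDerivAt (fun z => (θ / η - 1) * Real.log (Wfn β τ γ z))
      ((θ / η - 1) * (τ * (1 / β * (1 / γ) * (1 + z / β) ^ (1 / γ - 1)) / Wfn β τ γ z)) z :=
    ((hasDerivAt_W hβ hγ hz).log hw.ne').const_mul _
  have h2 : HasDerivAt (fun z : ℝ => (1 / γ - 1) * Real.log (1 + z / β))
      ((1 / γ - 1) * ((1 / β) / (1 + z / β))) z := (hdu.log hu.ne').const_mul _
  have h3 : HasDerivAt (fun z => (-(θ + α)) * Real.log (α / θ + (Wfn β τ γ z) ^ (1 / η)))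
      ((-(θ + α)) * ((τ * (1 / β * (1 / γ) * (1 + z / β) ^ (1 / γ - 1)) * (1 / η)
          * (Wfn β τ γ z) ^ (1 / η - 1)) / (α / θ + (Wfn β τ γ z) ^ (1 / η)))) z := by
    have hX := hasDerivAt_X (η := η) hβ hτ hγ hz
    have : HasDerivAt (fun z => α / θ + powerBurrInv6 β τ γ η z) _ z := hX.const_add (α / θ)
    have hl := this.log (by
      show α / θ + powerBurrInv6 β τ γ η z ≠ 0
      rw [show powerBurrInv6 β τ γ η z = (Wfn β τ γ z) ^ (1 / η) from rfl]
      positivity)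
    exact (hl.const_mul _).congr_deriv rfl |>.congr_of_eventuallyEq (by
      filter_upwards with y
      rfl)
  have hsum := (h1.add h2).add h3
  have heq : (θ / η - 1) * (τ * (1 / β * (1 / γ) * (1 + z / β) ^ (1 / γ - 1)) / Wfn β τ γ z)
      + (1 / γ - 1) * ((1 / β) / (1 + z / β))
      + (-(θ + α)) * ((τ * (1 / β * (1 / γ) * (1 + z / β) ^ (1 / γ - 1)) * (1 / η)
          * (Wfn β τ γ z) ^ (1 / η - 1)) / (α / θ + (Wfn β τ γ z) ^ (1 / η)))
      = τ * (1 / β * (1 / γ) * (1 + z / β) ^ (1 / γ - 1)) / Wfn β τ γ z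
        * Psi α θ β τ γ η z := by
    set w := Wfn β τ γ z with hwdef
    set u := 1 + z / β with hudef
    set B := u ^ (1 / γ - 1) with hBdef
    set A := u ^ (1 / γ) with hAdef
    set x := w ^ (1 / η) with hxdef
    have hBA : B * u = A := by
      rw [hBdef, hAdef]
      nth_rewrite 2 [← Real.rpow_one u]
      rw [← Real.rpow_add hu]
      norm_num
    have hwA : w = τ * (A - 1) := by rw [hwdef, hAdef, Wfn, hudef]
    have hxw : w ^ (1 / η - 1) * w = x := by
      rw [hxdef]
      nth_rewrite 2 [← Real.rpow_one w]
      rw [← Real.rpow_add hw]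
      norm_num
    have hwle : w ^ (1 / η - 1) = x / w := by field_simp [hw.ne'] at hxw ⊢; linarith
    have hB : B = A / u := by field_simp at hBA ⊢; linarith [hBA]
    have htw : τ + w = τ * A := by rw [hwA]; ring
    have hA : 0 < A := by positivity
    rw [Psi, ← hwdef, ← hxdef, hwle, hB, htw]
    field_simp
  rw [heq] at hsum
  exact hsum

include hα hθ hβ hτ hγ hη in
lemma Psi_anti (hγ1 : 1 ≤ γ) : AntitoneOn (Psi α θ β τ γ η) (Ioi 0) := by
  intro z₁ h₁ z₂ h₂ h12
  simp only [mem_Ioi] at h₁ h₂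
  have hw₁ : 0 < Wfn β τ γ z₁ := W_pos hβ hτ hγ h₁
  have hw₂ : 0 < Wfn β τ γ z₂ := W_pos hβ hτ hγ h₂
  have hww : Wfn β τ γ z₁ ≤ Wfn β τ γ z₂ := W_mono hβ hτ hγ h₁ h12
  have hx₁ : 0 < (Wfn β τ γ z₁) ^ (1 / η) := Real.rpow_pos_of_pos hw₁ _
  have hx₂ : 0 < (Wfn β τ γ z₂) ^ (1 / η) := Real.rpow_pos_of_pos hw₂ _
  have hxx : (Wfn β τ γ z₁) ^ (1 / η) ≤ (Wfn β τ γ z₂) ^ (1 / η) :=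
    Real.rpow_le_rpow hw₁.le hww (by positivity)
  have hc : 0 < α / θ := div_pos hα hθ
  have t1 : Wfn β τ γ z₁ / (τ + Wfn β τ γ z₁) ≤ Wfn β τ γ z₂ / (τ + Wfn β τ γ z₂) := by
    rw [div_le_div_iff₀ (by linarith) (by linarith)]
    nlinarith
  have t2 : (Wfn β τ γ z₁) ^ (1 / η) / (α / θ + (Wfn β τ γ z₁) ^ (1 / η))
      ≤ (Wfn β τ γ z₂) ^ (1 / η) / (α / θ + (Wfn β τ γ z₂) ^ (1 / η)) := by
    rw [div_le_div_iff₀ (by linarith) (by linarith)]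
    nlinarith
  rw [Psi, Psi]
  have hγ1' : 1 - γ ≤ 0 := by linarith
  have hθα : 0 ≤ (θ + α) / η := by positivity
  nlinarith [mul_le_mul_of_nonpos_left t1 hγ1', mul_le_mul_of_nonneg_left t2 hθα]

include hα hθ hβ hτ hγ hη in
lemma Kc_nonneg : 0 ≤ Kc α θ β τ γ η := by
  have h1 := Real.Gamma_pos_of_pos (by linarith : (0:ℝ) < α + θ)
  have h2 := Real.Gamma_pos_of_pos hα
  have h3 := Real.Gamma_pos_of_pos hθ
  rw [Kc]
  positivity

include hα hθ hβ hτ hγ hη in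
lemma mono_piece {T : Set ℝ} (hconv : Convex ℝ T) (hopen : IsOpen T) (hsub : T ⊆ Ioi 0)
    (hpsi : ∀ z ∈ T, 0 ≤ Psi α θ β τ γ η z) :
    MonotoneOn (fun z : ℝ =>
      burrDensity α θ (powerBurrInv6 β τ γ η z) * deriv (powerBurrInv6 β τ γ η) z) T := by
  have hG : MonotoneOn (fun z => Gfn α θ β τ γ η z) T := by
    have hderiv : ∀ z ∈ T, HasDerivAt (fun z => Gfn α θ β τ γ η z)
        (τ * (1 / β * (1 / γ) * (1 + z / β) ^ (1 / γ - 1)) / Wfn β τ γ z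
          * Psi α θ β τ γ η z) z := fun z hz => hasDerivAt_G hα hθ hβ hτ hγ hη (hsub hz)
    have hdiff : DifferentiableOn ℝ (fun z => Gfn α θ β τ γ η z) T := fun z hz =>
      ((hderiv z hz).differentiableAt).differentiableWithinAt
    apply monotoneOn_of_deriv_nonneg hconv hdiff.continuousOn
    · rw [hopen.interior_eq]; exact fun z hz => (hderiv z hz).differentiableAt.differentiableWithinAt
    · rw [hopen.interior_eq]
      intro z hz
      rw [(hderiv z hz).deriv]
      have hzpos : 0 < z := hsub hz
      have hw := W_pos hβ hτ hγ hzpos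
      have hu : (0:ℝ) < 1 + z / β := by have := u_pos hβ hzpos (z:=z); linarith
      have : 0 ≤ τ * (1 / β * (1 / γ) * (1 + z / β) ^ (1 / γ - 1)) / Wfn β τ γ z := by positivity
      exact mul_nonneg this (hpsi z hz)
  intro a ha b hb hab
  simp only
  rw [f_eq hα hθ hβ hτ hγ hη (hsub ha), f_eq hα hθ hβ hτ hγ hη (hsub hb)]
  exact mul_le_mul_of_nonneg_left (Real.exp_le_exp.2 (hG ha hb hab)) (Kc_nonneg hα hθ hβ hτ hγ hη)

include hα hθ hβ hτ hγ hη in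
lemma anti_piece {T : Set ℝ} (hconv : Convex ℝ T) (hopen : IsOpen T) (hsub : T ⊆ Ioi 0)
    (hpsi : ∀ z ∈ T, Psi α θ β τ γ η z ≤ 0) :
    AntitoneOn (fun z : ℝ =>
      burrDensity α θ (powerBurrInv6 β τ γ η z) * deriv (powerBurrInv6 β τ γ η) z) T := by
  have hG : AntitoneOn (fun z => Gfn α θ β τ γ η z) T := by
    have hderiv : ∀ z ∈ T, HasDerivAt (fun z => Gfn α θ β τ γ η z)
        (τ * (1 / β * (1 / γ) * (1 + z / β) ^ (1 / γ - 1)) / Wfn β τ γ z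
          * Psi α θ β τ γ η z) z := fun z hz => hasDerivAt_G hα hθ hβ hτ hγ hη (hsub hz)
    have hdiff : DifferentiableOn ℝ (fun z => Gfn α θ β τ γ η z) T := fun z hz =>
      ((hderiv z hz).differentiableAt).differentiableWithinAt
    apply antitoneOn_of_deriv_nonpos hconv hdiff.continuousOn
    · rw [hopen.interior_eq]; exact fun z hz => (hderiv z hz).differentiableAt.differentiableWithinAt
    · rw [hopen.interior_eq]
      intro z hz
      rw [(hderiv z hz).deriv]
      have hzpos : 0 < z := hsub hz
      have hw := W_pos hβ hτ hγ hzpos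
      have hu : (0:ℝ) < 1 + z / β := by have := u_pos hβ hzpos (z:=z); linarith
      have h0 : 0 ≤ τ * (1 / β * (1 / γ) * (1 + z / β) ^ (1 / γ - 1)) / Wfn β τ γ z := by
        positivity
      exact mul_nonpos_of_nonneg_of_nonpos h0 (hpsi z hz)
  intro a ha b hb hab
  simp only
  rw [f_eq hα hθ hβ hτ hγ hη (hsub ha), f_eq hα hθ hβ hτ hγ hη (hsub hb)]
  exact mul_le_mul_of_nonneg_left (Real.exp_le_exp.2 (hG ha hb hab)) (Kc_nonneg hα hθ hβ hτ hγ hη)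

end aux

/-- Proposition 1(i): if `γ ≥ 1`, the PowerBurr₆(α,θ,β,τ,γ,η) density
`f(z) = g_{α,θ}(x(z))·x'(z)` is unimodal on `(0,∞)`. -/
theorem powerBurr6_unimodal (α θ β τ γ η : ℝ)
    (hα : 0 < α) (hθ : 0 < θ) (hβ : 0 < β) (hτ : 0 < τ) (hγ : 0 < γ) (hη : 0 < η)
    (hγ1 : 1 ≤ γ) :
    UnimodalOnPos (fun z : ℝ =>
      burrDensity α θ (powerBurrInv6 β τ γ η z) * deriv (powerBurrInv6 β τ γ η) z) := by
  set S : Set ℝ := {z : ℝ | 0 < z ∧ 0 ≤ Psi α θ β τ γ η z} with hSdef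
  have hanti := Psi_anti hα hθ hβ hτ hγ hη hγ1
  by_cases hSne : S.Nonempty
  · by_cases hbdd : BddAbove S
    · -- interior mode
      obtain ⟨s₀, hs₀⟩ := hSne
      have hM0 : 0 < sSup S := lt_of_lt_of_le hs₀.1 (le_csSup hbdd hs₀)
      refine ⟨ENNReal.ofReal (sSup S), ?_, ?_⟩
      · have hset : {z : ℝ | 0 < z ∧ ENNReal.ofReal z < ENNReal.ofReal (sSup S)} =
            Ioo 0 (sSup S) := by
          ext z
          simp only [mem_setOf_eq, mem_Ioo]
          constructor
          · rintro ⟨hz, hlt⟩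
            exact ⟨hz, (ENNReal.ofReal_lt_ofReal_iff hM0).1 hlt⟩
          · rintro ⟨hz, hlt⟩
            exact ⟨hz, (ENNReal.ofReal_lt_ofReal_iff hM0).2 hlt⟩
        rw [hset]
        refine mono_piece hα hθ hβ hτ hγ hη (convex_Ioo _ _) isOpen_Ioo
          (fun z hz => hz.1) (fun z hz => ?_)
        obtain ⟨s, hsS, hzs⟩ := exists_lt_of_lt_csSup ⟨s₀, hs₀⟩ hz.2
        exact le_trans hsS.2 (hanti (mem_Ioi.2 hz.1) (mem_Ioi.2 hsS.1) hzs.le)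
      · have hset : {z : ℝ | 0 < z ∧ ENNReal.ofReal (sSup S) < ENNReal.ofReal z} =
            Ioi (sSup S) := by
          ext z
          simp only [mem_setOf_eq, mem_Ioi]
          constructor
          · rintro ⟨hz, hlt⟩
            exact (ENNReal.ofReal_lt_ofReal_iff_of_nonneg hM0.le).1 hlt
          · intro hlt
            exact ⟨hM0.trans hlt, (ENNReal.ofReal_lt_ofReal_iff_of_nonneg hM0.le).2 hlt⟩
        rw [hset]
        refine anti_piece hα hθ hβ hτ hγ hη (convex_Ioi _) isOpen_Ioi
          (fun z hz => mem_Ioi.2 (hM0.trans hz)) (fun z hz => ?_)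
        by_contra hcon
        push_neg at hcon
        have : z ∈ S := ⟨hM0.trans hz, hcon.le⟩
        exact absurd (le_csSup hbdd this) (not_le.2 hz)
    · -- mode at infinity
      refine ⟨⊤, ?_, ?_⟩
      · have hset : {z : ℝ | 0 < z ∧ ENNReal.ofReal z < ⊤} = Ioi 0 := by
          ext z; simp [ENNReal.ofReal_lt_top]
        rw [hset]
        refine mono_piece hα hθ hβ hτ hγ hη (convex_Ioi _) isOpen_Ioi le_rfl
          (fun z hz => ?_)
        obtain ⟨s, hsS, hzs⟩ := (not_bddAbove_iff.1 hbdd) z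
        exact le_trans hsS.2 (hanti hz (mem_Ioi.2 hsS.1) hzs.le)
      · have hset : {z : ℝ | 0 < z ∧ (⊤:ℝ≥0∞) < ENNReal.ofReal z} = ∅ := by
          ext z; simp
        rw [hset]
        exact fun a ha => absurd ha (by simp)
  · -- mode at 0
    refine ⟨0, ?_, ?_⟩
    · have hset : {z : ℝ | 0 < z ∧ ENNReal.ofReal z < 0} = ∅ := by
        ext z; simp
      rw [hset]
      exact fun a ha => absurd ha (by simp)
    · have hset : {z : ℝ | 0 < z ∧ (0:ℝ≥0∞) < ENNReal.ofReal z} = Ioi 0 := by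
        ext z
        simp only [mem_setOf_eq, mem_Ioi, ENNReal.ofReal_pos]
        tauto
      rw [hset]
      refine anti_piece hα hθ hβ hτ hγ hη (convex_Ioi _) isOpen_Ioi le_rfl (fun z hz => ?_)
      by_contra hcon
      push_neg at hcon
      exact hSne ⟨z, hz, hcon.le⟩
end

section
/- (Proposition 1(ii).) Let α, θ, β, τ, γ > 0 with max(θ, γ) ≥ 1.ails Then the PowerBurr₅(α,θ,β,τ,γ) density f(z) = g_{α,θ}(x(z)) · x'(z), where x(z) = τ((1 + z/β)^{1/γ} − 1), is unimodal on (0,∞): there exists m ∈ [0,∞] such that f is monotone nondecreasing on (0, m) and monotone nonincreasing on (m, ∞). -/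
open MeasureTheory Real
open scoped ENNReal

/-- The inverse PowerBurr₅ transform `x(z) = τ((1 + z/β)^{1/γ} − 1)`. -/
noncomputable def powerBurrInv5 (β τ γ : ℝ) (z : ℝ) : ℝ :=
  τ * ((1 + z / β) ^ (1 / γ) - 1)

/-- Explicit formula for the PowerBurr₅ density on `(0,∞)`. -/
noncomputable def pbF (α θ β τ γ : ℝ) (z : ℝ) : ℝ :=
  Real.Gamma (α + θ) / (Real.Gamma α * Real.Gamma θ) * (α / θ) ^ α *
      (τ * ((1 + z / β) ^ (1 / γ) - 1)) ^ (θ - 1) /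
      (α / θ + τ * ((1 + z / β) ^ (1 / γ) - 1)) ^ (θ + α) *
    (τ * (1 / β * (1 / γ) * (1 + z / β) ^ (1 / γ - 1)))

/-- The quadratic controlling the sign of the derivative. -/
noncomputable def pbPsi (α θ τ γ : ℝ) (s : ℝ) : ℝ :=
  (θ - 1) * s * (α / θ + τ * (s - 1)) - (θ + α) * τ * s * (s - 1)
    + (1 - γ) * (s - 1) * (α / θ + τ * (s - 1))

/-- Explicit formula for the derivative of `pbF`. -/
noncomputable def pbE (α θ β τ γ : ℝ) (z : ℝ) : ℝ :=
  pbF α θ β τ γ z * (τ * (1 / β * (1 / γ) * (1 + z / β) ^ (1 / γ - 1))) /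
      (τ * ((1 + z / β) ^ (1 / γ) - 1) * (α / θ + τ * ((1 + z / β) ^ (1 / γ) - 1)) *
        (1 + z / β) ^ (1 / γ)) *
    pbPsi α θ τ γ ((1 + z / β) ^ (1 / γ))

section basic

variable {α θ β τ γ : ℝ}

lemma pb_u_pos (hβ : 0 < β) {z : ℝ} (hz : 0 < z) : (0:ℝ) < 1 + z / β := by
  have := div_pos hz hβ; linarith

lemma pb_u_gt_one (hβ : 0 < β) {z : ℝ} (hz : 0 < z) : (1:ℝ) < 1 + z / β := by
  have := div_pos hz hβ; linarith

lemma pb_T_gt_one (hβ : 0 < β) (hγ : 0 < γ) {z : ℝ} (hz : 0 < z) :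
    (1:ℝ) < (1 + z / β) ^ (1 / γ) := by
  rw [Real.one_lt_rpow_iff_of_pos (pb_u_pos hβ hz)]
  exact Or.inl ⟨pb_u_gt_one hβ hz, by positivity⟩

lemma pb_X_pos (hβ : 0 < β) (hτ : 0 < τ) (hγ : 0 < γ) {z : ℝ} (hz : 0 < z) :
    (0:ℝ) < τ * ((1 + z / β) ^ (1 / γ) - 1) := by
  have := pb_T_gt_one hβ hγ hz
  nlinarith

lemma powerBurrInv5_hasDerivAt (hβ : 0 < β) {z : ℝ} (hz : 0 < z) :
    HasDerivAt (powerBurrInv5 β τ γ)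
      (τ * (1 / β * (1 / γ) * (1 + z / β) ^ (1 / γ - 1))) z := by
  have hu : (0:ℝ) < 1 + z / β := pb_u_pos hβ hz
  have h1 : HasDerivAt (fun z : ℝ => 1 + z / β) (1 / β) z := by
    simpa using ((hasDerivAt_id z).div_const β).const_add 1
  have h2 : HasDerivAt (fun z : ℝ => (1 + z / β) ^ (1 / γ))
      (1 / β * (1 / γ) * (1 + z / β) ^ (1 / γ - 1)) z :=
    h1.rpow_const (Or.inl hu.ne')
  exact (h2.sub_const 1).const_mul τ

lemma pbF_eq (hβ : 0 < β) (hτ : 0 < τ) (hγ : 0 < γ) {z : ℝ} (hz : 0 < z) :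
    burrDensity α θ (powerBurrInv5 β τ γ z) * deriv (powerBurrInv5 β τ γ) z
      = pbF α θ β τ γ z := by
  have hX : 0 < powerBurrInv5 β τ γ z := pb_X_pos hβ hτ hγ hz
  rw [(powerBurrInv5_hasDerivAt hβ hz).deriv, burrDensity, if_pos hX]
  simp only [powerBurrInv5, pbF]

lemma pbF_pos (hα : 0 < α) (hθ : 0 < θ) (hβ : 0 < β) (hτ : 0 < τ) (hγ : 0 < γ)
    {z : ℝ} (hz : 0 < z) : 0 < pbF α θ β τ γ z := by
  have hu : (0:ℝ) < 1 + z / β := pb_u_pos hβ hz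
  have hX : (0:ℝ) < τ * ((1 + z / β) ^ (1 / γ) - 1) := pb_X_pos hβ hτ hγ hz
  have hc : (0:ℝ) < α / θ := by positivity
  have hcX : (0:ℝ) < α / θ + τ * ((1 + z / β) ^ (1 / γ) - 1) := by linarith
  refine mul_pos (div_pos (mul_pos (mul_pos (div_pos (Real.Gamma_pos_of_pos (by positivity))
    (mul_pos (Real.Gamma_pos_of_pos hα) (Real.Gamma_pos_of_pos hθ)))
    (Real.rpow_pos_of_pos hc α)) (Real.rpow_pos_of_pos hX _))
    (Real.rpow_pos_of_pos hcX _)) ?_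
  exact mul_pos hτ (mul_pos (by positivity) (Real.rpow_pos_of_pos hu _))

set_option maxHeartbeats 1000000 in
lemma pbF_hasDerivAt (hα : 0 < α) (hθ : 0 < θ) (hβ : 0 < β) (hτ : 0 < τ) (hγ : 0 < γ)
    {z : ℝ} (hz : 0 < z) :
    HasDerivAt (pbF α θ β τ γ) (pbE α θ β τ γ z) z := by
  have hu : (0:ℝ) < 1 + z / β := pb_u_pos hβ hz
  have hT1 : (1:ℝ) < (1 + z / β) ^ (1 / γ) := pb_T_gt_one hβ hγ hz
  have hT0 : (0:ℝ) < (1 + z / β) ^ (1 / γ) := lt_trans zero_lt_one hT1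
  have hX : (0:ℝ) < τ * ((1 + z / β) ^ (1 / γ) - 1) := pb_X_pos hβ hτ hγ hz
  have hc : (0:ℝ) < α / θ := by positivity
  have hcX : (0:ℝ) < α / θ + τ * ((1 + z / β) ^ (1 / γ) - 1) := by linarith
  have hDn : (0:ℝ) < (α / θ + τ * ((1 + z / β) ^ (1 / γ) - 1)) ^ (θ + α) :=
    Real.rpow_pos_of_pos hcX _
  have h1 : HasDerivAt (fun z : ℝ => 1 + z / β) (1 / β) z := by
    simpa using ((hasDerivAt_id z).div_const β).const_add 1
  have h2 : HasDerivAt (fun z : ℝ => (1 + z / β) ^ (1 / γ))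
      (1 / β * (1 / γ) * (1 + z / β) ^ (1 / γ - 1)) z :=
    h1.rpow_const (Or.inl hu.ne')
  have hXd : HasDerivAt (fun z : ℝ => τ * ((1 + z / β) ^ (1 / γ) - 1))
      (τ * (1 / β * (1 / γ) * (1 + z / β) ^ (1 / γ - 1))) z :=
    (h2.sub_const 1).const_mul τ
  have hN : HasDerivAt (fun z : ℝ => (τ * ((1 + z / β) ^ (1 / γ) - 1)) ^ (θ - 1))
      (τ * (1 / β * (1 / γ) * (1 + z / β) ^ (1 / γ - 1)) * (θ - 1) *
        (τ * ((1 + z / β) ^ (1 / γ) - 1)) ^ (θ - 1 - 1)) z :=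
    hXd.rpow_const (Or.inl hX.ne')
  have hDd : HasDerivAt (fun z : ℝ => (α / θ + τ * ((1 + z / β) ^ (1 / γ) - 1)) ^ (θ + α))
      (τ * (1 / β * (1 / γ) * (1 + z / β) ^ (1 / γ - 1)) * (θ + α) *
        (α / θ + τ * ((1 + z / β) ^ (1 / γ) - 1)) ^ (θ + α - 1)) z :=
    (hXd.const_add (α / θ)).rpow_const (Or.inl hcX.ne')
  have hLi : HasDerivAt (fun z : ℝ => (1 + z / β) ^ (1 / γ - 1))
      (1 / β * (1 / γ - 1) * (1 + z / β) ^ (1 / γ - 1 - 1)) z :=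
    h1.rpow_const (Or.inl hu.ne')
  have hL : HasDerivAt (fun z : ℝ => τ * (1 / β * (1 / γ) * (1 + z / β) ^ (1 / γ - 1)))
      (τ * (1 / β * (1 / γ) * (1 / β * (1 / γ - 1) * (1 + z / β) ^ (1 / γ - 1 - 1)))) z := by
    exact (hLi.const_mul (1 / β * (1 / γ))).const_mul τ
  have hKN := hN.const_mul
    (Real.Gamma (α + θ) / (Real.Gamma α * Real.Gamma θ) * (α / θ) ^ α)
  have hQ := hKN.div hDd hDn.ne'
  have hF := hQ.mul hL
  convert hF using 1
  · rfl
  · rfl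
  · rfl
  simp only [pbE, pbF, pbPsi, Pi.div_apply]
  rw [Real.rpow_sub_one hX.ne' (θ - 1), Real.rpow_sub_one hcX.ne' (θ + α),
    Real.rpow_sub_one hu.ne' (1 / γ - 1), Real.rpow_sub_one hu.ne' (1 / γ)]
  set u := 1 + z / β with hu_def
  set P := u ^ (1 / γ) with hP_def
  set N := (τ * (P - 1)) ^ (θ - 1) with hN_def
  set Dp := (α / θ + τ * (P - 1)) ^ (θ + α) with hD_def
  have hP0 : P ≠ 0 := hT0.ne'
  have hX0 : τ * (P - 1) ≠ 0 := hX.ne'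
  have hcX0 : α / θ + τ * (P - 1) ≠ 0 := hcX.ne'
  have hDp0 : Dp ≠ 0 := hDn.ne'
  have hP1 : P - 1 ≠ 0 := sub_ne_zero.2 hT1.ne'
  have hθ0 : θ ≠ 0 := hθ.ne'
  have hτ0 : τ ≠ 0 := hτ.ne'
  have hW : α + θ * τ * (P - 1) ≠ 0 := by
    have h := mul_pos hθ hcX
    have hθα : θ * (α / θ) = α := by rw [mul_comm]; exact div_mul_cancel₀ α hθ0
    have e : θ * (α / θ + τ * (P - 1)) = α + θ * τ * (P - 1) := by linear_combination hθα
    rw [e] at h; exact h.ne'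
  field_simp

/-- Monotone part: if `ψ(T(z)) ≥ 0` on `(0,b)` then `pbF` is nondecreasing there. -/
lemma pbF_monotoneOn (hα : 0 < α) (hθ : 0 < θ) (hβ : 0 < β) (hτ : 0 < τ) (hγ : 0 < γ)
    {b : ℝ}
    (hpsi : ∀ z : ℝ, 0 < z → z < b → 0 ≤ pbPsi α θ τ γ ((1 + z / β) ^ (1 / γ))) :
    MonotoneOn (pbF α θ β τ γ) (Set.Ioo 0 b) := by
  refine monotoneOn_of_deriv_nonneg (convex_Ioo 0 b) ?_ ?_ ?_
  · exact fun x hx =>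
      (pbF_hasDerivAt hα hθ hβ hτ hγ hx.1).differentiableAt.continuousAt.continuousWithinAt
  · rw [interior_Ioo]
    exact fun x hx =>
      (pbF_hasDerivAt hα hθ hβ hτ hγ hx.1).differentiableAt.differentiableWithinAt
  · rw [interior_Ioo]
    intro x hx
    rw [(pbF_hasDerivAt hα hθ hβ hτ hγ hx.1).deriv]
    have hu : (0:ℝ) < 1 + x / β := pb_u_pos hβ hx.1
    have hT1 : (1:ℝ) < (1 + x / β) ^ (1 / γ) := pb_T_gt_one hβ hγ hx.1
    have hT0 : (0:ℝ) < (1 + x / β) ^ (1 / γ) := lt_trans zero_lt_one hT1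
    have hX : (0:ℝ) < τ * ((1 + x / β) ^ (1 / γ) - 1) := pb_X_pos hβ hτ hγ hx.1
    have hc : (0:ℝ) < α / θ := by positivity
    have hcX : (0:ℝ) < α / θ + τ * ((1 + x / β) ^ (1 / γ) - 1) := by linarith
    have hfac : (0:ℝ) < pbF α θ β τ γ x *
        (τ * (1 / β * (1 / γ) * (1 + x / β) ^ (1 / γ - 1))) /
        (τ * ((1 + x / β) ^ (1 / γ) - 1) * (α / θ + τ * ((1 + x / β) ^ (1 / γ) - 1)) *
          (1 + x / β) ^ (1 / γ)) := by
      refine div_pos (mul_pos (pbF_pos hα hθ hβ hτ hγ hx.1) ?_)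
        (mul_pos (mul_pos hX hcX) hT0)
      exact mul_pos hτ (mul_pos (by positivity) (Real.rpow_pos_of_pos hu _))
    have := mul_nonneg hfac.le (hpsi x hx.1 hx.2)
    simpa [pbE] using this

/-- Antitone part: if `ψ(T(z)) ≤ 0` on `(a,∞)` then `pbF` is nonincreasing there. -/
lemma pbF_antitoneOn (hα : 0 < α) (hθ : 0 < θ) (hβ : 0 < β) (hτ : 0 < τ) (hγ : 0 < γ)
    {a : ℝ} (ha : 0 ≤ a)
    (hpsi : ∀ z : ℝ, a < z → pbPsi α θ τ γ ((1 + z / β) ^ (1 / γ)) ≤ 0) :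
    AntitoneOn (pbF α θ β τ γ) (Set.Ioi a) := by
  refine antitoneOn_of_deriv_nonpos (convex_Ioi a) ?_ ?_ ?_
  · exact fun x hx => (pbF_hasDerivAt hα hθ hβ hτ hγ
      (lt_of_le_of_lt ha hx)).differentiableAt.continuousAt.continuousWithinAt
  · rw [interior_Ioi]
    exact fun x hx => (pbF_hasDerivAt hα hθ hβ hτ hγ
      (lt_of_le_of_lt ha hx)).differentiableAt.differentiableWithinAt
  · rw [interior_Ioi]
    intro x hx
    have hx0 : 0 < x := lt_of_le_of_lt ha hx
    rw [(pbF_hasDerivAt hα hθ hβ hτ hγ hx0).deriv]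
    have hu : (0:ℝ) < 1 + x / β := pb_u_pos hβ hx0
    have hT1 : (1:ℝ) < (1 + x / β) ^ (1 / γ) := pb_T_gt_one hβ hγ hx0
    have hT0 : (0:ℝ) < (1 + x / β) ^ (1 / γ) := lt_trans zero_lt_one hT1
    have hX : (0:ℝ) < τ * ((1 + x / β) ^ (1 / γ) - 1) := pb_X_pos hβ hτ hγ hx0
    have hc : (0:ℝ) < α / θ := by positivity
    have hcX : (0:ℝ) < α / θ + τ * ((1 + x / β) ^ (1 / γ) - 1) := by linarith
    have hfac : (0:ℝ) < pbF α θ β τ γ x *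
        (τ * (1 / β * (1 / γ) * (1 + x / β) ^ (1 / γ - 1))) /
        (τ * ((1 + x / β) ^ (1 / γ) - 1) * (α / θ + τ * ((1 + x / β) ^ (1 / γ) - 1)) *
          (1 + x / β) ^ (1 / γ)) := by
      refine div_pos (mul_pos (pbF_pos hα hθ hβ hτ hγ hx0) ?_)
        (mul_pos (mul_pos hX hcX) hT0)
      exact mul_pos hτ (mul_pos (by positivity) (Real.rpow_pos_of_pos hu _))
    have := mul_nonneg hfac.le (neg_nonneg.2 (hpsi x hx))
    simp only [pbE]
    nlinarith [this]

end basic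

set_option maxHeartbeats 2000000 in
/-- Proposition 1(ii): if `max(θ,γ) ≥ 1`, the PowerBurr₅(α,θ,β,τ,γ) density
`f(z) = g_{α,θ}(x(z))·x'(z)` is unimodal on `(0,∞)`. -/
theorem powerBurr5_unimodal (α θ β τ γ : ℝ)
    (hα : 0 < α) (hθ : 0 < θ) (hβ : 0 < β) (hτ : 0 < τ) (hγ : 0 < γ)
    (hmax : 1 ≤ max θ γ) :
    UnimodalOnPos (fun z : ℝ =>
      burrDensity α θ (powerBurrInv5 β τ γ z) * deriv (powerBurrInv5 β τ γ) z) := by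
  rcases le_or_gt 1 θ with hθ1 | hθ1
  · -- θ ≥ 1 : quadratic analysis; mode at larger root of ψ
    obtain ⟨A, hA_def⟩ : ∃ A : ℝ, A = τ * (α + γ) := ⟨_, rfl⟩
    obtain ⟨B, hB_def⟩ : ∃ B : ℝ,
        B = (θ - 1) * (α / θ - τ) + (θ + α) * τ + (1 - γ) * (α / θ - 2 * τ) := ⟨_, rfl⟩
    obtain ⟨C, hC_def⟩ : ∃ C : ℝ, C = (γ - 1) * (α / θ - τ) := ⟨_, rfl⟩
    have hA : 0 < A := by rw [hA_def]; positivity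
    have hquad : ∀ s : ℝ, pbPsi α θ τ γ s = -A * s ^ 2 + B * s + C := by
      intro s; simp only [pbPsi]; rw [hA_def, hB_def, hC_def]; ring
    have hc : (0:ℝ) < α / θ := by positivity
    have h1' : 0 ≤ -A + B + C := by
      rw [hA_def, hB_def, hC_def]
      nlinarith [mul_nonneg (sub_nonneg.2 hθ1) hc.le]
    have hD : 0 ≤ B ^ 2 + 4 * A * C := by
      nlinarith [sq_nonneg (B - 2 * A), mul_nonneg hA.le h1']
    obtain ⟨S, hS0, hS2⟩ : ∃ S : ℝ, 0 ≤ S ∧ S ^ 2 = B ^ 2 + 4 * A * C :=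
      ⟨Real.sqrt _, Real.sqrt_nonneg _, Real.sq_sqrt hD⟩
    have hle : (2 * A - B) ^ 2 ≤ S ^ 2 := by
      nlinarith [mul_nonneg hA.le h1']
    have h2AB : 2 * A - B ≤ S := by nlinarith [hle, hS0]
    have hBS : B - 2 * A ≤ S := by nlinarith [hle, hS0]
    obtain ⟨r, hr⟩ : ∃ r : ℝ, 2 * A * r = B + S :=
      ⟨(B + S) / (2 * A), by field_simp⟩
    have h1r : 1 ≤ r := by nlinarith [hr, hA, h2AB]
    have hr0 : (0:ℝ) ≤ r := le_trans zero_le_one h1r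
    -- sign of ψ on [1, r] and on [r, ∞)
    have hpos : ∀ s : ℝ, 1 ≤ s → s ≤ r → 0 ≤ pbPsi α θ τ γ s := by
      intro s hs1 hsr
      rw [hquad]
      have h2 : 2 * A * s ≤ B + S := by nlinarith [hr, hA, hsr]
      have h3 : B - S ≤ 2 * A * s := by nlinarith [hBS, hA, hs1]
      nlinarith [mul_nonneg (sub_nonneg.2 h2) (sub_nonneg.2 h3), hS2, hA]
    have hneg : ∀ s : ℝ, r ≤ s → pbPsi α θ τ γ s ≤ 0 := by
      intro s hsr
      rw [hquad]
      have h2 : B + S ≤ 2 * A * s := by nlinarith [hr, hA, hsr]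
      have h3 : B - S ≤ 2 * A * s := by linarith
      nlinarith [mul_nonneg (sub_nonneg.2 h2) (sub_nonneg.2 h3), hS2, hA]
    -- the mode
    set zs := β * (r ^ γ - 1) with hzs_def
    have hrγ1 : (1:ℝ) ≤ r ^ γ := by
      calc (1:ℝ) = 1 ^ γ := (Real.one_rpow γ).symm
        _ ≤ r ^ γ := Real.rpow_le_rpow zero_le_one h1r hγ.le
    have hzs0 : 0 ≤ zs := by rw [hzs_def]; nlinarith
    have hrpow : (r ^ γ) ^ (1 / γ) = r := by
      rw [← Real.rpow_mul hr0, mul_one_div_cancel hγ.ne', Real.rpow_one]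
    refine ⟨ENNReal.ofReal zs, ?_, ?_⟩
    · -- monotone part
      have hset : {z : ℝ | 0 < z ∧ ENNReal.ofReal z < ENNReal.ofReal zs} = Set.Ioo 0 zs := by
        ext x
        simp only [Set.mem_setOf_eq, Set.mem_Ioo]
        constructor
        · rintro ⟨h1, h2⟩
          exact ⟨h1, by rwa [ENNReal.ofReal_lt_ofReal_iff_of_nonneg h1.le] at h2⟩
        · rintro ⟨h1, h2⟩
          exact ⟨h1, by rwa [ENNReal.ofReal_lt_ofReal_iff_of_nonneg h1.le]⟩
      rw [hset]
      refine (pbF_monotoneOn hα hθ hβ hτ hγ ?_).congr fun z hz => (pbF_eq hβ hτ hγ hz.1).symm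
      intro z hz hzb
      have hu : (0:ℝ) < 1 + z / β := pb_u_pos hβ hz
      have hT1 : (1:ℝ) < (1 + z / β) ^ (1 / γ) := pb_T_gt_one hβ hγ hz
      refine hpos _ hT1.le ?_
      have hult : 1 + z / β ≤ r ^ γ := by
        rw [hzs_def] at hzb
        have : z / β < r ^ γ - 1 := by
          rw [div_lt_iff₀ hβ]; nlinarith
        linarith
      calc (1 + z / β) ^ (1 / γ) ≤ (r ^ γ) ^ (1 / γ) :=
            Real.rpow_le_rpow hu.le hult (by positivity)
        _ = r := hrpow
    · -- antitone part
      have hset : {z : ℝ | 0 < z ∧ ENNReal.ofReal zs < ENNReal.ofReal z} = Set.Ioi zs := by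
        ext x
        simp only [Set.mem_setOf_eq, Set.mem_Ioi]
        constructor
        · rintro ⟨h1, h2⟩
          rwa [ENNReal.ofReal_lt_ofReal_iff_of_nonneg hzs0] at h2
        · intro h
          exact ⟨lt_of_le_of_lt hzs0 h, by rwa [ENNReal.ofReal_lt_ofReal_iff_of_nonneg hzs0]⟩
      rw [hset]
      refine (pbF_antitoneOn hα hθ hβ hτ hγ hzs0 ?_).congr
        fun z hz => (pbF_eq hβ hτ hγ (lt_of_le_of_lt hzs0 hz)).symm
      intro z hzb
      have hz : 0 < z := lt_of_le_of_lt hzs0 hzb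
      have hu : (0:ℝ) < 1 + z / β := pb_u_pos hβ hz
      refine hneg _ ?_
      have hult : r ^ γ ≤ 1 + z / β := by
        rw [hzs_def] at hzb
        have : r ^ γ - 1 ≤ z / β := by
          rw [le_div_iff₀ hβ]; nlinarith
        linarith
      calc r = (r ^ γ) ^ (1 / γ) := hrpow.symm
        _ ≤ (1 + z / β) ^ (1 / γ) :=
            Real.rpow_le_rpow (by positivity) hult (by positivity)
  · -- θ < 1, hence γ ≥ 1 : density is nonincreasing, mode at 0
    have hγ1 : 1 ≤ γ := by
      by_contra h
      push_neg at h
      have := max_lt hθ1 h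
      linarith
    refine ⟨0, ?_, ?_⟩
    · have hset : {z : ℝ | 0 < z ∧ ENNReal.ofReal z < 0} = ∅ := by
        ext x; simp
      rw [hset]
      exact fun a ha => absurd ha (Set.notMem_empty a)
    · have hset : {z : ℝ | 0 < z ∧ 0 < ENNReal.ofReal z} = Set.Ioi 0 := by
        ext x
        simp only [Set.mem_setOf_eq, Set.mem_Ioi, ENNReal.ofReal_pos, and_self]
      rw [hset]
      refine (pbF_antitoneOn hα hθ hβ hτ hγ le_rfl ?_).congr
        fun z hz => (pbF_eq hβ hτ hγ hz).symm
      intro z hz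
      have hT1 : (1:ℝ) < (1 + z / β) ^ (1 / γ) := pb_T_gt_one hβ hγ hz
      set s := (1 + z / β) ^ (1 / γ) with hs_def
      have hs1 : 1 ≤ s := hT1.le
      have hc : (0:ℝ) < α / θ := by positivity
      simp only [pbPsi]
      nlinarith [mul_nonneg (mul_nonneg (sub_nonneg.2 hθ1.le) (by linarith : (0:ℝ) ≤ s))
          (by nlinarith : (0:ℝ) ≤ α / θ + τ * (s - 1)),
        mul_nonneg (mul_nonneg (mul_nonneg (by linarith : (0:ℝ) ≤ θ + α) hτ.le)
          (by linarith : (0:ℝ) ≤ s)) (by linarith : (0:ℝ) ≤ s - 1),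
        mul_nonneg (mul_nonneg (by linarith : (0:ℝ) ≤ γ - 1) (by linarith : (0:ℝ) ≤ s - 1))
          (by nlinarith : (0:ℝ) ≤ α / θ + τ * (s - 1))]
end

section
/- Let α, θ, β, τ, γ > 0. The PowerBurr₅(α,θ,β,τ,γ) density f(z) = g_{α,θ}(x(z)) · x'(z), where x(z) = τ((1 + z/β)^{1/γ} − 1), is unimodal on (0,∞) if and only if θ ≥ 1 or α(1 − γ/θ) − τ(1 + α) ≤ 2·√(|1 − θ|·τ·(α + γ)·α/θ). -/
open MeasureTheory Real
open scoped ENNReal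

open Set

noncomputable def PB5S (α θ τ γ : ℝ) : ℝ := α * (1 - γ / θ) - τ * (1 + α)

noncomputable def PB5Q (α θ τ γ : ℝ) (v : ℝ) : ℝ :=
  -(τ * (α + γ)) * v ^ 2 + PB5S α θ τ γ * v + α * (θ - 1) / θ

noncomputable def PB5v (β γ : ℝ) (z : ℝ) : ℝ := (1 + z / β) ^ (1 / γ) - 1

noncomputable def PB5F (α θ β τ γ : ℝ) (z : ℝ) : ℝ :=
  (Real.Gamma (α + θ) / (Real.Gamma α * Real.Gamma θ) * (α / θ) ^ α) *
    ((τ * PB5v β γ z) ^ (θ - 1) * ((α / θ + τ * PB5v β γ z) ^ (θ + α))⁻¹ *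
      (τ / (γ * β) * (1 + z / β) ^ (1 / γ - 1)))

lemma PB5v_pos {β γ : ℝ} (hβ : 0 < β) (hγ : 0 < γ) {z : ℝ} (hz : 0 < z) :
    0 < PB5v β γ z := by
  have h1 : (1:ℝ) < 1 + z / β := by have := div_pos hz hβ; linarith
  have := Real.rpow_lt_rpow (by norm_num) h1 (by positivity : (0:ℝ) < 1/γ)
  rw [Real.one_rpow] at this
  simp only [PB5v]; linarith

lemma PB5v_mono {β γ : ℝ} (hβ : 0 < β) (hγ : 0 < γ) :
    StrictMonoOn (PB5v β γ) (Ici 0) := by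
  intro x hx y hy hxy
  simp only [PB5v, sub_lt_sub_iff_right]
  have hx' : (0:ℝ) ≤ x := hx
  apply Real.rpow_lt_rpow (by positivity) _ (by positivity)
  have : x / β < y / β := div_lt_div_of_pos_right hxy hβ
  linarith

lemma PB5_hasDerivAt_v {β γ : ℝ} (hβ : 0 < β) (hγ : 0 < γ) {z : ℝ} (hz : 0 < z) :
    HasDerivAt (PB5v β γ) (1 / γ * (1 + z / β) ^ (1 / γ - 1) * (1 / β)) z := by
  have h1 : HasDerivAt (fun z : ℝ => 1 + z / β) (1 / β) z := by
    simpa using ((hasDerivAt_id z).div_const β).const_add 1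
  have hw : (0:ℝ) < 1 + z / β := by have := div_pos hz hβ; linarith
  have h2 := h1.rpow_const (p := 1 / γ) (Or.inl hw.ne')
  have := h2.sub_const 1
  refine this.congr_deriv ?_
  ring

lemma PB5F_hasDerivAt {α θ β τ γ : ℝ}
    (hα : 0 < α) (hθ : 0 < θ) (hβ : 0 < β) (hτ : 0 < τ) (hγ : 0 < γ)
    {z : ℝ} (hz : 0 < z) :
    HasDerivAt (PB5F α θ β τ γ)
      (PB5F α θ β τ γ z * PB5Q α θ τ γ (PB5v β γ z) /
        (PB5v β γ z * (α / θ + τ * PB5v β γ z) * (γ * β * (1 + z / β)))) z := by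
  have hw : (0:ℝ) < 1 + z / β := by have := div_pos hz hβ; linarith
  have hv : 0 < PB5v β γ z := PB5v_pos hβ hγ hz
  have hX : 0 < τ * PB5v β γ z := by positivity
  have hqX : 0 < α / θ + τ * PB5v β γ z := by positivity
  have h1 : HasDerivAt (fun z : ℝ => 1 + z / β) (1 / β) z := by
    simpa using ((hasDerivAt_id z).div_const β).const_add 1
  have hdv := PB5_hasDerivAt_v hβ hγ hz
  have hdX : HasDerivAt (fun z => τ * PB5v β γ z)
      (τ * (1 / γ * (1 + z / β) ^ (1 / γ - 1) * (1 / β))) z := hdv.const_mul τ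
  have hA := hdX.rpow_const (p := θ - 1) (Or.inl hX.ne')
  have hG := (hdX.const_add (α / θ)).rpow_const (p := θ + α) (Or.inl hqX.ne')
  have hB := hG.inv (by positivity : ((α / θ + τ * PB5v β γ z) ^ (θ + α)) ≠ 0)
  have hC := (h1.rpow_const (p := 1 / γ - 1) (Or.inl hw.ne')).const_mul (τ / (γ * β))
  have hF := ((hA.mul hB).mul hC).const_mul
      (Real.Gamma (α + θ) / (Real.Gamma α * Real.Gamma θ) * (α / θ) ^ α)
  refine hF.congr_deriv ?_
  simp only [Pi.mul_apply, Pi.inv_apply]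
  -- now a pure algebraic identity
  have e1 : (τ * PB5v β γ z) ^ (θ - 1 - 1) = (τ * PB5v β γ z) ^ (θ - 1) / (τ * PB5v β γ z) :=
    Real.rpow_sub_one hX.ne' _
  have e2 : (α / θ + τ * PB5v β γ z) ^ (θ + α - 1)
      = (α / θ + τ * PB5v β γ z) ^ (θ + α) / (α / θ + τ * PB5v β γ z) :=
    Real.rpow_sub_one hqX.ne' _
  have e3 : (1 + z / β) ^ (1 / γ - 1 - 1) = (1 + z / β) ^ (1 / γ - 1) / (1 + z / β) :=
    Real.rpow_sub_one hw.ne' _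
  have e4 : (1 + z / β) ^ (1 / γ - 1) = (PB5v β γ z + 1) / (1 + z / β) := by
    rw [Real.rpow_sub_one hw.ne']
    simp only [PB5v]; ring_nf
  rw [PB5F, e1, e2, e3, e4]
  have hApos : (0:ℝ) < (τ * PB5v β γ z) ^ (θ - 1) := Real.rpow_pos_of_pos hX _
  have hGpos : (0:ℝ) < (α / θ + τ * PB5v β γ z) ^ (θ + α) := Real.rpow_pos_of_pos hqX _
  simp only [PB5Q, PB5S]
  set v := PB5v β γ z
  set A := (τ * v) ^ (θ - 1)
  set G := (α / θ + τ * v) ^ (θ + α)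
  have hwne : (1 + z / β) ≠ 0 := hw.ne'
  field_simp
  ring

lemma PB5F_pos {α θ β τ γ : ℝ}
    (hα : 0 < α) (hθ : 0 < θ) (hβ : 0 < β) (hτ : 0 < τ) (hγ : 0 < γ)
    {z : ℝ} (hz : 0 < z) : 0 < PB5F α θ β τ γ z := by
  have hw : (0:ℝ) < 1 + z / β := by have := div_pos hz hβ; linarith
  have hv : 0 < PB5v β γ z := PB5v_pos hβ hγ hz
  have h1 : 0 < Real.Gamma (α + θ) := Real.Gamma_pos_of_pos (by linarith)
  have h2 : 0 < Real.Gamma α := Real.Gamma_pos_of_pos hα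
  have h3 : 0 < Real.Gamma θ := Real.Gamma_pos_of_pos hθ
  have h4 : (0:ℝ) < (α / θ) ^ α := Real.rpow_pos_of_pos (by positivity) _
  have h5 : (0:ℝ) < (τ * PB5v β γ z) ^ (θ - 1) := Real.rpow_pos_of_pos (by positivity) _
  have h6 : (0:ℝ) < (α / θ + τ * PB5v β γ z) ^ (θ + α) := Real.rpow_pos_of_pos (by positivity) _
  have h7 : (0:ℝ) < (1 + z / β) ^ (1 / γ - 1) := Real.rpow_pos_of_pos hw _
  rw [PB5F]
  positivity

lemma PB5_f_eq_F {α θ β τ γ : ℝ}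
    (hα : 0 < α) (hθ : 0 < θ) (hβ : 0 < β) (hτ : 0 < τ) (hγ : 0 < γ)
    {z : ℝ} (hz : 0 < z) :
    burrDensity α θ (powerBurrInv5 β τ γ z) * deriv (powerBurrInv5 β τ γ) z
      = PB5F α θ β τ γ z := by
  have hw : (0:ℝ) < 1 + z / β := by have := div_pos hz hβ; linarith
  have hv : 0 < PB5v β γ z := PB5v_pos hβ hγ hz
  have hXv : powerBurrInv5 β τ γ z = τ * PB5v β γ z := rfl
  have hX : 0 < powerBurrInv5 β τ γ z := by rw [hXv]; positivity
  have hdX : HasDerivAt (powerBurrInv5 β τ γ)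
      (τ * (1 / γ * (1 + z / β) ^ (1 / γ - 1) * (1 / β))) z := by
    have := (PB5_hasDerivAt_v hβ hγ hz).const_mul τ
    exact this
  rw [hdX.deriv, burrDensity, if_pos hX, hXv, PB5F]
  have h6 : (0:ℝ) < (α / θ + τ * PB5v β γ z) ^ (θ + α) := Real.rpow_pos_of_pos (by positivity) _
  field_simp

lemma PB5F_deriv {α θ β τ γ : ℝ}
    (hα : 0 < α) (hθ : 0 < θ) (hβ : 0 < β) (hτ : 0 < τ) (hγ : 0 < γ)
    {z : ℝ} (hz : 0 < z) :
    deriv (PB5F α θ β τ γ) z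
      = PB5F α θ β τ γ z * PB5Q α θ τ γ (PB5v β γ z) /
        (PB5v β γ z * (α / θ + τ * PB5v β γ z) * (γ * β * (1 + z / β))) :=
  (PB5F_hasDerivAt hα hθ hβ hτ hγ hz).deriv

lemma PB5_denom_pos {α θ β τ γ : ℝ}
    (hα : 0 < α) (hθ : 0 < θ) (hβ : 0 < β) (hτ : 0 < τ) (hγ : 0 < γ)
    {z : ℝ} (hz : 0 < z) :
    0 < PB5v β γ z * (α / θ + τ * PB5v β γ z) * (γ * β * (1 + z / β)) := by
  have hw : (0:ℝ) < 1 + z / β := by have := div_pos hz hβ; linarith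
  have hv : 0 < PB5v β γ z := PB5v_pos hβ hγ hz
  positivity

noncomputable def PB5z (β γ : ℝ) (v : ℝ) : ℝ := β * ((1 + v) ^ γ - 1)

lemma PB5z_nonneg {β γ : ℝ} (hβ : 0 < β) (hγ : 0 < γ) {v : ℝ} (hv : 0 ≤ v) :
    0 ≤ PB5z β γ v := by
  have h : (1:ℝ) ≤ (1 + v) ^ γ := by
    have := Real.rpow_le_rpow (by norm_num : (0:ℝ) ≤ 1) (by linarith : (1:ℝ) ≤ 1 + v) hγ.le
    rwa [Real.one_rpow] at this
  rw [PB5z]; exact mul_nonneg hβ.le (by linarith)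

lemma PB5z_pos {β γ : ℝ} (hβ : 0 < β) (hγ : 0 < γ) {v : ℝ} (hv : 0 < v) :
    0 < PB5z β γ v := by
  have h : (1:ℝ) < (1 + v) ^ γ := by
    have := Real.rpow_lt_rpow (by norm_num : (0:ℝ) ≤ 1) (by linarith : (1:ℝ) < 1 + v) hγ
    rwa [Real.one_rpow] at this
  rw [PB5z]; exact mul_pos hβ (by linarith)

lemma PB5v_z {β γ : ℝ} (hβ : 0 < β) (hγ : 0 < γ) {v : ℝ} (hv : 0 ≤ v) :
    PB5v β γ (PB5z β γ v) = v := by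
  have h1 : 1 + PB5z β γ v / β = (1 + v) ^ γ := by
    rw [PB5z]; field_simp; ring
  have h2 : ((1 + v) ^ γ) ^ (1/γ) = (1 + v) ^ (γ * (1/γ)) :=
    (Real.rpow_mul (by positivity : (0:ℝ) ≤ 1 + v) γ (1/γ)).symm
  rw [PB5v, h1, h2, mul_one_div_cancel hγ.ne', Real.rpow_one]
  ring

lemma PB5_quad_factor {a S d sq : ℝ} (ha : a ≠ 0) (hsq : sq ^ 2 = S ^ 2 + 4 * a * d) (v : ℝ) :
    -a * v ^ 2 + S * v + d = -a * (v - (S + sq) / (2 * a)) * (v - (S - sq) / (2 * a)) := by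
  field_simp
  linear_combination (-1 : ℝ) * hsq

lemma PB5z_strictMono {β γ : ℝ} (hβ : 0 < β) (hγ : 0 < γ) {u v : ℝ}
    (hu : 0 ≤ u) (huv : u < v) : PB5z β γ u < PB5z β γ v := by
  have h : (1 + u) ^ γ < (1 + v) ^ γ :=
    Real.rpow_lt_rpow (by linarith) (by linarith) hγ
  rw [PB5z, PB5z]
  have := mul_lt_mul_of_pos_left (by linarith : (1+u)^γ - 1 < (1+v)^γ - 1) hβ
  linarith



set_option maxHeartbeats 1000000 in
lemma PB5_not_unimodal (α θ β τ γ : ℝ)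
    (hα : 0 < α) (hθ : 0 < θ) (hβ : 0 < β) (hτ : 0 < τ) (hγ : 0 < γ)
    (hθlt : θ < 1)
    (hSgt : 2 * Real.sqrt (|1 - θ| * τ * (α + γ) * α / θ)
      < α * (1 - γ / θ) - τ * (1 + α)) :
    ¬ UnimodalOnPos (fun z : ℝ =>
        burrDensity α θ (powerBurrInv5 β τ γ z) * deriv (powerBurrInv5 β τ γ) z) := by
  intro hU
  set f : ℝ → ℝ := fun z =>
    burrDensity α θ (powerBurrInv5 β τ γ z) * deriv (powerBurrInv5 β τ γ) z with hfdef
  have hEq : ∀ z : ℝ, 0 < z → f z = PB5F α θ β τ γ z := by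
    intro z hz
    rw [hfdef]
    exact PB5_f_eq_F hα hθ hβ hτ hγ hz
  set S := α * (1 - γ / θ) - τ * (1 + α) with hSdef
  set r := |1 - θ| * τ * (α + γ) * α / θ with hrdef
  have hQdef : ∀ v : ℝ, PB5Q α θ τ γ v
      = -(τ * (α + γ)) * v ^ 2 + S * v + α * (θ - 1) / θ := by
    intro v; rw [PB5Q, PB5S, hSdef]
  clear_value S r
  have hτγ : (0:ℝ) < τ * (α + γ) := by positivity
  have hcontAt : ∀ z : ℝ, 0 < z → ContinuousAt (PB5F α θ β τ γ) z := fun z hz =>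
    (PB5F_hasDerivAt hα hθ hβ hτ hγ hz).differentiableAt.continuousAt
  have habs : |1 - θ| = 1 - θ := abs_of_pos (by linarith)
  have hr0 : 0 < r := by
    rw [hrdef, habs]
    exact div_pos (mul_pos (mul_pos (mul_pos (by linarith : (0:ℝ) < 1 - θ) hτ)
      (by linarith : (0:ℝ) < α + γ)) hα) hθ
  have hS0 : 0 < S :=
    lt_of_le_of_lt (by positivity : (0:ℝ) ≤ 2 * Real.sqrt r) hSgt
  have hs2 : 4 * r < S ^ 2 := by nlinarith [Real.sq_sqrt hr0.le, Real.sqrt_nonneg r]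
  have hE2 : (Real.sqrt (S ^ 2 - 4 * r)) ^ 2 = S ^ 2 - 4 * r := Real.sq_sqrt (by linarith)
  set E := Real.sqrt (S ^ 2 - 4 * r) with hEdef
  have hEpos : 0 < E := Real.sqrt_pos.mpr (by linarith)
  clear_value E
  have hElt : E < S := by nlinarith
  set v1 := (S - E) / (2 * (τ * (α + γ))) with hv1def
  set v2 := (S + E) / (2 * (τ * (α + γ))) with hv2def
  have hv1pos : 0 < v1 := div_pos (by linarith) (by positivity)
  have hv12 : v1 < v2 := div_lt_div_of_pos_right (by linarith) (by positivity)
  have hard : τ * (α + γ) * (α * (θ - 1) / θ) = -r := by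
    rw [hrdef, habs]; field_simp; ring
  have hfact : ∀ v : ℝ, PB5Q α θ τ γ v = -(τ * (α + γ)) * (v - v2) * (v - v1) := by
    intro v
    rw [hQdef v, PB5_quad_factor (a := τ * (α + γ)) (S := S) (d := α * (θ - 1) / θ)
      (sq := E) (by positivity) (by rw [hE2]; linear_combination (-4 : ℝ) * hard) v]
  clear_value v1 v2
  have hQneg : ∀ v : ℝ, 0 ≤ v → v < v1 → PB5Q α θ τ γ v < 0 := by
    intro v h0 h1
    rw [hfact v]
    nlinarith [mul_pos hτγ (mul_pos_of_neg_of_neg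
      (by linarith : v - v2 < 0) (by linarith : v - v1 < 0))]
  have hQpos : ∀ v : ℝ, v1 < v → v < v2 → 0 < PB5Q α θ τ γ v := by
    intro v h1 h2
    rw [hfact v]
    nlinarith [mul_pos hτγ (mul_pos (by linarith : 0 < v - v1) (by linarith : 0 < v2 - v))]
  set z1 := PB5z β γ v1 with hz1def
  have hz1pos : 0 < z1 := PB5z_pos hβ hγ hv1pos
  set vm := (v1 + v2) / 2 with hvmdef
  set zm := PB5z β γ vm with hzmdef
  have hz1m : z1 < zm := PB5z_strictMono hβ hγ hv1pos.le (by rw [hvmdef]; linarith)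
  have hvz1 : PB5v β γ z1 = v1 := PB5v_z hβ hγ hv1pos.le
  have hvzm : PB5v β γ zm = vm := PB5v_z hβ hγ (by rw [hvmdef]; linarith)
  have hanti : StrictAntiOn (PB5F α θ β τ γ) (Set.Icc (z1/2) z1) := by
    apply strictAntiOn_of_deriv_neg (convex_Icc _ _)
    · intro z hz
      exact (hcontAt z (lt_of_lt_of_le (by linarith) hz.1)).continuousWithinAt
    · rw [interior_Icc]
      intro z hz
      have hz0 : 0 < z := lt_trans (by linarith) hz.1
      have hvz : PB5v β γ z < v1 := by
        rw [← hvz1]; exact PB5v_mono hβ hγ hz0.le hz1pos.le hz.2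
      have hQ := hQneg _ (PB5v_pos hβ hγ hz0).le hvz
      rw [PB5F_deriv hα hθ hβ hτ hγ hz0]
      exact div_neg_of_neg_of_pos
        (mul_neg_of_pos_of_neg (PB5F_pos hα hθ hβ hτ hγ hz0) hQ)
        (PB5_denom_pos hα hθ hβ hτ hγ hz0)
  have hmonoI : StrictMonoOn (PB5F α θ β τ γ) (Set.Icc z1 zm) := by
    apply strictMonoOn_of_deriv_pos (convex_Icc _ _)
    · intro z hz
      exact (hcontAt z (lt_of_lt_of_le hz1pos hz.1)).continuousWithinAt
    · rw [interior_Icc]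
      intro z hz
      have hz0 : 0 < z := lt_trans hz1pos hz.1
      have hv1z : v1 < PB5v β γ z := by
        rw [← hvz1]; exact PB5v_mono hβ hγ hz1pos.le hz0.le hz.1
      have hvzlt : PB5v β γ z < v2 := by
        have h := PB5v_mono hβ hγ hz0.le
          (le_trans hz1pos.le (le_trans hz.1.le hz.2.le)) hz.2
        rw [hvzm] at h
        rw [hvmdef] at h
        linarith
      have hQ := hQpos _ hv1z hvzlt
      rw [PB5F_deriv hα hθ hβ hτ hγ hz0]
      exact div_pos (mul_pos (PB5F_pos hα hθ hβ hτ hγ hz0) hQ)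
        (PB5_denom_pos hα hθ hβ hτ hγ hz0)
  have hFlt : PB5F α θ β τ γ z1 < PB5F α θ β τ γ (z1/2) :=
    hanti ⟨le_rfl, by linarith⟩ ⟨by linarith, le_rfl⟩ (by linarith)
  have hev : ∀ᶠ x in nhdsWithin z1 (Set.Ioi z1),
      PB5F α θ β τ γ x < PB5F α θ β τ γ (z1/2) :=
    ((hcontAt z1 hz1pos).tendsto.eventually_lt_const hFlt).filter_mono nhdsWithin_le_nhds
  have hmem : ∀ᶠ x in nhdsWithin z1 (Set.Ioi z1), x ∈ Set.Ioo z1 zm :=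
    Filter.eventually_of_mem (Ioo_mem_nhdsGT_of_mem ⟨le_rfl, hz1m⟩) (fun x hx => hx)
  obtain ⟨z2, hz2mem, hz2lt⟩ := (hmem.and hev).exists
  unfold UnimodalOnPos at hU
  obtain ⟨m, hmono, hantiU⟩ := hU
  have hz2pos : 0 < z2 := lt_trans hz1pos hz2mem.1
  by_cases hm : ENNReal.ofReal z2 < m
  · have h1 : (z1/2) ∈ {z : ℝ | 0 < z ∧ ENNReal.ofReal z < m} :=
      ⟨by linarith, lt_of_le_of_lt (ENNReal.ofReal_le_ofReal (by linarith [hz2mem.1])) hm⟩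
    have h2 : z2 ∈ {z : ℝ | 0 < z ∧ ENNReal.ofReal z < m} := ⟨hz2pos, hm⟩
    have hle := hmono h1 h2 (by linarith [hz2mem.1] : z1/2 ≤ z2)
    rw [hEq _ (by linarith : (0:ℝ) < z1/2), hEq _ hz2pos] at hle
    linarith
  · push_neg at hm
    have hz2'1 : z2 < (z2 + zm)/2 := by linarith [hz2mem.2]
    have hz2'2 : (z2 + zm)/2 < zm := by linarith [hz2mem.2]
    have hmem2 : (z2 + zm)/2 ∈ {z : ℝ | 0 < z ∧ m < ENNReal.ofReal z} :=
      ⟨by linarith,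
        lt_of_le_of_lt hm ((ENNReal.ofReal_lt_ofReal_iff_of_nonneg hz2pos.le).mpr hz2'1)⟩
    have hmem3 : zm ∈ {z : ℝ | 0 < z ∧ m < ENNReal.ofReal z} :=
      ⟨lt_trans hz1pos hz1m,
        lt_of_le_of_lt hm ((ENNReal.ofReal_lt_ofReal_iff_of_nonneg hz2pos.le).mpr
          (by linarith [hz2mem.2]))⟩
    have hge := hantiU hmem2 hmem3 hz2'2.le
    have hlt := hmonoI (⟨by linarith [hz2mem.1], hz2'2.le⟩ : (z2 + zm)/2 ∈ Set.Icc z1 zm)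
      ⟨hz1m.le, le_rfl⟩ hz2'2
    rw [hEq _ (by linarith : (0:ℝ) < (z2+zm)/2), hEq _ (lt_trans hz1pos hz1m)] at hge
    linarith

set_option maxHeartbeats 1000000 in
lemma PB5_unimodal_of (α θ β τ γ : ℝ)
    (hα : 0 < α) (hθ : 0 < θ) (hβ : 0 < β) (hτ : 0 < τ) (hγ : 0 < γ)
    (hcond : 1 ≤ θ ∨ α * (1 - γ / θ) - τ * (1 + α)
      ≤ 2 * Real.sqrt (|1 - θ| * τ * (α + γ) * α / θ)) :
    UnimodalOnPos (fun z : ℝ =>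
        burrDensity α θ (powerBurrInv5 β τ γ z) * deriv (powerBurrInv5 β τ γ) z) := by
  set f : ℝ → ℝ := fun z =>
    burrDensity α θ (powerBurrInv5 β τ γ z) * deriv (powerBurrInv5 β τ γ) z with hfdef
  have hEq : ∀ z : ℝ, 0 < z → f z = PB5F α θ β τ γ z := by
    intro z hz
    rw [hfdef]
    exact PB5_f_eq_F hα hθ hβ hτ hγ hz
  set S := α * (1 - γ / θ) - τ * (1 + α) with hSdef
  set r := |1 - θ| * τ * (α + γ) * α / θ with hrdef
  have hQdef : ∀ v : ℝ, PB5Q α θ τ γ v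
      = -(τ * (α + γ)) * v ^ 2 + S * v + α * (θ - 1) / θ := by
    intro v; rw [PB5Q, PB5S, hSdef]
  clear_value S
  have hτγ : (0:ℝ) < τ * (α + γ) := by positivity
  have hdnn : ∀ z : ℝ, 0 < z → 0 ≤ PB5Q α θ τ γ (PB5v β γ z) →
      0 ≤ deriv (PB5F α θ β τ γ) z := by
    intro z hz hQ
    rw [PB5F_deriv hα hθ hβ hτ hγ hz]
    exact div_nonneg (mul_nonneg (PB5F_pos hα hθ hβ hτ hγ hz).le hQ)
      (PB5_denom_pos hα hθ hβ hτ hγ hz).le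
  have hdnp : ∀ z : ℝ, 0 < z → PB5Q α θ τ γ (PB5v β γ z) ≤ 0 →
      deriv (PB5F α θ β τ γ) z ≤ 0 := by
    intro z hz hQ
    rw [PB5F_deriv hα hθ hβ hτ hγ hz]
    have h1 := PB5F_pos hα hθ hβ hτ hγ hz
    have h2 := PB5_denom_pos hα hθ hβ hτ hγ hz
    exact div_nonpos_of_nonpos_of_nonneg (by nlinarith) h2.le
  have hcontAt : ∀ z : ℝ, 0 < z → ContinuousAt (PB5F α θ β τ γ) z := fun z hz =>
    (PB5F_hasDerivAt hα hθ hβ hτ hγ hz).differentiableAt.continuousAt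
  have hdiffAt : ∀ z : ℝ, 0 < z → DifferentiableAt ℝ (PB5F α θ β τ γ) z := fun z hz =>
    (PB5F_hasDerivAt hα hθ hβ hτ hγ hz).differentiableAt
  unfold UnimodalOnPos
  rcases le_or_gt 1 θ with hθ1 | hθlt
  · -- θ ≥ 1
    have hd0 : 0 ≤ α * (θ - 1) / θ := div_nonneg (mul_nonneg hα.le (by linarith)) hθ.le
    have hDd0 : (0:ℝ) ≤ S ^ 2 + 4 * (τ * (α + γ)) * (α * (θ - 1) / θ) := by
      have h4 : (0:ℝ) ≤ 4 * (τ * (α + γ)) * (α * (θ - 1) / θ) := by positivity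
      nlinarith [sq_nonneg S]
    have hsq2 : (Real.sqrt (S ^ 2 + 4 * (τ * (α + γ)) * (α * (θ - 1) / θ))) ^ 2
        = S ^ 2 + 4 * (τ * (α + γ)) * (α * (θ - 1) / θ) := Real.sq_sqrt hDd0
    set sq := Real.sqrt (S ^ 2 + 4 * (τ * (α + γ)) * (α * (θ - 1) / θ)) with hsqdef
    have habsS : |S| ≤ sq := by
      rw [← Real.sqrt_sq_eq_abs]
      apply Real.sqrt_le_sqrt
      nlinarith
    clear_value sq
    set vp := (S + sq) / (2 * (τ * (α + γ))) with hvpdef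
    have hvp0 : 0 ≤ vp :=
      div_nonneg (by linarith [neg_abs_le S]) (by positivity)
    have hvm0 : (S - sq) / (2 * (τ * (α + γ))) ≤ 0 :=
      div_nonpos_of_nonpos_of_nonneg (by linarith [le_abs_self S]) (by positivity)
    have hfact : ∀ v : ℝ, PB5Q α θ τ γ v
        = -(τ * (α + γ)) * (v - vp) * (v - (S - sq) / (2 * (τ * (α + γ)))) := by
      intro v
      rw [hQdef v, PB5_quad_factor (a := τ * (α + γ)) (S := S) (d := α * (θ - 1) / θ)
        (sq := sq) (by positivity) hsq2 v]
    set vmm := (S - sq) / (2 * (τ * (α + γ))) with hvmmdef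
    clear_value vp vmm
    have hQ1 : ∀ v : ℝ, 0 ≤ v → v ≤ vp → 0 ≤ PB5Q α θ τ γ v := by
      intro v h0 h1; rw [hfact v]
      nlinarith [mul_nonneg (mul_nonneg hτγ.le (by linarith : (0:ℝ) ≤ vp - v))
        (by linarith : (0:ℝ) ≤ v - vmm)]
    have hQ2 : ∀ v : ℝ, vp ≤ v → PB5Q α θ τ γ v ≤ 0 := by
      intro v h1; rw [hfact v]
      nlinarith [mul_nonneg (mul_nonneg hτγ.le (by linarith : (0:ℝ) ≤ v - vp))
        (by linarith : (0:ℝ) ≤ v - vmm)]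
    set zp := PB5z β γ vp with hzpdef
    have hzp0 : 0 ≤ zp := PB5z_nonneg hβ hγ hvp0
    have hvzp : PB5v β γ zp = vp := PB5v_z hβ hγ hvp0
    refine ⟨ENNReal.ofReal zp, ?_, ?_⟩
    · have hset : {z : ℝ | 0 < z ∧ ENNReal.ofReal z < ENNReal.ofReal zp}
          = Set.Ioo 0 zp := by
        ext z
        simp only [Set.mem_setOf_eq, Set.mem_Ioo]
        constructor
        · rintro ⟨h1, h2⟩
          exact ⟨h1, (ENNReal.ofReal_lt_ofReal_iff_of_nonneg h1.le).mp h2⟩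
        · rintro ⟨h1, h2⟩
          exact ⟨h1, (ENNReal.ofReal_lt_ofReal_iff_of_nonneg h1.le).mpr h2⟩
      rw [hset]
      have hmF : MonotoneOn (PB5F α θ β τ γ) (Set.Ioo 0 zp) := by
        apply monotoneOn_of_deriv_nonneg (convex_Ioo _ _)
        · intro z hz; exact (hcontAt z hz.1).continuousWithinAt
        · rw [interior_Ioo]; intro z hz; exact (hdiffAt z hz.1).differentiableWithinAt
        · rw [interior_Ioo]; intro z hz
          apply hdnn z hz.1
          apply hQ1 _ (PB5v_pos hβ hγ hz.1).le
          rw [← hvzp]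
          exact (PB5v_mono hβ hγ hz.1.le hzp0 hz.2).le
      exact hmF.congr (fun z hz => (hEq z hz.1).symm)
    · have hset : {z : ℝ | 0 < z ∧ ENNReal.ofReal zp < ENNReal.ofReal z}
          = Set.Ioi zp := by
        ext z
        simp only [Set.mem_setOf_eq, Set.mem_Ioi]
        constructor
        · rintro ⟨h1, h2⟩
          exact (ENNReal.ofReal_lt_ofReal_iff_of_nonneg hzp0).mp h2
        · intro h
          exact ⟨lt_of_le_of_lt hzp0 h,
            (ENNReal.ofReal_lt_ofReal_iff_of_nonneg hzp0).mpr h⟩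
      rw [hset]
      have haF : AntitoneOn (PB5F α θ β τ γ) (Set.Ioi zp) := by
        apply antitoneOn_of_deriv_nonpos (convex_Ioi _)
        · intro z hz
          exact (hcontAt z (lt_of_le_of_lt hzp0 hz)).continuousWithinAt
        · rw [interior_Ioi]; intro z hz
          exact (hdiffAt z (lt_of_le_of_lt hzp0 hz)).differentiableWithinAt
        · rw [interior_Ioi]; intro z hz
          have hz0 : 0 < z := lt_of_le_of_lt hzp0 hz
          apply hdnp z hz0
          apply hQ2
          rw [← hvzp]
          exact (PB5v_mono hβ hγ hzp0 hz0.le hz).le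
      exact haF.congr (fun z hz => (hEq z (lt_of_le_of_lt hzp0 hz)).symm)
  · -- θ < 1 : S ≤ 2√r, f is antitone on all of (0,∞)
    have hcond' : S ≤ 2 * Real.sqrt r := hcond.resolve_left (not_le.mpr hθlt)
    clear_value r
    have habs : |1 - θ| = 1 - θ := abs_of_pos (by linarith)
    have hr0 : 0 ≤ r := by
      rw [hrdef, habs]
      exact div_nonneg (mul_nonneg (mul_nonneg (mul_nonneg
        (by linarith : (0:ℝ) ≤ 1 - θ) hτ.le) (by linarith : (0:ℝ) ≤ α + γ)) hα.le) hθ.le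
    have har : τ * (α + γ) * (α * (1 - θ) / θ) = r := by
      rw [hrdef, habs]; field_simp
    have hdneg : α * (θ - 1) / θ < 0 :=
      div_neg_of_neg_of_pos (by nlinarith [mul_pos hα (by linarith : (0:ℝ) < 1 - θ)]) hθ
    have hQ3 : ∀ v : ℝ, 0 ≤ v → PB5Q α θ τ γ v ≤ 0 := by
      intro v hv
      rw [hQdef v]
      rcases le_or_gt S 0 with hS | hS
      · have h1 : (0:ℝ) ≤ (τ * (α + γ)) * v ^ 2 := by positivity
        have h2 : S * v ≤ 0 := mul_nonpos_of_nonpos_of_nonneg hS hv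
        linarith
      · have hs2 : S ^ 2 ≤ 4 * r := by
          nlinarith [Real.sq_sqrt hr0, sq_nonneg (2 * Real.sqrt r - S),
            mul_nonneg (by linarith : (0:ℝ) ≤ 2 * Real.sqrt r - S) hS.le]
        have hdd : α * (θ - 1) / θ = -(α * (1 - θ) / θ) := by ring
        rw [hdd]
        nlinarith [sq_nonneg (2 * (τ * (α + γ)) * v - S), har, hτγ]
    refine ⟨0, ?_, ?_⟩
    · have hset : {z : ℝ | 0 < z ∧ ENNReal.ofReal z < 0} = ∅ := by
        ext z; simp
      rw [hset]
      exact fun x hx => (Set.notMem_empty x hx).elim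
    · have hset : {z : ℝ | 0 < z ∧ (0:ENNReal) < ENNReal.ofReal z} = Set.Ioi 0 := by
        ext z
        simp [Set.mem_setOf_eq, Set.mem_Ioi, ENNReal.ofReal_pos]
      rw [hset]
      have haF : AntitoneOn (PB5F α θ β τ γ) (Set.Ioi 0) := by
        apply antitoneOn_of_deriv_nonpos (convex_Ioi _)
        · intro z hz; exact (hcontAt z hz).continuousWithinAt
        · rw [interior_Ioi]; intro z hz; exact (hdiffAt z hz).differentiableWithinAt
        · rw [interior_Ioi]; intro z hz
          exact hdnp z hz (hQ3 _ (PB5v_pos hβ hγ hz).le)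
      exact haF.congr (fun z hz => (hEq z hz).symm)

/-- The PowerBurr₅(α,θ,β,τ,γ) density is unimodal on `(0,∞)` if and only if
`θ ≥ 1` or `α(1 − γ/θ) − τ(1 + α) ≤ 2√(|1 − θ|·τ·(α + γ)·α/θ)`. -/
theorem powerBurr5_unimodal_iff (α θ β τ γ : ℝ)
    (hα : 0 < α) (hθ : 0 < θ) (hβ : 0 < β) (hτ : 0 < τ) (hγ : 0 < γ) :
    UnimodalOnPos (fun z : ℝ =>
        burrDensity α θ (powerBurrInv5 β τ γ z) * deriv (powerBurrInv5 β τ γ) z)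
      ↔ 1 ≤ θ ∨
        α * (1 - γ / θ) - τ * (1 + α)
          ≤ 2 * Real.sqrt (|1 - θ| * τ * (α + γ) * α / θ) := by
  constructor
  · intro hU
    by_contra hcon
    push_neg at hcon
    obtain ⟨hθ1, hSgt⟩ := hcon
    exact PB5_not_unimodal α θ β τ γ hα hθ hβ hτ hγ hθ1 hSgt hU
  · exact PB5_unimodal_of α θ β τ γ hα hθ hβ hτ hγ
end

section
/- Let α, θ, β, τ, γ, η > 0 and let f be the PowerBurr₆(α,θ,β,τ,γ,η) density. For every z > 0, writing x = x(z) = (τ((1 + z/β)^{1/γ} − 1))^{1/η}, the function log f is differentiable at z and d(log f(z))/dz = x'(z) · P(x) / ( x · (α/θ + x) · (τ + x^η) ), where P(x) = −(α + γη)·x^{η+1} + α(1 − γη/θ)·x^η − τ(η + α)·x + τ(θ − η)·α/θ. -/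
open MeasureTheory Real

lemma powerBurrInv6_hasDerivAt (β τ γ η : ℝ) (hβ : 0 < β) (hτ : 0 < τ) (hγ : 0 < γ)
    {z : ℝ} (hz : 0 < z) :
    HasDerivAt (powerBurrInv6 β τ γ η)
      ((τ * (1 / β * (1 / γ) * (1 + z / β) ^ (1 / γ - 1))) * (1 / η)
        * (τ * ((1 + z / β) ^ (1 / γ) - 1)) ^ (1 / η - 1)) z := by
  have hzb : 0 < z / β := div_pos hz hβ
  have hu : (0:ℝ) < 1 + z / β := by linarith
  have hv : 1 < (1 + z / β) ^ (1 / γ) :=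
    (Real.one_lt_rpow_iff_of_pos hu).mpr (Or.inl ⟨by linarith, by positivity⟩)
  have h1 : HasDerivAt (fun z : ℝ => 1 + z / β) (1 / β) z := by
    simpa using ((hasDerivAt_id z).div_const β).const_add 1
  have h2 := h1.rpow_const (p := 1/γ) (Or.inl hu.ne')
  have h3 := (h2.sub_const 1).const_mul τ
  have hs : 0 < τ * ((1 + z / β) ^ (1 / γ) - 1) := mul_pos hτ (by linarith)
  exact h3.rpow_const (p := 1/η) (Or.inl hs.ne')

set_option maxHeartbeats 1000000 in
theorem alg_key (α θ η γ β τ U V X : ℝ) (hθ : θ ≠ 0) (hη : η ≠ 0) (hγ : γ ≠ 0) (hβ : β ≠ 0)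
    (hτ : τ ≠ 0) (hU : U ≠ 0) (hX : X ≠ 0) (hV1 : V - 1 ≠ 0) (hV0 : V ≠ 0)
    (hAθ : α + θ * X ≠ 0) :
    τ * (1 / β * (1 / γ) * (V / U)) * (1 / η) * (X / (τ * (V - 1))) *
        (-(α + γ * η) * (τ * (V - 1) * X) + α * (1 - γ * η / θ) * (τ * (V - 1))
          - τ * (η + α) * X + τ * (θ - η) * α / θ)
        / (X * (α / θ + X) * (τ + τ * (V - 1)))
      = ((θ - 1) / η + (1 / η - 1)) * (τ * (1 / β * (1 / γ) * (V / U)) / (τ * (V - 1)))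
        + (1 / γ - 1) * (1 / β / U)
        - (θ + α) * (τ * (1 / β * (1 / γ) * (V / U)) * (1 / η) * (X / (τ * (V - 1)))
            / (α / θ + X)) := by
  have hrw : α / θ + X = (α + θ * X) / θ := by field_simp
  have hT : τ + τ * (V - 1) ≠ 0 := by
    have h : τ + τ * (V - 1) = τ * V := by ring
    rw [h]; exact mul_ne_zero hτ hV0
  have hAX : α + X * θ ≠ 0 := by rwa [mul_comm]
  have hV' : (1:ℝ) + (V - 1) ≠ 0 := by rwa [add_sub_cancel]
  rw [hrw]
  field_simp
  ring

set_option maxHeartbeats 1000000 in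
/-- The logarithmic derivative of the PowerBurr₆(α,θ,β,τ,γ,η) density. -/
theorem powerBurr6_logDeriv (α θ β τ γ η : ℝ)
    (hα : 0 < α) (hθ : 0 < θ) (hβ : 0 < β) (hτ : 0 < τ) (hγ : 0 < γ) (hη : 0 < η)
    (z : ℝ) (hz : 0 < z) :
    HasDerivAt
      (fun z : ℝ =>
        Real.log (burrDensity α θ (powerBurrInv6 β τ γ η z)
          * deriv (powerBurrInv6 β τ γ η) z))
      (deriv (powerBurrInv6 β τ γ η) z *
        (-(α + γ * η) * (powerBurrInv6 β τ γ η z) ^ (η + 1)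
          + α * (1 - γ * η / θ) * (powerBurrInv6 β τ γ η z) ^ η
          - τ * (η + α) * (powerBurrInv6 β τ γ η z)
          + τ * (θ - η) * α / θ)
        / ((powerBurrInv6 β τ γ η z) * (α / θ + powerBurrInv6 β τ γ η z)
            * (τ + (powerBurrInv6 β τ γ η z) ^ η)))
      z := by
  -- notation
  have hzb : 0 < z / β := div_pos hz hβ
  have hu : (0:ℝ) < 1 + z / β := by linarith
  have hv : 1 < (1 + z / β) ^ (1 / γ) :=
    (Real.one_lt_rpow_iff_of_pos hu).mpr (Or.inl ⟨by linarith, by positivity⟩)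
  have hs : 0 < τ * ((1 + z / β) ^ (1 / γ) - 1) := mul_pos hτ (by linarith)
  have hX : 0 < powerBurrInv6 β τ γ η z := Real.rpow_pos_of_pos hs _
  have hA : 0 < α / θ + powerBurrInv6 β τ γ η z := by positivity
  have hC : 0 < Real.Gamma (α + θ) / (Real.Gamma α * Real.Gamma θ) * (α / θ) ^ α := by
    have g1 := Real.Gamma_pos_of_pos (add_pos hα hθ)
    have g2 := Real.Gamma_pos_of_pos hα
    have g3 := Real.Gamma_pos_of_pos hθ
    positivity
  -- the differentiable model function F
  set c1 : ℝ := (θ - 1) / η + (1 / η - 1) with hc1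
  set K : ℝ := Real.log (Real.Gamma (α + θ) / (Real.Gamma α * Real.Gamma θ))
      + Real.log ((α / θ) ^ α)
      + Real.log τ + Real.log (1 / β) + Real.log (1 / γ) + Real.log (1 / η) with hK
  set F : ℝ → ℝ := fun z' => K +
      (c1 * Real.log (τ * ((1 + z' / β) ^ (1 / γ) - 1))
        + (1 / γ - 1) * Real.log (1 + z' / β)
        - (θ + α) * Real.log (α / θ + powerBurrInv6 β τ γ η z')) with hF
  -- derivative building blocks at z
  have h1 : HasDerivAt (fun z : ℝ => 1 + z / β) (1 / β) z := by
    simpa using ((hasDerivAt_id z).div_const β).const_add 1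
  have h2 := h1.rpow_const (p := 1/γ) (Or.inl hu.ne')
  have h3 := (h2.sub_const 1).const_mul τ
  have hxz := powerBurrInv6_hasDerivAt β τ γ η hβ hτ hγ hz
  have hL1 := (h3.log hs.ne').const_mul c1
  have hL2 := (h1.log hu.ne').const_mul (1/γ - 1)
  have hL3 := (((hxz.const_add (α/θ)).log hA.ne')).const_mul (θ + α)
  have hFd : HasDerivAt F
      (c1 * (τ * (1 / β * (1 / γ) * (1 + z / β) ^ (1 / γ - 1))
          / (τ * ((1 + z / β) ^ (1 / γ) - 1)))
        + (1 / γ - 1) * ((1 / β) / (1 + z / β))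
        - (θ + α) * ((τ * (1 / β * (1 / γ) * (1 + z / β) ^ (1 / γ - 1))) * (1 / η)
            * (τ * ((1 + z / β) ^ (1 / γ) - 1)) ^ (1 / η - 1)
            / (α / θ + powerBurrInv6 β τ γ η z))) z := by
    exact ((hL1.add hL2).sub hL3).const_add K
  -- eventual equality
  have hev : (fun z' : ℝ =>
      Real.log (burrDensity α θ (powerBurrInv6 β τ γ η z')
        * deriv (powerBurrInv6 β τ γ η) z')) =ᶠ[nhds z] F := by
    filter_upwards [Ioi_mem_nhds hz] with z' hz'
    have hz' : (0:ℝ) < z' := hz'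
    have hzb' : 0 < z' / β := div_pos hz' hβ
    have hu' : (0:ℝ) < 1 + z' / β := by linarith
    have hv' : 1 < (1 + z' / β) ^ (1 / γ) :=
      (Real.one_lt_rpow_iff_of_pos hu').mpr (Or.inl ⟨by linarith, by positivity⟩)
    have hs' : 0 < τ * ((1 + z' / β) ^ (1 / γ) - 1) := mul_pos hτ (by linarith)
    have hX' : 0 < powerBurrInv6 β τ γ η z' := Real.rpow_pos_of_pos hs' _
    have hA' : 0 < α / θ + powerBurrInv6 β τ γ η z' := by positivity
    have hup : 0 < (1 + z' / β) ^ (1 / γ - 1) := Real.rpow_pos_of_pos hu' _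
    have hsp : 0 < (τ * ((1 + z' / β) ^ (1 / γ) - 1)) ^ (1 / η - 1) :=
      Real.rpow_pos_of_pos hs' _
    rw [(powerBurrInv6_hasDerivAt β τ γ η hβ hτ hγ hz').deriv]
    rw [burrDensity, if_pos hX']
    have e1 : Real.Gamma (α + θ) / (Real.Gamma α * Real.Gamma θ) * (α / θ) ^ α
          * (powerBurrInv6 β τ γ η z') ^ (θ - 1)
          / (α / θ + powerBurrInv6 β τ γ η z') ^ (θ + α)
          * ((τ * (1 / β * (1 / γ) * (1 + z' / β) ^ (1 / γ - 1))) * (1 / η)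
            * (τ * ((1 + z' / β) ^ (1 / γ) - 1)) ^ (1 / η - 1))
        = (Real.Gamma (α + θ) / (Real.Gamma α * Real.Gamma θ) * (α / θ) ^ α)
          * ((powerBurrInv6 β τ γ η z') ^ (θ - 1)
            * ((α / θ + powerBurrInv6 β τ γ η z') ^ (θ + α))⁻¹
            * (τ * (1 / β * ((1 / γ) * ((1 + z' / β) ^ (1 / γ - 1)
              * ((1 / η) * (τ * ((1 + z' / β) ^ (1 / γ) - 1)) ^ (1 / η - 1))))))) := by
      ring
    rw [e1]
    have hXlog : Real.log (powerBurrInv6 β τ γ η z')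
        = (1 / η) * Real.log (τ * ((1 + z' / β) ^ (1 / γ) - 1)) := by
      rw [show powerBurrInv6 β τ γ η z'
          = (τ * ((1 + z' / β) ^ (1 / γ) - 1)) ^ (1 / η) from rfl,
        Real.log_rpow hs']
    rw [Real.log_mul hC.ne' (by positivity),
      Real.log_mul (by positivity) (by positivity),
      Real.log_mul (by positivity) (by positivity),
      Real.log_mul (by positivity) (by positivity),
      Real.log_mul (by positivity) (by positivity),
      Real.log_mul (by positivity) (by positivity),
      Real.log_mul (by positivity) (by positivity),
      Real.log_mul hup.ne' (mul_ne_zero (by positivity) hsp.ne'),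
      Real.log_mul (by positivity) hsp.ne',
      Real.log_inv, Real.log_rpow hX', Real.log_rpow hA', Real.log_rpow hu',
      Real.log_rpow hs', hXlog]
    simp only [hF, hK, hc1]
    ring
  -- combine
  have hmain := hFd.congr_of_eventuallyEq hev
  refine hmain.congr_deriv (Eq.symm ?_)
  rw [(powerBurrInv6_hasDerivAt β τ γ η hβ hτ hγ hz).deriv]
  -- algebraic identity
  set X := powerBurrInv6 β τ γ η z with hXdef
  have hXeq : X = (τ * ((1 + z / β) ^ (1 / γ) - 1)) ^ (1 / η) := rfl
  have hXη : X ^ η = τ * ((1 + z / β) ^ (1 / γ) - 1) := by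
    rw [hXeq, ← Real.rpow_mul hs.le, one_div_mul_cancel hη.ne', Real.rpow_one]
  have hXη1 : X ^ (η + 1) = τ * ((1 + z / β) ^ (1 / γ) - 1) * X := by
    rw [Real.rpow_add hX, Real.rpow_one, hXη]
  have hsE : (τ * ((1 + z / β) ^ (1 / γ) - 1)) ^ (1 / η - 1)
      = X / (τ * ((1 + z / β) ^ (1 / γ) - 1)) := by
    rw [Real.rpow_sub hs, Real.rpow_one, ← hXeq]
  have huE : (1 + z / β) ^ (1 / γ - 1) = (1 + z / β) ^ (1 / γ) / (1 + z / β) := by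
    rw [Real.rpow_sub hu, Real.rpow_one]
  rw [hXη1, hXη, hsE, huE, hc1]
  exact alg_key α θ η γ β τ (1 + z / β) ((1 + z / β) ^ (1 / γ)) X hθ.ne' hη.ne' hγ.ne'
    hβ.ne' hτ.ne' hu.ne' hX.ne' (sub_ne_zero.mpr (ne_of_gt hv)) (zero_lt_one.trans hv).ne'
    (by positivity : (0:ℝ) < α + θ * X).ne'
end

section
/- Let α, θ, τ, γ, η > 0 with γ ≥ 1. Then there is at most one x > 0 satisfying η·(γx^η + τ)/(x^η + τ) = α·(1 − x)/(x + α/θ). Moreover, if additionally θ > η, then there is exactly one such x, and it lies in (0, 1). -/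
open Real

/-- If `γ ≥ 1`, there is at most one `x > 0` solving
`η(γx^η + τ)/(x^η + τ) = α(1 − x)/(x + α/θ)`; if moreover `θ > η`, there is exactly
one such `x` and it lies in `(0, 1)`. -/
theorem powerBurr6_critical_point (α θ τ γ η : ℝ)
    (hα : 0 < α) (hθ : 0 < θ) (hτ : 0 < τ) (hγ : 0 < γ) (hη : 0 < η) (hγ1 : 1 ≤ γ) :
    (∀ x y : ℝ, 0 < x → 0 < y →
        η * (γ * x ^ η + τ) / (x ^ η + τ) = α * (1 - x) / (x + α / θ) →
        η * (γ * y ^ η + τ) / (y ^ η + τ) = α * (1 - y) / (y + α / θ) →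
        x = y) ∧
    (η < θ → ∃! x : ℝ, 0 < x ∧ x < 1 ∧
        η * (γ * x ^ η + τ) / (x ^ η + τ) = α * (1 - x) / (x + α / θ)) := by
  have hc : 0 < α / θ := div_pos hα hθ
  -- monotonicity of LHS
  have hF : ∀ x y : ℝ, 0 ≤ x → x ≤ y →
      η * (γ * x ^ η + τ) / (x ^ η + τ) ≤ η * (γ * y ^ η + τ) / (y ^ η + τ) := by
    intro x y hx hxy
    have ha : (0:ℝ) ≤ x ^ η := Real.rpow_nonneg hx η
    have hab : x ^ η ≤ y ^ η := Real.rpow_le_rpow hx hxy hη.le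
    rw [div_le_div_iff₀ (by linarith) (by linarith)]
    nlinarith [mul_nonneg (mul_nonneg hτ.le (sub_nonneg.2 hab)) (sub_nonneg.2 hγ1)]
  -- strict antitonicity of RHS
  have hG : ∀ x y : ℝ, 0 ≤ x → x < y →
      α * (1 - y) / (y + α / θ) < α * (1 - x) / (x + α / θ) := by
    intro x y hx hxy
    rw [div_lt_div_iff₀ (by linarith) (by linarith)]
    nlinarith [mul_pos hα (sub_pos.2 hxy), mul_pos (mul_pos hα (sub_pos.2 hxy)) hc]
  have huniq : ∀ x y : ℝ, 0 < x → 0 < y →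
      η * (γ * x ^ η + τ) / (x ^ η + τ) = α * (1 - x) / (x + α / θ) →
      η * (γ * y ^ η + τ) / (y ^ η + τ) = α * (1 - y) / (y + α / θ) →
      x = y := by
    intro x y hx hy ex ey
    rcases lt_trichotomy x y with h | h | h
    · have := hF x y hx.le h.le
      have := hG x y hx.le h
      linarith [ex, ey]
    · exact h
    · have := hF y x hy.le h.le
      have := hG y x hy.le h
      linarith [ex, ey]
  refine ⟨huniq, fun hηθ => ?_⟩
  -- existence via IVT
  set f : ℝ → ℝ := fun x => η * (γ * x ^ η + τ) / (x ^ η + τ) - α * (1 - x) / (x + α / θ)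
    with hf
  have hpow : Continuous fun x : ℝ => x ^ η :=
    continuous_iff_continuousAt.2 fun x => Real.continuousAt_rpow_const x η (Or.inr hη.le)
  have hcont : ContinuousOn f (Set.Icc 0 1) := by
    apply ContinuousOn.sub
    · apply ContinuousOn.div
      · exact (continuous_const.mul ((continuous_const.mul hpow).add
          continuous_const)).continuousOn
      · exact (hpow.add continuous_const).continuousOn
      · intro x hx
        have := Real.rpow_nonneg hx.1 η
        positivity
    · apply ContinuousOn.div
      · exact (continuous_const.mul (continuous_const.sub continuous_id)).continuousOn
      · exact (continuous_id.add continuous_const).continuousOn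
      · intro x hx
        have := hx.1
        positivity
  have hf0 : f 0 = η - θ := by
    simp only [hf]
    rw [Real.zero_rpow hη.ne']
    field_simp
    ring
  have hf1 : f 1 = η * (γ + τ) / (1 + τ) := by
    simp only [hf]
    rw [Real.one_rpow]
    field_simp
    ring
  have h0 : f 0 < 0 := by rw [hf0]; linarith
  have h1 : 0 < f 1 := by rw [hf1]; positivity
  have hmem : (0:ℝ) ∈ Set.Ioo (f 0) (f 1) := ⟨h0, h1⟩
  obtain ⟨x, hx, hfx⟩ := intermediate_value_Ioo (by norm_num : (0:ℝ) ≤ 1) hcont hmem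
  refine ⟨x, ⟨hx.1, hx.2, by simp only [hf] at hfx; linarith⟩, ?_⟩
  rintro y ⟨hy0, hy1, hey⟩
  exact huniq y x hy0 hx.1 hey (by simp only [hf] at hfx; linarith)
end

section
/- Let α, θ, τ, γ > 0 and define the real quadratic P(x) = −(α + γ)x² + (α(1 − γ/θ) − τ(1 + α))·x + τ(θ − 1)·α/θ. Then P has at most one root in (0, ∞) if and only if θ ≥ 1 or α(1 − γ/θ) − τ(1 + α) ≤ 2·√(|1 − θ|·τ·(α + γ)·α/θ). -/
open Real

/-- The quadratic `P(x) = −(α+γ)x² + (α(1−γ/θ) − τ(1+α))x + τ(θ−1)α/θ` has at most one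
root in `(0,∞)` if and only if `θ ≥ 1` or
`α(1 − γ/θ) − τ(1 + α) ≤ 2√(|1 − θ|·τ·(α + γ)·α/θ)`. -/
theorem powerBurr5_quadratic_root_condition (α θ τ γ : ℝ)
    (hα : 0 < α) (hθ : 0 < θ) (hτ : 0 < τ) (hγ : 0 < γ) :
    {x : ℝ | 0 < x ∧
        -(α + γ) * x ^ 2 + (α * (1 - γ / θ) - τ * (1 + α)) * x
          + τ * (θ - 1) * α / θ = 0}.Subsingleton
      ↔ 1 ≤ θ ∨
        α * (1 - γ / θ) - τ * (1 + α)
          ≤ 2 * Real.sqrt (|1 - θ| * τ * (α + γ) * α / θ) := by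
  have hA : (0:ℝ) < α + γ := by linarith
  set b := α * (1 - γ / θ) - τ * (1 + α) with hbdef
  set s := Real.sqrt (|1 - θ| * τ * (α + γ) * α / θ) with hsdef
  have hs0 : 0 ≤ s := Real.sqrt_nonneg _
  have hs2 : s ^ 2 = |1 - θ| * τ * (α + γ) * α / θ :=
    Real.sq_sqrt (by positivity)
  clear_value b s
  constructor
  · intro hsub
    by_contra hcon
    push_neg at hcon
    obtain ⟨hθ1, hbs⟩ := hcon
    have h1θ : (0:ℝ) < 1 - θ := by linarith
    have habs : |1 - θ| = 1 - θ := abs_of_pos h1θ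
    have hs2' : s ^ 2 = (1 - θ) * τ * (α + γ) * α / θ := by rw [hs2, habs]
    have hKpos : 0 < (1 - θ) * τ * (α + γ) * α / θ := by positivity
    have hb0 : 0 < b := lt_of_le_of_lt (by positivity) hbs
    have hD : 0 < b ^ 2 - 4 * ((1 - θ) * τ * (α + γ) * α / θ) := by
      have h2 : 0 < (b - 2 * s) * (b + 2 * s) :=
        mul_pos (by linarith) (by linarith)
      nlinarith [hs2']
    set d := Real.sqrt (b ^ 2 - 4 * ((1 - θ) * τ * (α + γ) * α / θ)) with hddef
    have hd2 : d ^ 2 = b ^ 2 - 4 * ((1 - θ) * τ * (α + γ) * α / θ) :=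
      Real.sq_sqrt hD.le
    have hd0 : 0 < d := Real.sqrt_pos.mpr hD
    clear_value d
    have hdb : d < b := by
      have hlt2 : d ^ 2 < b ^ 2 := by rw [hd2]; linarith
      exact lt_of_pow_lt_pow_left₀ 2 hb0.le hlt2
    have hd2' : θ * d ^ 2 = θ * b ^ 2 - 4 * (1 - θ) * τ * (α + γ) * α := by
      rw [hd2]; field_simp
    have h1 : (b - d) / (2 * (α + γ)) ∈ {x : ℝ | 0 < x ∧
        -(α + γ) * x ^ 2 + b * x + τ * (θ - 1) * α / θ = 0} := by
      refine ⟨div_pos (by linarith) (by linarith), ?_⟩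
      have h1' : θ ≠ 0 := hθ.ne'
      have h2' : α + γ ≠ 0 := hA.ne'
      field_simp
      linear_combination (-1) * hd2'
    have h2 : (b + d) / (2 * (α + γ)) ∈ {x : ℝ | 0 < x ∧
        -(α + γ) * x ^ 2 + b * x + τ * (θ - 1) * α / θ = 0} := by
      refine ⟨div_pos (by linarith) (by linarith), ?_⟩
      have h1' : θ ≠ 0 := hθ.ne'
      have h2' : α + γ ≠ 0 := hA.ne'
      field_simp
      linear_combination (-1) * hd2'
    have hlt : (b - d) / (2 * (α + γ)) < (b + d) / (2 * (α + γ)) :=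
      (div_lt_div_iff_of_pos_right (by linarith)).mpr (by linarith)
    exact absurd (hsub h1 h2) (ne_of_lt hlt)
  · intro h x hx y hy
    by_contra hne
    obtain ⟨hx1, hx2⟩ := hx
    obtain ⟨hy1, hy2⟩ := hy
    have key : (x - y) * ((α + γ) * (x + y) - b) = 0 := by
      linear_combination hy2 - hx2
    have hAB : (α + γ) * (x + y) = b := by
      rcases mul_eq_zero.mp key with h' | h'
      · exact absurd (sub_eq_zero.mp h') hne
      · linarith
    have hc : τ * (θ - 1) * α / θ = -((α + γ) * (x * y)) := by
      linear_combination hx2 + x * hAB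
    have hxy : 0 < x * y := mul_pos hx1 hy1
    rcases le_or_gt 1 θ with hθ1 | hθ1
    · have hcpos : 0 ≤ τ * (θ - 1) * α / θ := by
        exact div_nonneg (mul_nonneg (mul_nonneg hτ.le (by linarith)) hα.le) hθ.le
      nlinarith [mul_pos hA hxy]
    · rcases h with h | h
      · linarith
      · have h1θ : (0:ℝ) < 1 - θ := by linarith
        have habs : |1 - θ| = 1 - θ := abs_of_pos h1θ
        have hs2' : s ^ 2 = (1 - θ) * τ * (α + γ) * α / θ := by rw [hs2, habs]
        have hbpos : 0 < b := by rw [← hAB]; positivity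
        have hsq : 0 < (x - y) ^ 2 :=
          lt_of_le_of_ne (sq_nonneg _) (Ne.symm (pow_ne_zero 2 (sub_ne_zero.mpr hne)))
        have hKA : s ^ 2 = (α + γ) ^ 2 * (x * y) := by
          rw [hs2']
          have heq : (1 - θ) * τ * (α + γ) * α / θ
              = -(τ * (θ - 1) * α / θ) * (α + γ) := by
            field_simp; ring
          rw [heq, hc]; ring
        have hb2 : b ^ 2 = (α + γ) ^ 2 * (x + y) ^ 2 := by rw [← hAB]; ring
        nlinarith [hKA, hb2, mul_le_mul h h hbpos.le (by linarith : (0:ℝ) ≤ 2 * s),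
          mul_pos (mul_pos hA hA) hsq]
end

section
/- Let α > 0 be fixed and let (θ_n) be a sequence of positive reals with θ_n → ∞. Let X_n and Y be random variables on a probability space such that, for every n, X_n and Y are independent, X_n is Gamma(θ_n, θ_n)-distributed and Y is Gamma(α, α)-distributed. Then the laws of X_n/Y converge weakly to the law of 1/Y, i.e., to the pushforward of the Gamma(α, α) distribution under x ↦ 1/x (the inverse-Gamma distribution); i.e., the Burr(α,θ) distribution converges in distribution to the inverse Gamma as θ → ∞. -/
open MeasureTheory ProbabilityTheory Filter
open scoped BoundedContinuousFunction

section BurrAux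

open Real Set
open scoped ENNReal Topology

private lemma burr_integrableOn_pow_exp {s r : ℝ} (hs : 0 < s) (hr : 0 < r) :
    IntegrableOn (fun x : ℝ => x ^ (s - 1) * Real.exp (-(r * x))) (Ioi 0) := by
  have h := integrableOn_rpow_mul_exp_neg_mul_rpow (s := s - 1) (p := 1) (b := r)
    (by linarith) one_pos hr
  refine h.congr_fun (fun x hx => ?_) measurableSet_Ioi
  beta_reduce
  rw [Real.rpow_one, neg_mul]

private lemma burr_moment_nat {s : ℝ} (hs : 0 < s) (j : ℕ) :
    ∫ x in Ioi (0:ℝ), (x : ℝ) ^ j * (x ^ (s - 1) * Real.exp (-(s * x))) =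
      (1 / s) ^ (s + j) * Real.Gamma (s + j) := by
  have hsj : (0:ℝ) < s + j := by positivity
  rw [← integral_rpow_mul_exp_neg_mul_Ioi hsj hs]
  refine setIntegral_congr_fun measurableSet_Ioi (fun x hx => ?_)
  have hx0 : (0:ℝ) < x := hx
  rw [← mul_assoc, ← Real.rpow_natCast x j, ← Real.rpow_add hx0,
    show (j:ℝ) + (s - 1) = s + j - 1 by ring]

private lemma burr_integrableOn_moment {s : ℝ} (hs : 0 < s) (j : ℕ) :
    IntegrableOn (fun x : ℝ => x ^ j * (x ^ (s - 1) * Real.exp (-(s * x)))) (Ioi 0) := by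
  have hsj : (0:ℝ) < s + j := by positivity
  refine (burr_integrableOn_pow_exp hsj hs).congr_fun (fun x hx => ?_) measurableSet_Ioi
  have hx0 : (0:ℝ) < x := hx
  beta_reduce
  rw [show s + (j:ℝ) - 1 = (j:ℝ) + (s - 1) by ring, Real.rpow_add hx0, Real.rpow_natCast,
    mul_assoc]

private lemma burr_key_expand {s : ℝ} :
    ∀ x ∈ Ioi (0:ℝ), (x - 1) ^ 2 * gammaPDFReal s s x =
      (s ^ s / Real.Gamma s) *
        (x ^ 2 * (x ^ (s - 1) * Real.exp (-(s * x)))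
          - 2 * (x ^ 1 * (x ^ (s - 1) * Real.exp (-(s * x))))
          + x ^ 0 * (x ^ (s - 1) * Real.exp (-(s * x)))) := by
  intro x hx
  have hx0 : (0:ℝ) ≤ x := le_of_lt hx
  simp only [gammaPDFReal, if_pos hx0]
  ring

private lemma burr_sq_integral {s : ℝ} (hs : 0 < s) :
    ∫ x in Ioi (0:ℝ), (x - 1) ^ 2 * gammaPDFReal s s x = 1 / s := by
  have hG : 0 < Real.Gamma s := Real.Gamma_pos_of_pos hs
  have hi2 := burr_integrableOn_moment hs 2
  have hi1 : IntegrableOn (fun x : ℝ => 2 * (x ^ 1 * (x ^ (s - 1) * Real.exp (-(s * x)))))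
      (Ioi 0) := (burr_integrableOn_moment hs 1).const_mul 2
  have hi0 := burr_integrableOn_moment hs 0
  have hisub : IntegrableOn (fun x : ℝ => x ^ 2 * (x ^ (s - 1) * Real.exp (-(s * x)))
      - 2 * (x ^ 1 * (x ^ (s - 1) * Real.exp (-(s * x))))) (Ioi 0) := hi2.sub hi1
  rw [setIntegral_congr_fun measurableSet_Ioi burr_key_expand, integral_const_mul,
    integral_add hisub hi0, integral_sub hi2 hi1,
    integral_const_mul, burr_moment_nat hs 2, burr_moment_nat hs 1, burr_moment_nat hs 0]
  have h1 : Real.Gamma (s + 1) = s * Real.Gamma s := Real.Gamma_add_one hs.ne'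
  have h2 : Real.Gamma (s + 2) = (s + 1) * (s * Real.Gamma s) := by
    rw [show s + 2 = (s + 1) + 1 by ring, Real.Gamma_add_one (by positivity), h1]
  have hs' : (0:ℝ) < 1 / s := by positivity
  have e2 : (1 / s : ℝ) ^ (s + 2 : ℝ) = (1 / s) ^ (s : ℝ) * ((1/s) * (1/s)) := by
    rw [Real.rpow_add hs', show (2:ℝ) = ((2:ℕ):ℝ) by norm_num, Real.rpow_natCast]
    ring
  have e1 : (1 / s : ℝ) ^ (s + 1 : ℝ) = (1 / s) ^ (s : ℝ) * (1/s) := by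
    rw [Real.rpow_add hs', Real.rpow_one]
  have hPP : s ^ (s:ℝ) * (1 / s) ^ (s:ℝ) = 1 := by
    rw [← Real.mul_rpow hs.le hs'.le, mul_one_div, div_self hs.ne', Real.one_rpow]
  push_cast
  rw [add_zero, h1, h2, e2, e1]
  have expand : s ^ (s:ℝ) / Real.Gamma s *
      ((1 / s) ^ (s:ℝ) * ((1/s) * (1/s)) * ((s + 1) * (s * Real.Gamma s))
        - 2 * ((1 / s) ^ (s:ℝ) * (1/s) * (s * Real.Gamma s))
        + (1 / s) ^ (s:ℝ) * Real.Gamma s) =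
      (s ^ (s:ℝ) * (1 / s) ^ (s:ℝ)) * (Real.Gamma s / Real.Gamma s) *
        ((1/s) * (1/s) * ((s + 1) * s) - 2 * ((1/s) * s) + 1) := by ring
  rw [expand, hPP, div_self hG.ne', one_mul, one_mul]
  have hs0 : s ≠ 0 := hs.ne'
  field_simp
  ring

private lemma burr_sq_integrableOn {s : ℝ} (hs : 0 < s) :
    IntegrableOn (fun x : ℝ => (x - 1) ^ 2 * gammaPDFReal s s x) (Ioi 0) := by
  have h := ((((burr_integrableOn_moment hs 2).sub
      ((burr_integrableOn_moment hs 1).const_mul 2)).add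
      (burr_integrableOn_moment hs 0)).const_mul (s ^ s / Real.Gamma s))
  exact IntegrableOn.congr_fun h (fun x hx => (burr_key_expand x hx).symm) measurableSet_Ioi

private lemma burr_lintegral_sq {s : ℝ} (hs : 0 < s) :
    ∫⁻ x, ENNReal.ofReal ((x - 1) ^ 2) ∂(gammaMeasure s s) = ENNReal.ofReal (1 / s) := by
  have hpdf : Measurable (gammaPDF s s) := (measurable_gammaPDFReal s s).ennreal_ofReal
  have hg : Measurable fun x : ℝ => ENNReal.ofReal ((x - 1) ^ 2) :=
    ((measurable_id'.sub measurable_const).pow_const 2).ennreal_ofReal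
  rw [gammaMeasure, lintegral_withDensity_eq_lintegral_mul _ hpdf hg]
  simp only [Pi.mul_apply]
  rw [← lintegral_add_compl (μ := volume)
    (fun x => gammaPDF s s x * ENNReal.ofReal ((x - 1) ^ 2)) measurableSet_Ici, compl_Ici]
  have h2 : ∫⁻ x in Iio (0:ℝ), gammaPDF s s x * ENNReal.ofReal ((x - 1) ^ 2) = 0 := by
    rw [setLIntegral_congr_fun (g := fun _ => 0) measurableSet_Iio
      (fun x (hx : x < 0) => by rw [gammaPDF_of_neg hx, zero_mul]), lintegral_zero]
  have h1 : ∫⁻ x in Ici (0:ℝ), gammaPDF s s x * ENNReal.ofReal ((x - 1) ^ 2)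
      = ∫⁻ x in Ici (0:ℝ), ENNReal.ofReal ((x - 1) ^ 2 * gammaPDFReal s s x) := by
    refine setLIntegral_congr_fun measurableSet_Ici (fun x hx => ?_)
    rw [show gammaPDF s s x = ENNReal.ofReal (gammaPDFReal s s x) from rfl,
      ← ENNReal.ofReal_mul (gammaPDFReal_nonneg hs hs x), mul_comm]
  rw [h1, h2, add_zero]
  have hInt : IntegrableOn (fun x : ℝ => (x - 1) ^ 2 * gammaPDFReal s s x) (Ici 0) :=
    Iff.mpr integrableOn_Ici_iff_integrableOn_Ioi (burr_sq_integrableOn hs)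
  rw [← ofReal_integral_eq_lintegral_ofReal hInt
    (ae_of_all _ fun x => mul_nonneg (sq_nonneg _) (gammaPDFReal_nonneg hs hs x)),
    integral_Ici_eq_integral_Ioi, burr_sq_integral hs]

private lemma burr_cheb {s δ : ℝ} (hs : 0 < s) (hδ : 0 < δ) :
    (gammaMeasure s s) {x | δ ≤ |x - 1|} ≤ ENNReal.ofReal (1 / (s * δ ^ 2)) := by
  have hmono := mul_meas_ge_le_lintegral₀ (μ := gammaMeasure s s)
    (f := fun x => ENNReal.ofReal ((x - 1) ^ 2))
    ((((measurable_id'.sub measurable_const).pow_const 2).ennreal_ofReal).aemeasurable)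
    (ENNReal.ofReal (δ ^ 2))
  rw [burr_lintegral_sq hs] at hmono
  have hset : {x : ℝ | ENNReal.ofReal (δ ^ 2) ≤ ENNReal.ofReal ((x - 1) ^ 2)}
      = {x | δ ≤ |x - 1|} := by
    ext x
    simp only [Set.mem_setOf_eq, ENNReal.ofReal_le_ofReal_iff (sq_nonneg _)]
    constructor
    · intro h
      rw [← sq_abs (x - 1)] at h
      exact le_of_sq_le_sq h (abs_nonneg _)
    · intro h
      calc δ ^ 2 ≤ |x - 1| ^ 2 := pow_le_pow_left₀ hδ.le h 2
        _ = (x - 1) ^ 2 := sq_abs _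
  rw [hset] at hmono
  have hne0 : ENNReal.ofReal (δ ^ 2) ≠ 0 := by
    simp only [ne_eq, ENNReal.ofReal_eq_zero, not_le]
    positivity
  have h2 : (gammaMeasure s s) {x | δ ≤ |x - 1|}
      ≤ ENNReal.ofReal (1 / s) / ENNReal.ofReal (δ ^ 2) :=
    (ENNReal.le_div_iff_mul_le (Or.inl hne0) (Or.inl ENNReal.ofReal_ne_top)).mpr
      (by rwa [mul_comm] at hmono)
  refine h2.trans_eq ?_
  rw [← ENNReal.ofReal_div_of_pos (by positivity), div_div]

private lemma burr_cheb' {s δ : ℝ} (hs : 0 < s) (hδ : 0 < δ) :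
    ((gammaMeasure s s) {x | δ ≤ |x - 1|}).toReal ≤ 1 / (s * δ ^ 2) :=
  ENNReal.toReal_le_of_le_ofReal (by positivity) (burr_cheb hs hδ)

private lemma burr_tendsto_gamma_integral (t : ℕ → ℝ) (ht : ∀ n, 0 < t n)
    (httop : Tendsto t atTop atTop) (g : ℝ →ᵇ ℝ) :
    Tendsto (fun n => ∫ x, g x ∂(gammaMeasure (t n) (t n))) atTop (𝓝 (g 1)) := by
  rw [Metric.tendsto_atTop]
  intro ε hε
  obtain ⟨δ, hδ, hδg⟩ := Metric.continuousAt_iff.mp (g.continuous.continuousAt (x := 1))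
    (ε / 2) (by linarith)
  set M := 8 * (2 * ‖g‖ + 1) / (ε * δ ^ 2) with hM
  obtain ⟨N, hN⟩ := eventually_atTop.mp (httop.eventually_ge_atTop (max 1 M))
  refine ⟨N, fun n hn => ?_⟩
  have htn := hN n hn
  have htn1 : (1:ℝ) ≤ t n := le_trans (le_max_left _ _) htn
  have htnM : M ≤ t n := le_trans (le_max_right _ _) htn
  haveI : IsProbabilityMeasure (gammaMeasure (t n) (t n)) :=
    isProbabilityMeasure_gammaMeasure (ht n) (ht n)
  set μ := gammaMeasure (t n) (t n) with hμ
  set S : Set ℝ := {x | δ ≤ |x - 1|} with hS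
  have hSm : MeasurableSet S :=
    measurableSet_le measurable_const ((measurable_id'.sub measurable_const).abs)
  have hgi : Integrable (⇑g) μ := g.integrable μ
  have hbound_int : Integrable (fun x => ε / 2 + (2 * ‖g‖) * S.indicator (fun _ => (1:ℝ)) x) μ :=
    (integrable_const _).add (((integrable_const (1:ℝ)).indicator hSm).const_mul _)
  have hpt : ∀ x, |g x - g 1| ≤ ε / 2 + (2 * ‖g‖) * S.indicator (fun _ => (1:ℝ)) x := by
    intro x
    by_cases hx : x ∈ S
    · rw [Set.indicator_of_mem hx]
      have h1 : |g x - g 1| ≤ ‖g x‖ + ‖g 1‖ := by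
        rw [← Real.norm_eq_abs]; exact norm_sub_le _ _
      have h2 := g.norm_coe_le_norm x
      have h3 := g.norm_coe_le_norm 1
      linarith
    · rw [Set.indicator_of_notMem hx, mul_zero, add_zero]
      have hxd : dist x 1 < δ := by
        simp only [hS, Set.mem_setOf_eq, not_le] at hx
        rwa [Real.dist_eq]
      have := hδg hxd
      rw [Real.dist_eq] at this
      linarith
  have hsub : Integrable (fun x => |g x - g 1|) μ := (hgi.sub (integrable_const _)).abs
  have h2 : ∫ x, |g x - g 1| ∂μ ≤ ε / 2 + (2 * ‖g‖) * (μ S).toReal := by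
    calc ∫ x, |g x - g 1| ∂μ
        ≤ ∫ x, (ε / 2 + (2 * ‖g‖) * S.indicator (fun _ => (1:ℝ)) x) ∂μ :=
          integral_mono hsub hbound_int hpt
      _ = ε / 2 + (2 * ‖g‖) * (μ S).toReal := by
          rw [integral_add (integrable_const _)
            (((integrable_const (1:ℝ)).indicator hSm).const_mul _),
            integral_const, integral_const_mul, integral_indicator_const _ hSm]
          simp [measure_univ, Measure.real]
  have h3 : (μ S).toReal ≤ 1 / (t n * δ ^ 2) := burr_cheb' (ht n) hδ
  have h4 : dist (∫ x, g x ∂μ) (g 1) ≤ ∫ x, |g x - g 1| ∂μ := by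
    rw [Real.dist_eq]
    have heq : ∫ x, g x ∂μ - g 1 = ∫ x, (g x - g 1) ∂μ := by
      rw [integral_sub hgi (integrable_const _), integral_const]
      simp [measure_univ]
    rw [heq]
    have hni := norm_integral_le_integral_norm (μ := μ) (fun x => g x - g 1)
    simpa [Real.norm_eq_abs] using hni
  have h5 : (2 * ‖g‖) * (1 / (t n * δ ^ 2)) ≤ ε / 4 := by
    have hg0 : (0:ℝ) ≤ ‖g‖ := norm_nonneg _
    have htn0 : (0:ℝ) < t n := ht n
    rw [mul_one_div, div_le_div_iff₀ (by positivity) (by norm_num)]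
    have e1 : ε * (M * δ ^ 2) = 8 * (2 * ‖g‖ + 1) := by
      rw [hM]; field_simp
    have e2 : ε * (M * δ ^ 2) ≤ ε * (t n * δ ^ 2) :=
      mul_le_mul_of_nonneg_left (mul_le_mul_of_nonneg_right htnM (sq_nonneg δ)) hε.le
    nlinarith
  have h6 : (2 * ‖g‖) * (μ S).toReal ≤ (2 * ‖g‖) * (1 / (t n * δ ^ 2)) :=
    mul_le_mul_of_nonneg_left h3 (by positivity)
  calc dist (∫ x, g x ∂μ) (g 1) ≤ ∫ x, |g x - g 1| ∂μ := h4
    _ ≤ ε / 2 + (2 * ‖g‖) * (μ S).toReal := h2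
    _ ≤ ε / 2 + ε / 4 := by linarith
    _ < ε := by linarith

private lemma burr_gamma_ae_pos {a r : ℝ} : ∀ᵐ y ∂(gammaMeasure a r), 0 < y := by
  rw [ae_iff]
  have hset : {y : ℝ | ¬ 0 < y} = Iic 0 := by ext y; simp
  rw [hset, gammaMeasure, withDensity_apply _ measurableSet_Iic,
    lintegral_Iic_eq_lintegral_Iio_add_Icc _ le_rfl, lintegral_gammaPDF_of_nonpos le_rfl,
    Icc_self, setLIntegral_measure_zero _ _ (measure_singleton 0), zero_add]

end BurrAux

open scoped Topology

/-- The Burr(α,θ) distribution converges weakly to the inverse Gamma as `θ → ∞`: if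
`X_n ~ Gamma(θ_n,θ_n)` and `Y ~ Gamma(α,α)` are independent with `θ_n → ∞`, then the
laws of `X_n / Y` converge weakly to the pushforward of `Gamma(α,α)` under `x ↦ x⁻¹`. -/
theorem burr_tendsto_invGamma {Ω : Type*} [MeasurableSpace Ω]
    (P : Measure Ω) [IsProbabilityMeasure P]
    (α : ℝ) (hα : 0 < α) (t : ℕ → ℝ) (ht : ∀ n, 0 < t n) (httop : Tendsto t atTop atTop)
    (X : ℕ → Ω → ℝ) (Y : Ω → ℝ) (hXm : ∀ n, Measurable (X n)) (hYm : Measurable Y)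
    (hX : ∀ n, Measure.map (X n) P = gammaMeasure (t n) (t n))
    (hY : Measure.map Y P = gammaMeasure α α)
    (hindep : ∀ n, IndepFun (X n) Y P) :
    ∀ f : ℝ →ᵇ ℝ,
      Tendsto (fun n => ∫ x, f x ∂(Measure.map (fun ω => X n ω / Y ω) P)) atTop
        (nhds (∫ x, f x ∂(Measure.map (fun x : ℝ => x⁻¹) (gammaMeasure α α)))) := by
  intro f
  haveI hPα : IsProbabilityMeasure (gammaMeasure α α) := isProbabilityMeasure_gammaMeasure hα hα
  have hmeas_h : Measurable (fun p : ℝ × ℝ => (f : ℝ → ℝ) (p.1 / p.2)) :=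
    f.continuous.measurable.comp (measurable_fst.div measurable_snd)
  have hrw : ∀ n, ∫ x, f x ∂(Measure.map (fun ω => X n ω / Y ω) P)
      = ∫ y, ∫ x, (f : ℝ → ℝ) (x / y) ∂(gammaMeasure (t n) (t n)) ∂(gammaMeasure α α) := by
    intro n
    haveI : IsProbabilityMeasure (gammaMeasure (t n) (t n)) :=
      isProbabilityMeasure_gammaMeasure (ht n) (ht n)
    have hlaw : Measure.map (fun ω => (X n ω, Y ω)) P
        = (gammaMeasure (t n) (t n)).prod (gammaMeasure α α) := by
      rw [← hX n, ← hY]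
      exact (indepFun_iff_map_prod_eq_prod_map_map (hXm n).aemeasurable
        hYm.aemeasurable).mp (hindep n)
    have hint : Integrable (fun p : ℝ × ℝ => (f : ℝ → ℝ) (p.1 / p.2))
        ((gammaMeasure (t n) (t n)).prod (gammaMeasure α α)) :=
      (integrable_const ‖f‖).mono' hmeas_h.aestronglyMeasurable
        (Filter.Eventually.of_forall fun p => f.norm_coe_le_norm _)
    calc ∫ x, f x ∂(Measure.map (fun ω => X n ω / Y ω) P)
        = ∫ ω, (f : ℝ → ℝ) (X n ω / Y ω) ∂P :=
          integral_map ((hXm n).div hYm).aemeasurable f.continuous.aestronglyMeasurable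
      _ = ∫ p : ℝ × ℝ, (f : ℝ → ℝ) (p.1 / p.2) ∂(Measure.map (fun ω => (X n ω, Y ω)) P) :=
          (integral_map ((hXm n).prodMk hYm).aemeasurable
            hmeas_h.aestronglyMeasurable).symm
      _ = ∫ p : ℝ × ℝ, (f : ℝ → ℝ) (p.1 / p.2)
            ∂((gammaMeasure (t n) (t n)).prod (gammaMeasure α α)) := by rw [hlaw]
      _ = ∫ y, ∫ x, (f : ℝ → ℝ) (x / y) ∂(gammaMeasure (t n) (t n)) ∂(gammaMeasure α α) :=
          integral_prod_symm _ hint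
  have hRHS : ∫ x, f x ∂(Measure.map (fun x : ℝ => x⁻¹) (gammaMeasure α α))
      = ∫ y, (f : ℝ → ℝ) y⁻¹ ∂(gammaMeasure α α) :=
    integral_map measurable_inv.aemeasurable f.continuous.aestronglyMeasurable
  simp only [hrw, hRHS]
  refine tendsto_integral_of_dominated_convergence (fun _ => ‖f‖) ?_ (integrable_const _) ?_ ?_
  · intro n
    haveI : IsProbabilityMeasure (gammaMeasure (t n) (t n)) :=
      isProbabilityMeasure_gammaMeasure (ht n) (ht n)
    exact (hmeas_h.stronglyMeasurable.integral_prod_left').aestronglyMeasurable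
  · intro n
    haveI : IsProbabilityMeasure (gammaMeasure (t n) (t n)) :=
      isProbabilityMeasure_gammaMeasure (ht n) (ht n)
    refine Filter.Eventually.of_forall fun y => ?_
    calc ‖∫ x, (f : ℝ → ℝ) (x / y) ∂(gammaMeasure (t n) (t n))‖
        ≤ ‖f‖ * ((gammaMeasure (t n) (t n)) Set.univ).toReal :=
          norm_integral_le_of_norm_le_const
            (Filter.Eventually.of_forall fun x => f.norm_coe_le_norm _)
      _ = ‖f‖ := by simp [measure_univ]
  · filter_upwards [burr_gamma_ae_pos (a := α) (r := α)] with y hy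
    have hgc : Continuous (fun x : ℝ => x / y) := continuous_id.div_const y
    have h := burr_tendsto_gamma_integral t ht httop (f.compContinuous ⟨fun x => x / y, hgc⟩)
    simpa [BoundedContinuousFunction.coe_compContinuous, Function.comp, one_div] using h
end

section
/- Let (θ_n) be a sequence of positive reals with θ_n → ∞. Then the pushforward of the Gamma(θ_n, θ_n) distribution under the map x ↦ √θ_n · (x − 1) converges weakly to the standard Gaussian distribution N(0, 1); i.e., if G_θ is Gamma(θ, θ)-distributed then √θ·(G_θ − 1) converges in distribution to N(0,1) as θ → ∞. -/
open MeasureTheory ProbabilityTheory Filter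
open scoped BoundedContinuousFunction
open Real Set
open scoped Topology ENNReal NNReal

noncomputable def hh (θ y : ℝ) : ℝ :=
  if 0 ≤ 1 + y / Real.sqrt θ then
    (1 + y / Real.sqrt θ) ^ (θ - 1) * Real.exp (-(Real.sqrt θ * y)) else 0

noncomputable def gbound (y : ℝ) : ℝ :=
  Real.exp (-(y ^ 2 / (4 * (1 + |y|)))) + Real.exp (|y| - y ^ 2 / 4)

lemma hh_nonneg (θ y : ℝ) : 0 ≤ hh θ y := by
  rw [hh]
  split_ifs with h
  · exact mul_nonneg (Real.rpow_nonneg (by linarith) _) (Real.exp_pos _).le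
  · exact le_refl 0

lemma measurable_hh (θ : ℝ) : Measurable (hh θ) := by
  apply Measurable.ite
  · exact measurableSet_le measurable_const
      ((measurable_id.div_const _).const_add 1)
  · exact (((measurable_id.div_const _).const_add 1).pow_const _).mul
      ((measurable_id.const_mul _).neg.exp)
  · exact measurable_const

lemma integral_wd (ρ : ℝ → ℝ) (hρ : Measurable ρ) (h0 : ∀ x, 0 ≤ ρ x) (f : ℝ → ℝ) :
    ∫ x, f x ∂(volume.withDensity fun x => ENNReal.ofReal (ρ x)) = ∫ x, ρ x * f x := by
  have h : (fun x => ENNReal.ofReal (ρ x)) = fun x => ((ρ x).toNNReal : ℝ≥0∞) := rfl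
  rw [h, integral_withDensity_eq_integral_smul hρ.real_toNNReal]
  refine integral_congr_ae (Filter.Eventually.of_forall fun x => ?_)
  simp [NNReal.smul_def, Real.coe_toNNReal _ (h0 x)]

lemma pdf_eq (θ : ℝ) (hθ : 0 < θ) (y : ℝ) :
    gammaPDFReal θ θ (1 + y / Real.sqrt θ) =
      θ ^ θ * Real.exp (-θ) / Real.Gamma θ * hh θ y := by
  have hs : (0:ℝ) < Real.sqrt θ := Real.sqrt_pos.mpr hθ
  have h2 : Real.sqrt θ * Real.sqrt θ = θ := Real.mul_self_sqrt hθ.le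
  rw [gammaPDFReal, hh]
  split_ifs with hcond
  · have h3 : θ * (1 + y / Real.sqrt θ) = θ + Real.sqrt θ * y := by
      have hy2 : θ * (y / Real.sqrt θ) = Real.sqrt θ * y := by
        rw [mul_div_assoc', div_eq_iff hs.ne']
        linear_combination -y * h2
      calc θ * (1 + y / Real.sqrt θ) = θ + θ * (y / Real.sqrt θ) := by ring
        _ = θ + Real.sqrt θ * y := by rw [hy2]
    rw [h3, show -(θ + Real.sqrt θ * y) = -θ + -(Real.sqrt θ * y) by ring, Real.exp_add]
    ring
  · rw [mul_zero]

lemma sqrt_tendsto_atTop : Tendsto Real.sqrt atTop atTop := by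
  refine tendsto_atTop_atTop.mpr fun b => ⟨max 0 b ^ 2, fun a ha => ?_⟩
  have h1 : max 0 b ≤ Real.sqrt a := by
    rw [show max 0 b = Real.sqrt (max 0 b ^ 2) from (Real.sqrt_sq (le_max_left 0 b)).symm]
    exact Real.sqrt_le_sqrt ha
  exact le_trans (le_max_right 0 b) h1

lemma limA (y : ℝ) :
    Tendsto (fun s : ℝ => (s ^ 2 - 1) * Real.log (1 + y / s) - s * y) atTop
      (𝓝 (-(y ^ 2 / 2))) := by
  have t1 : Tendsto (fun s : ℝ => y / s) atTop (𝓝 0) :=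
    tendsto_const_nhds.div_atTop tendsto_id
  have t2 : Tendsto (fun s : ℝ => y ^ 2 / (2 * s ^ 2)) atTop (𝓝 0) :=
    tendsto_const_nhds.div_atTop ((tendsto_pow_atTop two_ne_zero).const_mul_atTop two_pos)
  have hg2 : Tendsto (fun s : ℝ => -(y ^ 2 / 2) - y / s + y ^ 2 / (2 * s ^ 2)) atTop
      (𝓝 (-(y ^ 2 / 2))) := by
    have := (tendsto_const_nhds (x := -(y ^ 2 / 2)) (f := atTop (α := ℝ))).sub t1 |>.add t2
    simpa using this
  have hg1 : Tendsto
      (fun s : ℝ => (s ^ 2 - 1) * (Real.log (1 + y / s) - (y / s - y ^ 2 / (2 * s ^ 2))))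
      atTop (𝓝 0) := by
    have hz : Tendsto (fun s : ℝ => 2 * |y| ^ 3 / s) atTop (𝓝 0) :=
      tendsto_const_nhds.div_atTop tendsto_id
    apply squeeze_zero_norm' ?_ hz
    filter_upwards [eventually_ge_atTop (1 : ℝ), eventually_gt_atTop (2 * |y|)] with s hs1 hs2
    have hs0 : (0:ℝ) < s := by linarith
    have hys : |y / s| < 1 / 2 := by
      rw [abs_div, abs_of_pos hs0, div_lt_iff₀ hs0]
      linarith
    have hb := Real.abs_log_sub_add_sum_range_le (x := -(y / s)) (by rw [abs_neg]; linarith) 2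
    have hsum : (∑ i ∈ Finset.range 2, (-(y / s)) ^ (i + 1) / (i + 1)) + Real.log (1 - -(y / s))
        = Real.log (1 + y / s) - (y / s - y ^ 2 / (2 * s ^ 2)) := by
      rw [Finset.sum_range_succ, Finset.sum_range_succ, Finset.sum_range_zero]
      rw [sub_neg_eq_add]
      have : (-(y / s)) ^ (0 + 1) / ((0 : ℕ) + 1) + (-(y / s)) ^ (1 + 1) / ((1 : ℕ) + 1)
          = -(y / s - y ^ 2 / (2 * s ^ 2)) := by
        push_cast
        field_simp
        ring
      rw [zero_add, this]
      ring
    rw [hsum, abs_neg] at hb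
    have hyabs : |y / s| = |y| / s := by rw [abs_div, abs_of_pos hs0]
    have hb2 : |Real.log (1 + y / s) - (y / s - y ^ 2 / (2 * s ^ 2))| ≤ 2 * |y| ^ 3 / s ^ 3 := by
      refine hb.trans ?_
      rw [hyabs]
      have hd : (1:ℝ)/2 ≤ 1 - |y| / s := by rw [hyabs] at hys; linarith
      have hnum : (|y| / s) ^ 3 = |y| ^ 3 / s ^ 3 := by rw [div_pow]
      rw [hnum, div_le_iff₀ (by linarith : (0:ℝ) < 1 - |y| / s)]
      calc |y| ^ 3 / s ^ 3 = 2 * (|y| ^ 3 / s ^ 3) * (1 / 2) := by ring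
        _ ≤ 2 * (|y| ^ 3 / s ^ 3) * (1 - |y| / s) :=
            mul_le_mul_of_nonneg_left hd (by positivity)
        _ = 2 * |y| ^ 3 / s ^ 3 * (1 - |y| / s) := by ring
    rw [Real.norm_eq_abs, abs_mul]
    calc |s ^ 2 - 1| * |Real.log (1 + y / s) - (y / s - y ^ 2 / (2 * s ^ 2))|
        ≤ s ^ 2 * (2 * |y| ^ 3 / s ^ 3) := by
          apply mul_le_mul _ hb2 (abs_nonneg _) (by positivity)
          rw [abs_of_nonneg (by nlinarith : (0:ℝ) ≤ s ^ 2 - 1)]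
          nlinarith
      _ = 2 * |y| ^ 3 / s := by field_simp
  have hsum := hg1.add hg2
  rw [zero_add] at hsum
  apply hsum.congr'
  filter_upwards [eventually_gt_atTop (0:ℝ)] with s hs
  field_simp
  ring

lemma hh_tendsto (t : ℕ → ℝ) (ht : ∀ n, 0 < t n) (httop : Tendsto t atTop atTop) (y : ℝ) :
    Tendsto (fun n => hh (t n) y) atTop (𝓝 (Real.exp (-(y ^ 2 / 2)))) := by
  have hsqrt : Tendsto (fun n => Real.sqrt (t n)) atTop atTop :=
    sqrt_tendsto_atTop.comp httop
  have hE : Tendsto (fun n => (Real.sqrt (t n) ^ 2 - 1) * Real.log (1 + y / Real.sqrt (t n))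
      - Real.sqrt (t n) * y) atTop (𝓝 (-(y ^ 2 / 2))) := (limA y).comp hsqrt
  have hexp := (Real.continuous_exp.tendsto _).comp hE
  apply hexp.congr'
  filter_upwards [hsqrt.eventually_gt_atTop |y|] with n hn
  have hs0 : 0 < Real.sqrt (t n) := lt_of_le_of_lt (abs_nonneg y) hn
  have hpos : 0 < 1 + y / Real.sqrt (t n) := by
    have h1 : |y / Real.sqrt (t n)| < 1 := by
      rw [abs_div, abs_of_pos hs0, div_lt_one hs0]; exact hn
    have := (abs_lt.mp h1).1
    linarith
  show Real.exp _ = hh (t n) y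
  rw [hh, if_pos hpos.le, Real.rpow_def_of_pos hpos, ← Real.exp_add]
  congr 1
  show (Real.sqrt (t n) ^ 2 - 1) * Real.log (1 + y / Real.sqrt (t n))
      - Real.sqrt (t n) * y = _
  rw [Real.sq_sqrt (ht n).le]
  ring

lemma log_le_I1 {u : ℝ} (hu : 0 ≤ u) : Real.log (1 + u) ≤ u - u ^ 2 / (2 * (1 + u)) := by
  set ψ : ℝ → ℝ := fun t => t - t ^ 2 / (2 * (1 + t)) - Real.log (1 + t) with hψ
  have hmono : MonotoneOn ψ (Icc 0 u) := by
    have hderiv : ∀ t : ℝ, 0 < 1 + t → HasDerivAt ψ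
        (1 - (2 * t ^ 1 * (2 * (1 + t)) - t ^ 2 * (2 * 1)) / (2 * (1 + t)) ^ 2 - 1 / (1 + t)) t := by
      intro t h1t
      have hlog : HasDerivAt (fun t : ℝ => Real.log (1 + t)) (1 / (1 + t)) t := by
        simpa using (((hasDerivAt_id t).const_add 1).log h1t.ne')
      have hdiv : HasDerivAt (fun t : ℝ => t ^ 2 / (2 * (1 + t)))
          ((2 * t ^ 1 * (2 * (1 + t)) - t ^ 2 * (2 * 1)) / (2 * (1 + t)) ^ 2) t := by
        exact (hasDerivAt_pow 2 t).div (((hasDerivAt_id t).const_add 1).const_mul 2)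
          (by positivity)
      exact ((hasDerivAt_id t).sub hdiv).sub hlog
    apply monotoneOn_of_deriv_nonneg (convex_Icc 0 u)
    · intro t htmem
      have h1t : 0 < 1 + t := by have := htmem.1; linarith
      exact (hderiv t h1t).continuousAt.continuousWithinAt
    · intro t htmem
      rw [interior_Icc] at htmem
      have h1t : (0:ℝ) < 1 + t := by have := htmem.1; linarith
      exact (hderiv t h1t).differentiableAt.differentiableWithinAt
    · intro t htmem
      rw [interior_Icc] at htmem
      have h1t : (0:ℝ) < 1 + t := by have := htmem.1; linarith
      rw [(hderiv t h1t).deriv]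
      have key : 1 - (2 * t ^ 1 * (2 * (1 + t)) - t ^ 2 * (2 * 1)) / (2 * (1 + t)) ^ 2
          - 1 / (1 + t) = t ^ 2 / (2 * (1 + t) ^ 2) := by
        field_simp
        ring
      rw [key]
      positivity
  have h0 : ψ 0 ≤ ψ u := hmono ⟨le_refl 0, hu⟩ ⟨hu, le_refl u⟩ hu
  have hψ0 : ψ 0 = 0 := by simp [hψ]
  rw [hψ0] at h0
  simp only [hψ] at h0
  linarith

lemma log_le_I2 {u : ℝ} (h1 : -1 < u) (h2 : u ≤ 0) : Real.log (1 + u) ≤ u - u ^ 2 / 2 := by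
  set φ : ℝ → ℝ := fun t => t - t ^ 2 / 2 - Real.log (1 + t) with hφ
  have hanti : AntitoneOn φ (Icc u 0) := by
    have hderiv : ∀ t : ℝ, 0 < 1 + t → HasDerivAt φ
        (1 - 2 * t ^ 1 / 2 - 1 / (1 + t)) t := by
      intro t h1t
      have hlog : HasDerivAt (fun t : ℝ => Real.log (1 + t)) (1 / (1 + t)) t := by
        simpa using (((hasDerivAt_id t).const_add 1).log h1t.ne')
      exact ((hasDerivAt_id t).sub ((hasDerivAt_pow 2 t).div_const 2)).sub hlog
    apply antitoneOn_of_deriv_nonpos (convex_Icc u 0)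
    · intro t htmem
      have h1t : (0:ℝ) < 1 + t := by have := htmem.1; linarith
      exact (hderiv t h1t).continuousAt.continuousWithinAt
    · intro t htmem
      rw [interior_Icc] at htmem
      have h1t : (0:ℝ) < 1 + t := by have := htmem.1; linarith
      exact (hderiv t h1t).differentiableAt.differentiableWithinAt
    · intro t htmem
      rw [interior_Icc] at htmem
      have h1t : (0:ℝ) < 1 + t := by have := htmem.1; linarith
      rw [(hderiv t h1t).deriv]
      have hle : 1 - t ≤ 1 / (1 + t) := by
        rw [le_div_iff₀ h1t]
        nlinarith [sq_nonneg t]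
      have : 2 * t ^ 1 / 2 = t := by ring
      rw [this]
      linarith
  have h0 : φ 0 ≤ φ u := hanti ⟨le_refl u, h2⟩ ⟨h2, le_refl 0⟩ h2
  have hφ0 : φ 0 = 0 := by simp [hφ]
  rw [hφ0] at h0
  simp only [hφ] at h0
  linarith

lemma arith1 {s y : ℝ} (hs : 2 ≤ s) (hy : 0 ≤ y) :
    (s * s - 1) * (y / s - (y / s) ^ 2 / (2 * (1 + y / s))) - s * y ≤ -(y ^ 2 / (4 * (1 + y))) := by
  have hs0 : (0:ℝ) < s := by linarith
  have hd1 : (0:ℝ) < s + y := by linarith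
  have h1ys : 1 + y / s = (s + y) / s := by field_simp
  have e : (s * s - 1) * (y / s - (y / s) ^ 2 / (2 * (1 + y / s))) - s * y
      = -(y / s + (s * s - 1) * y ^ 2 / (2 * s * (s + y))) := by
    rw [h1ys]
    field_simp
    ring
  rw [e, neg_le_neg_iff]
  have eX : y / s + (s * s - 1) * y ^ 2 / (2 * s * (s + y))
      = (2 * y * (s + y) + (s * s - 1) * y ^ 2) / (2 * s * (s + y)) := by
    field_simp
  rw [eX, div_le_div_iff₀ (by positivity) (by positivity)]
  nlinarith [mul_nonneg (mul_nonneg hy hy) hy, mul_nonneg hy hs0.le,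
    mul_nonneg (mul_nonneg (mul_nonneg hy hy) hy) hs0.le,
    mul_nonneg (mul_nonneg (mul_nonneg hy hy) hy) (mul_nonneg hs0.le hs0.le),
    mul_nonneg (mul_nonneg hy hy) (mul_nonneg hs0.le hs0.le),
    mul_nonneg (mul_nonneg hy hy) hs0.le]

lemma arith2 {s y : ℝ} (hs : 2 ≤ s) (hy : y < 0) :
    (s * s - 1) * (y / s - (y / s) ^ 2 / 2) - s * y ≤ -y - y ^ 2 / 4 := by
  have hs0 : (0:ℝ) < s := by linarith
  have e : (s * s - 1) * (y / s - (y / s) ^ 2 / 2) - s * y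
      = -(y / s) - (s * s - 1) * y ^ 2 / (2 * (s * s)) := by
    field_simp
    ring
  rw [e]
  have h1 : -(y / s) ≤ -y := by
    rw [← neg_div]
    exact div_le_self (by linarith) (by linarith)
  have h2 : y ^ 2 / 4 ≤ (s * s - 1) * y ^ 2 / (2 * (s * s)) := by
    rw [div_le_div_iff₀ (by norm_num) (by positivity)]
    nlinarith [mul_nonneg (sq_nonneg y) (by nlinarith : (0:ℝ) ≤ 2 * (s * s) - 4)]
  linarith

lemma hh_le (θ : ℝ) (hθ : 4 ≤ θ) (y : ℝ) : hh θ y ≤ gbound y := by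
  have hθ0 : (0:ℝ) < θ := by linarith
  have hs2 : (2:ℝ) ≤ Real.sqrt θ := by
    rw [show (2:ℝ) = Real.sqrt 4 by
      rw [show (4:ℝ) = 2 ^ 2 by norm_num, Real.sqrt_sq (by norm_num : (0:ℝ) ≤ 2)]]
    exact Real.sqrt_le_sqrt hθ
  have hs0 : (0:ℝ) < Real.sqrt θ := by linarith
  have hss : Real.sqrt θ * Real.sqrt θ = θ := Real.mul_self_sqrt hθ0.le
  have hg1 : (0:ℝ) ≤ Real.exp (-(y ^ 2 / (4 * (1 + |y|)))) := (Real.exp_pos _).le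
  have hg2 : (0:ℝ) ≤ Real.exp (|y| - y ^ 2 / 4) := (Real.exp_pos _).le
  rw [hh]
  split_ifs with hcond
  · rcases eq_or_lt_of_le hcond with heq | hpos
    · rw [← heq, Real.zero_rpow (by linarith : θ - 1 ≠ 0), zero_mul]
      unfold gbound; linarith
    · have hrw : (1 + y / Real.sqrt θ) ^ (θ - 1) * Real.exp (-(Real.sqrt θ * y))
          = Real.exp ((θ - 1) * Real.log (1 + y / Real.sqrt θ) - Real.sqrt θ * y) := by
        rw [Real.rpow_def_of_pos hpos, ← Real.exp_add]
        ring_nf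
      rw [hrw]
      rcases le_or_gt 0 y with hy | hy
      · have hb := log_le_I1 (u := y / Real.sqrt θ) (by positivity)
        have hmul : (θ - 1) * Real.log (1 + y / Real.sqrt θ)
            ≤ (θ - 1) * (y / Real.sqrt θ - (y / Real.sqrt θ) ^ 2 / (2 * (1 + y / Real.sqrt θ))) :=
          mul_le_mul_of_nonneg_left hb (by linarith)
        have harith := arith1 (s := Real.sqrt θ) (y := y) hs2 hy
        rw [hss] at harith
        have : (θ - 1) * Real.log (1 + y / Real.sqrt θ) - Real.sqrt θ * y
            ≤ -(y ^ 2 / (4 * (1 + y))) := by linarith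
        calc Real.exp ((θ - 1) * Real.log (1 + y / Real.sqrt θ) - Real.sqrt θ * y)
            ≤ Real.exp (-(y ^ 2 / (4 * (1 + |y|)))) := by
              apply Real.exp_le_exp.mpr
              rw [abs_of_nonneg hy]
              exact this
          _ ≤ gbound y := le_add_of_nonneg_right hg2
      · have hu1 : -1 < y / Real.sqrt θ := by
          have : 0 < 1 + y / Real.sqrt θ := hpos
          linarith
        have hu2 : y / Real.sqrt θ ≤ 0 := (div_neg_of_neg_of_pos hy hs0).le
        have hb := log_le_I2 hu1 hu2
        have hmul : (θ - 1) * Real.log (1 + y / Real.sqrt θ)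
            ≤ (θ - 1) * (y / Real.sqrt θ - (y / Real.sqrt θ) ^ 2 / 2) :=
          mul_le_mul_of_nonneg_left hb (by linarith)
        have harith := arith2 (s := Real.sqrt θ) (y := y) hs2 hy
        rw [hss] at harith
        have : (θ - 1) * Real.log (1 + y / Real.sqrt θ) - Real.sqrt θ * y
            ≤ -y - y ^ 2 / 4 := by linarith
        calc Real.exp ((θ - 1) * Real.log (1 + y / Real.sqrt θ) - Real.sqrt θ * y)
            ≤ Real.exp (|y| - y ^ 2 / 4) := by
              apply Real.exp_le_exp.mpr
              rw [abs_of_neg hy]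
              linarith
          _ ≤ gbound y := le_add_of_nonneg_left hg1
  · unfold gbound; linarith

lemma gbound_pos (y : ℝ) : 0 < gbound y :=
  add_pos (Real.exp_pos _) (Real.exp_pos _)

lemma integrable_exp_neg_abs_eighth : Integrable (fun y : ℝ => Real.exp (-(|y| / 8))) := by
  set G : ℝ → ℝ := fun y => Real.exp (-(|y| / 8)) with hG
  have hGmeas : Measurable G := (continuous_abs.div_const 8).neg.rexp.measurable
  have hIoi : IntegrableOn G (Ioi 0) := by
    refine (exp_neg_integrableOn_Ioi 0 (by norm_num : (0:ℝ) < 1/8)).congr_fun ?_ measurableSet_Ioi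
    intro y hy
    rw [hG]
    simp only
    rw [abs_of_pos hy]
    ring_nf
  have hindIoi : Integrable ((Ioi (0:ℝ)).indicator G) :=
    (integrable_indicator_iff measurableSet_Ioi).mpr hIoi
  have hneg : Integrable (fun x : ℝ => ((Ioi (0:ℝ)).indicator G) (-1 * x)) :=
    (integrable_comp_mul_left_iff ((Ioi (0:ℝ)).indicator G)
      (by norm_num : (-1:ℝ) ≠ 0)).mpr hindIoi
  have heq : (fun x : ℝ => ((Ioi (0:ℝ)).indicator G) (-1 * x)) = (Iio (0:ℝ)).indicator G := by
    funext x
    simp only [neg_one_mul, indicator]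
    have hmem : -x ∈ Ioi (0:ℝ) ↔ x ∈ Iio (0:ℝ) := by simp
    by_cases hx : x ∈ Iio (0:ℝ)
    · rw [if_pos (hmem.mpr hx), if_pos hx, hG]
      simp [abs_neg]
    · rw [if_neg (fun h => hx (hmem.mp h)), if_neg hx]
  rw [heq] at hneg
  have hIio : IntegrableOn G (Iio 0) := (integrable_indicator_iff measurableSet_Iio).mp hneg
  rw [← integrableOn_univ, ← Set.Iio_union_Ici (a := (0:ℝ))]
  apply hIio.union
  rw [integrableOn_Ici_iff_integrableOn_Ioi]
  exact hIoi

lemma integrable_gbound : Integrable gbound := by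
  have h1 : Integrable (fun y : ℝ => Real.exp (-(y ^ 2 / (4 * (1 + |y|))))) := by
    have hbase : Integrable (fun y : ℝ => Real.exp (1/8) * Real.exp (-(|y| / 8))) :=
      integrable_exp_neg_abs_eighth.const_mul _
    apply hbase.mono'
    · have hc : Continuous fun y : ℝ => -(y ^ 2 / (4 * (1 + |y|))) :=
        ((continuous_pow 2).div (continuous_const.mul (continuous_const.add continuous_abs))
          fun y => (by positivity : (4:ℝ) * (1 + |y|) ≠ 0)).neg
      exact (Real.continuous_exp.comp hc).aestronglyMeasurable
    · refine Filter.Eventually.of_forall fun y => ?_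
      rw [Real.norm_eq_abs, abs_of_pos (Real.exp_pos _), ← Real.exp_add]
      apply Real.exp_le_exp.mpr
      rw [← sq_abs y]
      set a := |y| with ha
      have hpos : (0:ℝ) < 1 + a := by positivity
      have e : 1/8 + -(a / 8) + a ^ 2 / (4 * (1 + a)) = (1 + a ^ 2) / (8 * (1 + a)) := by
        field_simp
        ring
      have hnn : (0:ℝ) ≤ (1 + a ^ 2) / (8 * (1 + a)) := by positivity
      linarith
  have h2 : Integrable (fun y : ℝ => Real.exp (|y| - y ^ 2 / 4)) := by
    have hbase : Integrable (fun y : ℝ => Real.exp 2 * Real.exp (-(1/8 : ℝ) * y ^ 2)) :=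
      (integrable_exp_neg_mul_sq (by norm_num : (0:ℝ) < 1/8)).const_mul _
    apply hbase.mono'
    · exact (Real.continuous_exp.comp
        (continuous_abs.sub ((continuous_pow 2).div_const 4))).aestronglyMeasurable
    · refine Filter.Eventually.of_forall fun y => ?_
      rw [Real.norm_eq_abs, abs_of_pos (Real.exp_pos _), ← Real.exp_add]
      apply Real.exp_le_exp.mpr
      nlinarith [sq_abs y, sq_nonneg (|y| - 4)]
  exact h1.add h2

lemma key_id (θ : ℝ) (hθ : 0 < θ) (f : ℝ → ℝ) (hf : Continuous f) :
    ∫ x, f x ∂(Measure.map (fun x : ℝ => Real.sqrt θ * (x - 1)) (gammaMeasure θ θ)) =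
      θ ^ θ * Real.exp (-θ) / (Real.Gamma θ * Real.sqrt θ) * ∫ y, f y * hh θ y := by
  have hs : (0:ℝ) < Real.sqrt θ := Real.sqrt_pos.mpr hθ
  have hT : Measurable fun x : ℝ => Real.sqrt θ * (x - 1) :=
    (measurable_id.sub_const 1).const_mul _
  rw [integral_map hT.aemeasurable hf.aestronglyMeasurable]
  have hGm : gammaMeasure θ θ = volume.withDensity fun x => ENNReal.ofReal (gammaPDFReal θ θ x) :=
    rfl
  rw [hGm, integral_wd _ (measurable_gammaPDFReal θ θ) (gammaPDFReal_nonneg hθ hθ) _]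
  set F : ℝ → ℝ := fun x => gammaPDFReal θ θ x * f (Real.sqrt θ * (x - 1)) with hF
  have h1 : ∫ y, F ((Real.sqrt θ)⁻¹ * y + 1) = |((Real.sqrt θ)⁻¹)⁻¹| • ∫ x, F x := by
    have hcml := Measure.integral_comp_mul_left (fun z => F (z + 1)) (Real.sqrt θ)⁻¹
    rw [hcml, integral_add_right_eq_self F 1]
  have h2 : ∀ y, F ((Real.sqrt θ)⁻¹ * y + 1)
      = θ ^ θ * Real.exp (-θ) / Real.Gamma θ * (f y * hh θ y) := by
    intro y
    have e1 : (Real.sqrt θ)⁻¹ * y + 1 = 1 + y / Real.sqrt θ := by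
      rw [inv_mul_eq_div]; ring
    have e2 : Real.sqrt θ * ((Real.sqrt θ)⁻¹ * y + 1 - 1) = y := by
      field_simp
      ring
    rw [hF]
    simp only
    rw [e2, e1, pdf_eq θ hθ y]
    ring
  have h3 : ∫ y, F ((Real.sqrt θ)⁻¹ * y + 1)
      = θ ^ θ * Real.exp (-θ) / Real.Gamma θ * ∫ y, f y * hh θ y := by
    rw [show (fun y => F ((Real.sqrt θ)⁻¹ * y + 1))
        = fun y => θ ^ θ * Real.exp (-θ) / Real.Gamma θ * (f y * hh θ y) from funext h2]
    exact integral_const_mul _ _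
  rw [inv_inv, abs_of_pos hs] at h1
  rw [h3] at h1
  rw [smul_eq_mul] at h1
  have h4 : ∫ x, F x = (Real.sqrt θ)⁻¹ * (θ ^ θ * Real.exp (-θ) / Real.Gamma θ
      * ∫ y, f y * hh θ y) := by
    field_simp at h1 ⊢
    linarith [h1]
  show ∫ x, F x = _
  rw [h4]
  ring

lemma tendstoJ (t : ℕ → ℝ) (ht : ∀ n, 0 < t n) (httop : Tendsto t atTop atTop)
    (f : ℝ → ℝ) (hf : Continuous f) (C : ℝ) (hC : ∀ y, |f y| ≤ C) :
    Tendsto (fun n => ∫ y, f y * hh (t n) y) atTop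
      (𝓝 (∫ y, f y * Real.exp (-(y ^ 2 / 2)))) := by
  apply tendsto_integral_filter_of_dominated_convergence (fun y => C * gbound y)
  · exact Filter.Eventually.of_forall fun n =>
      (hf.measurable.mul (measurable_hh _)).aestronglyMeasurable
  · have hC0 : 0 ≤ C := le_trans (abs_nonneg _) (hC 0)
    filter_upwards [httop.eventually_ge_atTop 4] with n hn
    refine Filter.Eventually.of_forall fun y => ?_
    rw [Real.norm_eq_abs, abs_mul, abs_of_nonneg (hh_nonneg _ _)]
    exact mul_le_mul (hC y) (hh_le (t n) hn y) (hh_nonneg _ _) hC0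
  · exact integrable_gbound.const_mul C
  · exact Filter.Eventually.of_forall fun y => (hh_tendsto t ht httop y).const_mul (f y)

/-- If `G_θ ~ Gamma(θ,θ)`, then `√θ·(G_θ − 1)` converges in distribution to `N(0,1)`
as `θ → ∞`: the pushforward of `Gamma(θ_n,θ_n)` under `x ↦ √θ_n·(x − 1)` converges
weakly to the standard Gaussian. -/
theorem gamma_clt (t : ℕ → ℝ) (ht : ∀ n, 0 < t n) (httop : Tendsto t atTop atTop) :
    ∀ f : ℝ →ᵇ ℝ,
      Tendsto
        (fun n => ∫ x, f x
          ∂(Measure.map (fun x : ℝ => Real.sqrt (t n) * (x - 1))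
              (gammaMeasure (t n) (t n))))
        atTop (nhds (∫ x, f x ∂(gaussianReal 0 1))) := by
  intro f
  have hS : ∫ y : ℝ, Real.exp (-(y ^ 2 / 2)) = Real.sqrt (2 * π) := by
    rw [show (fun y : ℝ => Real.exp (-(y ^ 2 / 2))) = fun y : ℝ => Real.exp (-(1/2) * y ^ 2) by
      funext y; ring_nf]
    rw [integral_gaussian]
    congr 1
    ring
  have hSpos : 0 < Real.sqrt (2 * π) := Real.sqrt_pos.mpr (by positivity)
  have hK : Tendsto (fun n => ∫ y, hh (t n) y) atTop (𝓝 (Real.sqrt (2 * π))) := by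
    have h := tendstoJ t ht httop (fun _ => 1) continuous_const 1 (by simp)
    simp only [one_mul] at h
    rwa [hS] at h
  have hcK : ∀ n, (t n ^ t n * Real.exp (-(t n)) / (Real.Gamma (t n) * Real.sqrt (t n)))
      * (∫ y, hh (t n) y) = 1 := by
    intro n
    have hid := key_id (t n) (ht n) (fun _ => (1:ℝ)) continuous_const
    simp only [one_mul] at hid
    have hprob : IsProbabilityMeasure (Measure.map
        (fun x : ℝ => Real.sqrt (t n) * (x - 1)) (gammaMeasure (t n) (t n))) := by
      have := isProbabilityMeasure_gammaMeasure (ht n) (ht n)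
      exact Measure.isProbabilityMeasure_map ((measurable_id.sub_const 1).const_mul _).aemeasurable
    rw [integral_const] at hid
    simp only [measure_univ, probReal_univ, smul_eq_mul, mul_one] at hid
    exact hid.symm
  have hKne : ∀ n, (∫ y, hh (t n) y) ≠ 0 := by
    intro n h0
    have := hcK n
    rw [h0, mul_zero] at this
    exact zero_ne_one this
  have hceq : ∀ n, t n ^ t n * Real.exp (-(t n)) / (Real.Gamma (t n) * Real.sqrt (t n))
      = (∫ y, hh (t n) y)⁻¹ := fun n => eq_inv_of_mul_eq_one_left (hcK n)
  have hc : Tendsto (fun n => t n ^ t n * Real.exp (-(t n))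
      / (Real.Gamma (t n) * Real.sqrt (t n))) atTop (𝓝 (Real.sqrt (2 * π))⁻¹) := by
    simp only [hceq]
    exact hK.inv₀ hSpos.ne'
  have hJ := tendstoJ t ht httop f f.continuous ‖f‖ (fun y => by
    rw [← Real.norm_eq_abs]; exact f.norm_coe_le_norm y)
  have hlim := hc.mul hJ
  have hRHS : ∫ x, f x ∂(gaussianReal 0 1)
      = (Real.sqrt (2 * π))⁻¹ * ∫ y, f y * Real.exp (-(y ^ 2 / 2)) := by
    rw [gaussianReal_of_var_ne_zero 0 one_ne_zero, gaussianPDF_def,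
      integral_wd _ (measurable_gaussianPDFReal 0 1) (gaussianPDFReal_nonneg 0 1) f]
    have hgpdf : ∀ x : ℝ, gaussianPDFReal 0 1 x * f x
        = (Real.sqrt (2 * π))⁻¹ * (f x * Real.exp (-(x ^ 2 / 2))) := by
      intro x
      rw [gaussianPDFReal]
      simp only [NNReal.coe_one, mul_one, sub_zero, neg_div]
      ring
    rw [show (fun x => gaussianPDFReal 0 1 x * f x)
        = fun x => (Real.sqrt (2 * π))⁻¹ * (f x * Real.exp (-(x ^ 2 / 2))) from funext hgpdf]
    exact integral_const_mul _ _
  rw [hRHS]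
  exact hlim.congr fun n => (key_id (t n) (ht n) f f.continuous).symm
end

section
/- Let b > 0, γ > 0 and z > 0. Then, as τ → 0 from the right, (1 + τ·((z/(b·τ^γ) + 1)^{1/γ} − 1))⁻¹ tends to 1/(1 + (z/b)^{1/γ}). Consequently, if X has the standard Pareto distribution with survival function 1/(1 + x), the survival function of Z = b·τ^γ·((1 + X/τ)^γ − 1) at any z > 0 tends to the log-logistic survival function 1/(1 + (z/b)^{1/γ}) as τ → 0. -/
open MeasureTheory Filter Real

/-- As `τ → 0⁺`, `(1 + τ((z/(bτ^γ) + 1)^{1/γ} − 1))⁻¹ → 1/(1 + (z/b)^{1/γ})`.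
Consequently, if `X` has the standard Pareto survival function `1/(1 + x)`, the
survival function of `Z = bτ^γ((1 + X/τ)^γ − 1)` at any `z > 0` tends to the
log-logistic survival function `1/(1 + (z/b)^{1/γ})` as `τ → 0⁺`. -/
theorem powerBurr_tendsto_logLogistic (b γ z : ℝ) (hb : 0 < b) (hγ : 0 < γ)
    (hz : 0 < z) :
    Tendsto (fun τ : ℝ => (1 + τ * ((z / (b * τ ^ γ) + 1) ^ (1 / γ) - 1))⁻¹)
        (nhdsWithin 0 (Set.Ioi 0)) (nhds (1 / (1 + (z / b) ^ (1 / γ)))) ∧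
      ∀ (μ : Measure ℝ), IsProbabilityMeasure μ →
        (∀ x : ℝ, 0 ≤ x → (μ {y : ℝ | x < y}).toReal = 1 / (1 + x)) →
        Tendsto
          (fun τ : ℝ => (μ {y : ℝ | z < b * τ ^ γ * ((1 + y / τ) ^ γ - 1)}).toReal)
          (nhdsWithin 0 (Set.Ioi 0)) (nhds (1 / (1 + (z / b) ^ (1 / γ)))) := by
  have hzb : (0:ℝ) < z / b := div_pos hz hb
  -- rewrite of the inner expression for τ > 0
  have hrw : ∀ τ : ℝ, 0 < τ →
      1 + τ * ((z / (b * τ ^ γ) + 1) ^ (1 / γ) - 1)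
        = 1 - τ + (z / b + τ ^ γ) ^ (1 / γ) := by
    intro τ hτ
    have hτγ : (0:ℝ) < τ ^ γ := rpow_pos_of_pos hτ γ
    have h1 : z / (b * τ ^ γ) + 1 = (z / b + τ ^ γ) / τ ^ γ := by
      field_simp
    have h2 : ((z / b + τ ^ γ) / τ ^ γ) ^ (1 / γ)
        = (z / b + τ ^ γ) ^ (1 / γ) / τ := by
      rw [Real.div_rpow (by positivity) hτγ.le]
      congr 1
      rw [← Real.rpow_mul hτ.le, mul_one_div_cancel hγ.ne', Real.rpow_one]
    rw [h1, h2]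
    field_simp
    ring
  have hxnn : ∀ τ : ℝ, 0 < τ →
      0 ≤ τ * ((z / (b * τ ^ γ) + 1) ^ (1 / γ) - 1) := by
    intro τ hτ
    have hτγ : (0:ℝ) < τ ^ γ := rpow_pos_of_pos hτ γ
    have h1 : (1:ℝ) ≤ z / (b * τ ^ γ) + 1 := by
      have : 0 ≤ z / (b * τ ^ γ) := by positivity
      linarith
    have h2 : (1:ℝ) ≤ (z / (b * τ ^ γ) + 1) ^ (1 / γ) := by
      calc (1:ℝ) = (1:ℝ) ^ (1/γ) := (Real.one_rpow _).symm
        _ ≤ _ := Real.rpow_le_rpow zero_le_one h1 (by positivity)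
    nlinarith
  -- the first limit
  have key : Tendsto (fun τ : ℝ => (1 + τ * ((z / (b * τ ^ γ) + 1) ^ (1 / γ) - 1))⁻¹)
      (nhdsWithin 0 (Set.Ioi 0)) (nhds (1 / (1 + (z / b) ^ (1 / γ)))) := by
    have hpow : Tendsto (fun τ : ℝ => τ ^ γ) (nhdsWithin 0 (Set.Ioi 0)) (nhds 0) := by
      have h := (Real.continuousAt_rpow_const 0 γ (Or.inr hγ.le)).tendsto
      rw [Real.zero_rpow hγ.ne'] at h
      exact h.mono_left nhdsWithin_le_nhds
    have hid : Tendsto (fun τ : ℝ => τ) (nhdsWithin 0 (Set.Ioi 0)) (nhds 0) :=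
      tendsto_id.mono_left nhdsWithin_le_nhds
    have hin : Tendsto (fun τ : ℝ => z / b + τ ^ γ) (nhdsWithin 0 (Set.Ioi 0))
        (nhds (z / b)) := by
      simpa using (tendsto_const_nhds (x := z / b)
        (f := nhdsWithin (0:ℝ) (Set.Ioi 0))).add hpow
    have hout : Tendsto (fun τ : ℝ => (z / b + τ ^ γ) ^ (1 / γ))
        (nhdsWithin 0 (Set.Ioi 0)) (nhds ((z / b) ^ (1 / γ))) := by
      exact ((Real.continuousAt_rpow_const (z/b) (1/γ) (Or.inl hzb.ne')).tendsto).comp hin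
    have hden : Tendsto (fun τ : ℝ => 1 - τ + (z / b + τ ^ γ) ^ (1 / γ))
        (nhdsWithin 0 (Set.Ioi 0)) (nhds (1 + (z / b) ^ (1 / γ))) := by
      have := ((tendsto_const_nhds (x := (1:ℝ))).sub hid).add hout
      simpa using this
    have hne : (1 + (z / b) ^ (1 / γ)) ≠ 0 := by positivity
    have := hden.inv₀ hne
    rw [show (1:ℝ) / (1 + (z / b) ^ (1 / γ)) = (1 + (z / b) ^ (1 / γ))⁻¹ from one_div _]
    refine this.congr' ?_
    filter_upwards [self_mem_nhdsWithin] with τ hτ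
    rw [hrw τ hτ]
  refine ⟨key, ?_⟩
  intro μ hμ hsurv
  -- μ is supported on (0, ∞)
  have h0 : μ (Set.Iic (0:ℝ)) = 0 := by
    have h1 : (μ {y : ℝ | 0 < y}).toReal = 1 := by simpa using hsurv 0 le_rfl
    have h2 : μ (Set.Ioi (0:ℝ)) = 1 := by
      have hfin : μ (Set.Ioi (0:ℝ)) ≠ ⊤ := measure_ne_top μ _
      have : {y : ℝ | 0 < y} = Set.Ioi (0:ℝ) := rfl
      rw [this] at h1
      have := (ENNReal.toReal_eq_one_iff _).mp h1
      exact this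
    have := measure_compl (measurableSet_Ioi (a := (0:ℝ))) (measure_ne_top μ _)
    rw [h2, measure_univ] at this
    simpa [Set.compl_Ioi] using this
  refine key.congr' ?_
  filter_upwards [self_mem_nhdsWithin] with τ hτ
  have hτ : (0:ℝ) < τ := hτ
  have hτγ : (0:ℝ) < τ ^ γ := rpow_pos_of_pos hτ γ
  set x := τ * ((z / (b * τ ^ γ) + 1) ^ (1 / γ) - 1) with hx
  have hxn : 0 ≤ x := hxnn τ hτ
  have hsets : μ {y : ℝ | x < y} = μ {y : ℝ | z < b * τ ^ γ * ((1 + y / τ) ^ γ - 1)} := by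
    apply measure_congr
    rw [Filter.eventuallyEq_set]
    have hcompl : ∀ y : ℝ, 0 < y →
        (y ∈ {y : ℝ | x < y} ↔ y ∈ {y : ℝ | z < b * τ ^ γ * ((1 + y / τ) ^ γ - 1)}) := by
      intro y hy
      simp only [Set.mem_setOf_eq]
      have h1y : (0:ℝ) < 1 + y / τ := by positivity
      have hA : (0:ℝ) ≤ z / (b * τ ^ γ) + 1 := by positivity
      have hyτ : y / τ * τ = y := div_mul_cancel₀ y hτ.ne'
      constructor
      · intro h
        rw [hx] at h
        have h2 : (z / (b * τ ^ γ) + 1) ^ (1 / γ) < 1 + y / τ := by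
          nlinarith [h, hτ, hyτ]
        have h3 : z / (b * τ ^ γ) + 1 < (1 + y / τ) ^ γ := by
          rw [← Real.rpow_inv_lt_iff_of_pos hA h1y.le hγ, ← one_div]
          exact h2
        have h4 : z / (b * τ ^ γ) < (1 + y / τ) ^ γ - 1 := by linarith
        have h5 := (div_lt_iff₀ (show (0:ℝ) < b * τ ^ γ by positivity)).mp h4
        nlinarith [h5]
      · intro h
        have h4 : z / (b * τ ^ γ) < (1 + y / τ) ^ γ - 1 := by
          rw [div_lt_iff₀ (show (0:ℝ) < b * τ ^ γ by positivity)]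
          nlinarith
        have h3 : z / (b * τ ^ γ) + 1 < (1 + y / τ) ^ γ := by linarith
        have h2 : (z / (b * τ ^ γ) + 1) ^ (1 / γ) < 1 + y / τ := by
          rw [one_div, Real.rpow_inv_lt_iff_of_pos hA h1y.le hγ]
          exact h3
        rw [hx]
        nlinarith [h2, hτ, hyτ]
    have hae : ∀ᵐ y ∂μ, 0 < y := by
      rw [ae_iff]
      refine measure_mono_null ?_ h0
      intro y hy
      simp only [Set.mem_setOf_eq, not_lt] at hy
      exact hy
    filter_upwards [hae] with y hy
    exact hcompl y hy
  rw [← hsets, hsurv x hxn]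
  exact (one_div _).symm
end

section
/- Let b > 0 and γ > 0, let (α_n) be a sequence of positive reals with α_n → ∞, and let (τ_n) be a sequence of positive reals with τ_n → 0. Let E and Y_n be random variables on a probability space such that, for every n, E and Y_n are independent, E is Gamma(1, 1)-distributed (standard exponential) and Y_n is Gamma(α_n, α_n)-distributed, and set X_n = E/Y_n and Z_n = b·τ_n^γ·((1 + X_n/τ_n)^γ − 1). Then the laws of Z_n converge weakly to the pushforward of the Gamma(1, 1) distribution under x ↦ b·x^γ, i.e., to the Weibull distribution with survival function exp(−(z/b)^{1/γ}). -/
open MeasureTheory ProbabilityTheory Filter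
open scoped BoundedContinuousFunction

namespace PowerBurrAux

open Real ProbabilityTheory MeasureTheory

lemma mul_gammaPDFReal (a r : ℝ) (ha : 0 < a) (hr : 0 < r) (y : ℝ) :
    y * gammaPDFReal a r y = (a / r) * gammaPDFReal (a + 1) r y := by
  unfold gammaPDFReal
  rcases lt_or_ge y 0 with hy | hy
  · rw [if_neg (not_le.mpr hy), if_neg (not_le.mpr hy)]; ring
  rw [if_pos hy, if_pos hy]
  rcases eq_or_lt_of_le hy with h0 | h0
  · rw [← h0, Real.zero_rpow (show a + 1 - 1 ≠ 0 by simpa using ha.ne')]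
    ring
  have hΓ : Real.Gamma a ≠ 0 := (Real.Gamma_pos_of_pos ha).ne'
  rw [Real.Gamma_add_one ha.ne']
  have h1 : y ^ (a + 1 - 1) = y ^ (a - 1) * y := by
    rw [show a + 1 - 1 = (a - 1) + 1 by ring, Real.rpow_add_one h0.ne']
  have h2 : r ^ (a + 1) = r ^ a * r := Real.rpow_add_one hr.ne' a
  rw [h1, h2]
  field_simp

lemma integrable_gammaPDFReal {a r : ℝ} (ha : 0 < a) (hr : 0 < r) :
    Integrable (gammaPDFReal a r) := by
  refine ⟨(measurable_gammaPDFReal a r).aestronglyMeasurable, ?_⟩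
  rw [hasFiniteIntegral_iff_ofReal (ae_of_all _ (gammaPDFReal_nonneg ha hr))]
  have h : ∫⁻ x, ENNReal.ofReal (gammaPDFReal a r x) = 1 :=
    lintegral_gammaPDF_eq_one ha hr
  rw [h]
  exact ENNReal.one_lt_top

lemma integral_gammaPDFReal_eq_one {a r : ℝ} (ha : 0 < a) (hr : 0 < r) :
    ∫ y, gammaPDFReal a r y = 1 := by
  rw [integral_eq_lintegral_of_nonneg_ae (ae_of_all _ (gammaPDFReal_nonneg ha hr))
    (measurable_gammaPDFReal a r).aestronglyMeasurable]
  have h : ∫⁻ x, ENNReal.ofReal (gammaPDFReal a r x) = 1 :=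
    lintegral_gammaPDF_eq_one ha hr
  rw [h]; simp

lemma sq_pdf_eq (a : ℝ) (ha : 0 < a) (y : ℝ) :
    (y - 1) ^ 2 * gammaPDFReal a a y
      = (a + 1) / a * gammaPDFReal (a + 2) a y - 2 * gammaPDFReal (a + 1) a y
          + gammaPDFReal a a y := by
  have ha' : a ≠ 0 := ha.ne'
  have e1 : y * gammaPDFReal a a y = gammaPDFReal (a + 1) a y := by
    rw [mul_gammaPDFReal a a ha ha y, div_self ha', one_mul]
  have e2 : y * gammaPDFReal (a + 1) a y = (a + 1) / a * gammaPDFReal (a + 2) a y := by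
    have := mul_gammaPDFReal (a + 1) a (by linarith) ha y
    rwa [show a + 1 + 1 = a + 2 by ring] at this
  linear_combination (y - 2) * e1 + e2

lemma lintegral_sq (a : ℝ) (ha : 0 < a) :
    ∫⁻ y, ENNReal.ofReal ((y - 1) ^ 2) ∂(gammaMeasure a a) = ENNReal.ofReal (1 / a) := by
  have ha1 : (0:ℝ) < a + 1 := by linarith
  have ha2 : (0:ℝ) < a + 2 := by linarith
  have hm : Measurable (gammaPDF a a) := (measurable_gammaPDFReal a a).ennreal_ofReal
  rw [gammaMeasure, lintegral_withDensity_eq_lintegral_mul _ hm (by fun_prop)]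
  have hpt : ∀ y : ℝ, (gammaPDF a a * fun y => ENNReal.ofReal ((y - 1) ^ 2)) y
      = ENNReal.ofReal ((y - 1) ^ 2 * gammaPDFReal a a y) := by
    intro y
    simp only [Pi.mul_apply, gammaPDF]
    rw [← ENNReal.ofReal_mul (gammaPDFReal_nonneg ha ha y), mul_comm]
  rw [lintegral_congr hpt]
  have hcomb : Integrable (fun y => (a + 1) / a * gammaPDFReal (a + 2) a y
      - 2 * gammaPDFReal (a + 1) a y + gammaPDFReal a a y) volume :=
    (((integrable_gammaPDFReal ha2 ha).const_mul _).sub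
      ((integrable_gammaPDFReal ha1 ha).const_mul 2)).add (integrable_gammaPDFReal ha ha)
  have hint : Integrable (fun y => (y - 1) ^ 2 * gammaPDFReal a a y) volume :=
    (integrable_congr (ae_of_all _ fun y => sq_pdf_eq a ha y)).mpr hcomb
  rw [← ofReal_integral_eq_lintegral_ofReal hint
    (ae_of_all _ fun y => mul_nonneg (sq_nonneg _) (gammaPDFReal_nonneg ha ha y))]
  congr 1
  rw [integral_congr_ae (ae_of_all _ fun y => sq_pdf_eq a ha y)]
  have i2 : Integrable (fun y => (a + 1) / a * gammaPDFReal (a + 2) a y) volume :=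
    (integrable_gammaPDFReal ha2 ha).const_mul ((a + 1) / a)
  have i1 : Integrable (fun y => 2 * gammaPDFReal (a + 1) a y) volume :=
    (integrable_gammaPDFReal ha1 ha).const_mul 2
  have i21 : Integrable
      (fun y => (a + 1) / a * gammaPDFReal (a + 2) a y - 2 * gammaPDFReal (a + 1) a y)
      volume := i2.sub i1
  rw [integral_add i21 (integrable_gammaPDFReal ha ha),
    integral_sub i2 i1,
    integral_const_mul, integral_const_mul,
    integral_gammaPDFReal_eq_one ha2 ha, integral_gammaPDFReal_eq_one ha1 ha,
    integral_gammaPDFReal_eq_one ha ha]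
  field_simp
  ring

lemma gammaMeasure_Iic_zero (a r : ℝ) : gammaMeasure a r (Set.Iic 0) = 0 := by
  rw [gammaMeasure, withDensity_apply _ measurableSet_Iic,
    lintegral_Iic_eq_lintegral_Iio_add_Icc _ le_rfl,
    lintegral_gammaPDF_of_nonpos le_rfl, zero_add]
  have hv : volume (Set.Icc (0:ℝ) 0) = 0 := by simp
  rw [setLIntegral_measure_zero _ _ hv]

lemma tendstoInMeasure_gamma {Ω : Type*} [MeasurableSpace Ω] (P : Measure Ω)
    [IsProbabilityMeasure P]
    (a : ℕ → ℝ) (ha : ∀ n, 0 < a n) (hatop : Tendsto a atTop atTop)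
    (Y : ℕ → Ω → ℝ) (hYm : ∀ n, Measurable (Y n))
    (hY : ∀ n, Measure.map (Y n) P = gammaMeasure (a n) (a n))
    (ns : ℕ → ℕ) (hns : Tendsto ns atTop atTop) :
    TendstoInMeasure P (fun k => Y (ns k)) atTop (fun _ => 1) := by
  rw [tendstoInMeasure_iff_dist]
  intro ε hε
  have key : ∀ n, P {ω | ε ≤ dist (Y n ω) 1} ≤ ENNReal.ofReal (1 / (a n * ε ^ 2)) := by
    intro n
    have hms : MeasurableSet {y : ℝ | ε ≤ dist y 1} :=
      measurableSet_le measurable_const (by fun_prop)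
    have hset : {ω | ε ≤ dist (Y n ω) 1} = Y n ⁻¹' {y | ε ≤ dist y 1} := rfl
    rw [hset, ← Measure.map_apply (hYm n) hms, hY n]
    have hsub : {y : ℝ | ε ≤ dist y 1}
        ⊆ {y : ℝ | ENNReal.ofReal (ε ^ 2) ≤ ENNReal.ofReal ((y - 1) ^ 2)} := by
      intro y hy
      simp only [Set.mem_setOf_eq, Real.dist_eq] at *
      apply ENNReal.ofReal_le_ofReal
      calc ε ^ 2 ≤ |y - 1| ^ 2 := by gcongr
        _ = (y - 1) ^ 2 := sq_abs _
    calc gammaMeasure (a n) (a n) {y | ε ≤ dist y 1}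
        ≤ gammaMeasure (a n) (a n)
            {y | ENNReal.ofReal (ε ^ 2) ≤ ENNReal.ofReal ((y - 1) ^ 2)} :=
          measure_mono hsub
      _ ≤ (∫⁻ y, ENNReal.ofReal ((y - 1) ^ 2) ∂(gammaMeasure (a n) (a n)))
            / ENNReal.ofReal (ε ^ 2) :=
          meas_ge_le_lintegral_div (by fun_prop)
            (ENNReal.ofReal_pos.mpr (by positivity)).ne' ENNReal.ofReal_ne_top
      _ = ENNReal.ofReal (1 / (a n * ε ^ 2)) := by
          rw [lintegral_sq _ (ha n), ← ENNReal.ofReal_div_of_pos (by positivity)]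
          congr 1
          rw [div_div]
  have hb : Tendsto (fun k => ENNReal.ofReal (1 / (a (ns k) * ε ^ 2))) atTop (nhds 0) := by
    rw [← ENNReal.ofReal_zero]
    apply ENNReal.tendsto_ofReal
    have hmul : Tendsto (fun k => a (ns k) * ε ^ 2) atTop atTop :=
      (hatop.comp hns).atTop_mul_const (by positivity)
    exact tendsto_const_nhds.div_atTop hmul
  exact tendsto_of_tendsto_of_tendsto_of_le_of_le tendsto_const_nhds hb
    (fun k => zero_le) (fun k => key (ns k))

lemma ptwise (b γ : ℝ) (hγ : 0 < γ) (τ : ℕ → ℝ) (hτ : ∀ n, 0 < τ n)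
    (hτ0 : Tendsto τ atTop (nhds 0)) (e : ℝ) (he : 0 ≤ e)
    (y : ℕ → ℝ) (hy : ∀ n, 0 < y n) (hy1 : Tendsto y atTop (nhds 1)) :
    Tendsto (fun n => b * τ n ^ γ * ((1 + (e / y n) / τ n) ^ γ - 1)) atTop
      (nhds (b * e ^ γ)) := by
  have key : ∀ n, b * τ n ^ γ * ((1 + (e / y n) / τ n) ^ γ - 1)
      = b * ((τ n + e / y n) ^ γ - τ n ^ γ) := by
    intro n
    have hA : (0:ℝ) ≤ 1 + (e / y n) / τ n :=
      add_nonneg zero_le_one (div_nonneg (div_nonneg he (hy n).le) (hτ n).le)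
    have hy' : y n ≠ 0 := (hy n).ne'
    have hτ' : τ n ≠ 0 := (hτ n).ne'
    have hmul : τ n * (1 + (e / y n) / τ n) = τ n + e / y n := by
      field_simp
    rw [← hmul, Real.mul_rpow (hτ n).le hA]
    ring
  have hd : Tendsto (fun n => e / y n) atTop (nhds e) := by
    have := (tendsto_const_nhds (x := e) (f := atTop)).div hy1 one_ne_zero
    rw [div_one] at this
    exact this
  have h1 : Tendsto (fun n => (τ n + e / y n) ^ γ) atTop (nhds (e ^ γ)) := by
    have hsum : Tendsto (fun n => τ n + e / y n) atTop (nhds e) := by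
      simpa using hτ0.add hd
    exact ((Real.continuousAt_rpow_const e γ (Or.inr hγ.le)).tendsto).comp hsum
  have h2 : Tendsto (fun n => τ n ^ γ) atTop (nhds 0) := by
    have := ((Real.continuousAt_rpow_const 0 γ (Or.inr hγ.le)).tendsto).comp hτ0
    rw [Real.zero_rpow hγ.ne'] at this
    exact this
  simp_rw [key]
  have := (tendsto_const_nhds (x := b) (f := atTop)).mul (h1.sub h2)
  simpa using this

end PowerBurrAux

/-- Let `E ~ Gamma(1,1)` (standard exponential) and `Y_n ~ Gamma(α_n,α_n)` be
independent, with `α_n → ∞` and `τ_n → 0⁺`. Setting `X_n = E/Y_n` and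
`Z_n = b·τ_n^γ·((1 + X_n/τ_n)^γ − 1)`, the laws of `Z_n` converge weakly to the
pushforward of `Gamma(1,1)` under `x ↦ b·x^γ`, i.e. the Weibull distribution. -/
theorem powerBurr_tendsto_weibull {Ω : Type*} [MeasurableSpace Ω]
    (P : Measure Ω) [IsProbabilityMeasure P]
    (b γ : ℝ) (hb : 0 < b) (hγ : 0 < γ)
    (a τ : ℕ → ℝ) (ha : ∀ n, 0 < a n) (hτ : ∀ n, 0 < τ n)
    (hatop : Tendsto a atTop atTop) (hτ0 : Tendsto τ atTop (nhds 0))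
    (E : Ω → ℝ) (Y : ℕ → Ω → ℝ) (hEm : Measurable E) (hYm : ∀ n, Measurable (Y n))
    (hE : Measure.map E P = gammaMeasure 1 1)
    (hY : ∀ n, Measure.map (Y n) P = gammaMeasure (a n) (a n))
    (hindep : ∀ n, IndepFun E (Y n) P) :
    ∀ f : ℝ →ᵇ ℝ,
      Tendsto
        (fun n => ∫ x, f x
          ∂(Measure.map
              (fun ω => b * τ n ^ γ * ((1 + (E ω / Y n ω) / τ n) ^ γ - 1)) P))
        atTop
        (nhds (∫ x, f x ∂(Measure.map (fun x : ℝ => b * x ^ γ) (gammaMeasure 1 1)))) := by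
  intro f
  have hWm : ∀ n, Measurable fun ω => b * τ n ^ γ * ((1 + (E ω / Y n ω) / τ n) ^ γ - 1) := by
    intro n
    fun_prop
  have hE0 : ∀ᵐ ω ∂P, 0 ≤ E ω := by
    rw [ae_iff]
    have : {ω | ¬ 0 ≤ E ω} = E ⁻¹' Set.Iio 0 := by
      ext ω; simp [not_le]
    rw [this, ← Measure.map_apply hEm measurableSet_Iio, hE]
    exact measure_mono_null Set.Iio_subset_Iic_self (PowerBurrAux.gammaMeasure_Iic_zero 1 1)
  have hYpos : ∀ᵐ ω ∂P, ∀ n, 0 < Y n ω := by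
    rw [ae_all_iff]
    intro n
    rw [ae_iff]
    have : {ω | ¬ 0 < Y n ω} = Y n ⁻¹' Set.Iic 0 := by
      ext ω; simp [not_lt]
    rw [this, ← Measure.map_apply (hYm n) measurableSet_Iic, hY n]
    exact PowerBurrAux.gammaMeasure_Iic_zero _ _
  have hRHS : ∫ x, f x ∂(Measure.map (fun x : ℝ => b * x ^ γ) (gammaMeasure 1 1))
      = ∫ ω, f (b * (E ω) ^ γ) ∂P := by
    rw [← hE, Measure.map_map (by fun_prop) hEm,
      integral_map (by fun_prop) f.continuous.measurable.aestronglyMeasurable]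
    simp [Function.comp]
  rw [hRHS]
  have hmapint : ∀ n, ∫ ω, f (b * τ n ^ γ * ((1 + (E ω / Y n ω) / τ n) ^ γ - 1)) ∂P
      = ∫ x, f x ∂(Measure.map
          (fun ω => b * τ n ^ γ * ((1 + (E ω / Y n ω) / τ n) ^ γ - 1)) P) := fun n =>
    (integral_map (hWm n).aemeasurable f.continuous.measurable.aestronglyMeasurable).symm
  refine Filter.Tendsto.congr hmapint ?_
  apply Filter.tendsto_of_subseq_tendsto
  intro ns hns
  obtain ⟨ms, hms, hae⟩ :=
    (PowerBurrAux.tendstoInMeasure_gamma P a ha hatop Y hYm hY ns hns).exists_seq_tendsto_ae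
  refine ⟨ms, ?_⟩
  apply tendsto_integral_of_dominated_convergence (fun _ => ‖f‖)
  · intro k
    exact (f.continuous.measurable.comp (hWm (ns (ms k)))).aestronglyMeasurable
  · exact integrable_const _
  · intro k
    exact ae_of_all _ fun ω => f.norm_coe_le_norm _
  · filter_upwards [hE0, hYpos, hae] with ω h1 h2 h3
    exact (f.continuous.tendsto _).comp
      (PowerBurrAux.ptwise b γ hγ (fun k => τ (ns (ms k))) (fun k => hτ _)
        (hτ0.comp (hns.comp hms.tendsto_atTop)) (E ω) h1
        (fun k => Y (ns (ms k)) ω) (fun k => h2 _) h3)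
end
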